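/- No root of the polynomial f(t) = 2t¹⁸ + 2t¹⁶ + t¹⁵ + 2t¹⁴ + t¹³ + 2t¹² + t¹¹ + 3t¹⁰ + 3t⁸ + t⁷ + 2t⁶ + t⁵ + 2t⁴ + t³ + 2t² + 2 in ℂ is a root of unity. -/

import Mathlib

open Polynomial

noncomputable def fPolC : Polynomial ℂ :=
  2 * X ^ 18 + 2 * X ^ 16 + X ^ 15 + 2 * X ^ 14 + X ^ 13 + 2 * X ^ 12 + X ^ 11 +
    3 * X ^ 10 + 3 * X ^ 8 + X ^ 7 + 2 * X ^ 6 + X ^ 5 + 2 * X ^ 4 + X ^ 3 + 2 * X ^ 2 + 2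

lemma cert1 (z : ℂ)
    (hf : 2*z^18 + 2*z^16 + z^15 + 2*z^14 + z^13 + 2*z^12 + z^11 + 3*z^10 + 3*z^8 + z^7 + 2*z^6 + z^5 + 2*z^4 + z^3 + 2*z^2 + 2 = 0)
    (h1 : z ^ 1 = 1) : False := by
  have h : (1 : ℂ) = 0 := by
    linear_combination (((1 : ℂ)/28)) * hf + (((-13 : ℂ)/14) + ((-13 : ℂ)/14) * z + ((-6 : ℂ)/7) * z ^ 2 + ((-23 : ℂ)/28) * z ^ 3 + ((-3 : ℂ)/4) * z ^ 4 + ((-5 : ℂ)/7) * z ^ 5 + ((-9 : ℂ)/14) * z ^ 6 + ((-17 : ℂ)/28) * z ^ 7 + ((-1 : ℂ)/2) * z ^ 8 + ((-1 : ℂ)/2) * z ^ 9 + ((-11 : ℂ)/28) * z ^ 10 + ((-5 : ℂ)/14) * z ^ 11 + ((-2 : ℂ)/7) * z ^ 12 + ((-1 : ℂ)/4) * z ^ 13 + ((-5 : ℂ)/28) * z ^ 14 + ((-1 : ℂ)/7) * z ^ 15 + ((-1 : ℂ)/14) * z ^ 16 + ((-1 : ℂ)/14) * z ^ 17) * h1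
  exact one_ne_zero h
lemma cert2 (z : ℂ)
    (hf : 2*z^18 + 2*z^16 + z^15 + 2*z^14 + z^13 + 2*z^12 + z^11 + 3*z^10 + 3*z^8 + z^7 + 2*z^6 + z^5 + 2*z^4 + z^3 + 2*z^2 + 2 = 0)
    (h1 : z ^ 2 = 1) : False := by
  have h : (1 : ℂ) = 0 := by
    linear_combination (((11 : ℂ)/224) + ((-3 : ℂ)/224) * z) * hf + (((-101 : ℂ)/112) + ((-3 : ℂ)/112) * z + ((-45 : ℂ)/56) * z ^ 2 + ((-1 : ℂ)/224) * z ^ 3 + ((-23 : ℂ)/32) * z ^ 4 + ((1 : ℂ)/56) * z ^ 5 + ((-71 : ℂ)/112) * z ^ 6 + ((9 : ℂ)/224) * z ^ 7 + ((-1 : ℂ)/2) * z ^ 8 + ((-79 : ℂ)/224) * z ^ 10 + ((1 : ℂ)/112) * z ^ 11 + ((-15 : ℂ)/56) * z ^ 12 + ((1 : ℂ)/32) * z ^ 13 + ((-41 : ℂ)/224) * z ^ 14 + ((3 : ℂ)/56) * z ^ 15 + ((-11 : ℂ)/112) * z ^ 16 + ((3 : ℂ)/112) * z ^ 17) * h1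
  exact one_ne_zero h
lemma cert3 (z : ℂ)
    (hf : 2*z^18 + 2*z^16 + z^15 + 2*z^14 + z^13 + 2*z^12 + z^11 + 3*z^10 + 3*z^8 + z^7 + 2*z^6 + z^5 + 2*z^4 + z^3 + 2*z^2 + 2 = 0)
    (h1 : z ^ 3 = 1) : False := by
  have h : (1 : ℂ) = 0 := by
    linear_combination (((19 : ℂ)/28) + ((-9 : ℂ)/28) * z + ((-9 : ℂ)/28) * z ^ 2) * hf + (((5 : ℂ)/14) + ((-9 : ℂ)/14) * z + ((5 : ℂ)/7) * z ^ 2 + ((11 : ℂ)/28) * z ^ 3 + ((-1 : ℂ)/4) * z ^ 4 + ((3 : ℂ)/7) * z ^ 5 + ((11 : ℂ)/14) * z ^ 6 + ((-15 : ℂ)/28) * z ^ 7 + ((3 : ℂ)/2) * z ^ 8 + ((-1 : ℂ)/2) * z ^ 9 + ((15 : ℂ)/28) * z ^ 10 + ((17 : ℂ)/14) * z ^ 11 + ((-3 : ℂ)/7) * z ^ 12 + ((1 : ℂ)/4) * z ^ 13 + ((45 : ℂ)/28) * z ^ 14 + ((-5 : ℂ)/7) * z ^ 15 + ((9 : ℂ)/14)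 * z ^ 16 + ((9 : ℂ)/14) * z ^ 17) * h1
  exact one_ne_zero h
lemma cert4 (z : ℂ)
    (hf : 2*z^18 + 2*z^16 + z^15 + 2*z^14 + z^13 + 2*z^12 + z^11 + 3*z^10 + 3*z^8 + z^7 + 2*z^6 + z^5 + 2*z^4 + z^3 + 2*z^2 + 2 = 0)
    (h1 : z ^ 4 = 1) : False := by
  have h : (1 : ℂ) = 0 := by
    linear_combination (((11 : ℂ)/448) + ((109 : ℂ)/448) * z + ((11 : ℂ)/448) * z ^ 2 + ((-115 : ℂ)/448) * z ^ 3) * hf + (((-213 : ℂ)/224) + ((109 : ℂ)/224) * z + ((11 : ℂ)/112) * z ^ 2 + ((-1 : ℂ)/448) * z ^ 3 + ((-39 : ℂ)/64) * z ^ 4 + ((57 : ℂ)/112) * z ^ 5 + ((41 : ℂ)/224) * z ^ 6 + ((9 : ℂ)/448) * z ^ 7 + ((-1 : ℂ)/2) * z ^ 8 + ((3 : ℂ)/4) * z ^ 9 + ((33 : ℂ)/448) * z ^ 10 + ((1 : ℂ)/224) * z ^ 11 + ((-15 : ℂ)/112) * z ^ 12 + ((33 : ℂ)/64) * z ^ 13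 + ((71 : ℂ)/448) * z ^ 14 + ((3 : ℂ)/112) * z ^ 15 + ((-11 : ℂ)/224) * z ^ 16 + ((115 : ℂ)/224) * z ^ 17) * h1
  exact one_ne_zero h
lemma cert5 (z : ℂ)
    (hf : 2*z^18 + 2*z^16 + z^15 + 2*z^14 + z^13 + 2*z^12 + z^11 + 3*z^10 + 3*z^8 + z^7 + 2*z^6 + z^5 + 2*z^4 + z^3 + 2*z^2 + 2 = 0)
    (h1 : z ^ 5 = 1) : False := by
  have h : (1 : ℂ) = 0 := by
    linear_combination (((17 : ℂ)/28) + ((45 : ℂ)/28) * z + ((17 : ℂ)/28) * z ^ 2 + ((-39 : ℂ)/28) * z ^ 3 + ((-39 : ℂ)/28) * z ^ 4) * hf + (((3 : ℂ)/14) + ((45 : ℂ)/14) * z + ((17 : ℂ)/7) * z ^ 2 + ((29 : ℂ)/28) * z ^ 3 + ((5 : ℂ)/4) * z ^ 4 + ((13 : ℂ)/7) * z ^ 5 + ((43 : ℂ)/14) * z ^ 6 + ((75 : ℂ)/28) * z ^ 7 + ((3 : ℂ)/2) * z ^ 8 + ((5 : ℂ)/2) * z ^ 9 + ((37 : ℂ)/28)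 * z ^ 10 + ((41 : ℂ)/14) * z ^ 11 + ((22 : ℂ)/7) * z ^ 12 + ((7 : ℂ)/4) * z ^ 13 + ((27 : ℂ)/28) * z ^ 14 + ((11 : ℂ)/7) * z ^ 15 + ((39 : ℂ)/14) * z ^ 16 + ((39 : ℂ)/14) * z ^ 17) * h1
  exact one_ne_zero h
lemma cert6 (z : ℂ)
    (hf : 2*z^18 + 2*z^16 + z^15 + 2*z^14 + z^13 + 2*z^12 + z^11 + 3*z^10 + 3*z^8 + z^7 + 2*z^6 + z^5 + 2*z^4 + z^3 + 2*z^2 + 2 = 0)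
    (h1 : z ^ 6 = 1) : False := by
  have h : (1 : ℂ) = 0 := by
    linear_combination (((153 : ℂ)/224) + ((-1 : ℂ)/224) * z + ((-71 : ℂ)/224) * z ^ 2 + ((-1 : ℂ)/224) * z ^ 3 + ((-71 : ℂ)/224) * z ^ 4 + ((-1 : ℂ)/224) * z ^ 5) * hf + (((41 : ℂ)/112) + ((-1 : ℂ)/112) * z + ((41 : ℂ)/56) * z ^ 2 + ((149 : ℂ)/224) * z ^ 3 + ((3 : ℂ)/32) * z ^ 4 + ((19 : ℂ)/56) * z ^ 5 + ((51 : ℂ)/112) * z ^ 6 + ((3 : ℂ)/224) * z ^ 7 + ((3 : ℂ)/2) * z ^ 8 + ((123 : ℂ)/224) * z ^ 10 + ((75 : ℂ)/112) * z ^ 11 + ((-5 : ℂ)/56) * z ^ 12 + ((11 : ℂ)/32) * z ^ 13 + ((285 : ℂ)/224) * z ^ 14 + ((1 : ℂ)/56) * z ^ 15 + ((71 : ℂ)/112) * z ^ 16 + ((1 : ℂ)/112) * z ^ 17) * h1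
  exact one_ne_zero h
lemma cert7 (z : ℂ)
    (hf : 2*z^18 + 2*z^16 + z^15 + 2*z^14 + z^13 + 2*z^12 + z^11 + 3*z^10 + 3*z^8 + z^7 + 2*z^6 + z^5 + 2*z^4 + z^3 + 2*z^2 + 2 = 0)
    (h1 : z ^ 7 = 1) : False := by
  have h : (1 : ℂ) = 0 := by
    linear_combination (((29 : ℂ)/196) + ((-55 : ℂ)/196) * z + ((-55 : ℂ)/196) * z ^ 2 + ((29 : ℂ)/196) * z ^ 3 + ((1 : ℂ)/196) * z ^ 4 + ((57 : ℂ)/196) * z ^ 5 + ((1 : ℂ)/196) * z ^ 6) * hf + (((-69 : ℂ)/98) + ((-55 : ℂ)/98) * z + ((-13 : ℂ)/49) * z ^ 2 + ((-23 : ℂ)/196) * z ^ 3 + ((-15 : ℂ)/28) * z ^ 4 + ((9 : ℂ)/49) * z ^ 5 + ((-37 : ℂ)/98) * z ^ 6 + ((-101 : ℂ)/196) * z ^ 7 + ((-1 : ℂ)/2) * z ^ 8 + ((-1 : ℂ)/2) * z ^ 9 + ((-11 : ℂ)/196) * z ^ 10 + ((-19 : ℂ)/98) * z ^ 11 + ((-16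 : ℂ)/49) * z ^ 12 + ((1 : ℂ)/4) * z ^ 13 + ((-173 : ℂ)/196) * z ^ 14 + ((-1 : ℂ)/49) * z ^ 15 + ((-57 : ℂ)/98) * z ^ 16 + ((-1 : ℂ)/98) * z ^ 17) * h1
  exact one_ne_zero h
lemma cert8 (z : ℂ)
    (hf : 2*z^18 + 2*z^16 + z^15 + 2*z^14 + z^13 + 2*z^12 + z^11 + 3*z^10 + 3*z^8 + z^7 + 2*z^6 + z^5 + 2*z^4 + z^3 + 2*z^2 + 2 = 0)
    (h1 : z ^ 8 = 1) : False := by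
  have h : (1 : ℂ) = 0 := by
    linear_combination (((107 : ℂ)/896) + ((109 : ℂ)/896) * z + ((-85 : ℂ)/896) * z ^ 2 + ((-179 : ℂ)/896) * z ^ 3 + ((-85 : ℂ)/896) * z ^ 4 + ((109 : ℂ)/896) * z ^ 5 + ((107 : ℂ)/896) * z ^ 6 + ((-51 : ℂ)/896) * z ^ 7) * hf + (((-341 : ℂ)/448) + ((109 : ℂ)/448) * z + ((11 : ℂ)/224) * z ^ 2 + ((-33 : ℂ)/896) * z ^ 3 + ((-17 : ℂ)/896) * z ^ 4 + ((25 : ℂ)/224) * z ^ 5 + ((9 : ℂ)/448) * z ^ 6 + ((-87 : ℂ)/896) * z ^ 7 + ((-1 : ℂ)/2) * z ^ 8 + ((15 : ℂ)/56) * z ^ 9 + ((33 : ℂ)/896) * z ^ 10 + ((1 : ℂ)/448) * z ^ 11 + ((17 : ℂ)/224) * z ^ 12 + ((135 : ℂ)/896) * z ^ 13 + ((1 : ℂ)/128) * z ^ 14 + ((-29 : ℂ)/224) * z ^ 15 + ((-107 : ℂ)/448) * z ^ 16 + ((51 : ℂ)/448) * z ^ 17) * h1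
  exact one_ne_zero h
lemma cert9 (z : ℂ)
    (hf : 2*z^18 + 2*z^16 + z^15 + 2*z^14 + z^13 + 2*z^12 + z^11 + 3*z^10 + 3*z^8 + z^7 + 2*z^6 + z^5 + 2*z^4 + z^3 + 2*z^2 + 2 = 0)
    (h1 : z ^ 9 = 1) : False := by
  have h : (1 : ℂ) = 0 := by
    linear_combination (((25 : ℂ)/28) + ((-3 : ℂ)/28) * z + ((-3 : ℂ)/28) * z ^ 2 + ((-3 : ℂ)/28) * z ^ 3 + ((-3 : ℂ)/28) * z ^ 4 + ((-3 : ℂ)/28) * z ^ 5 + ((-3 : ℂ)/28) * z ^ 6 + ((-3 : ℂ)/28) * z ^ 7 + ((-3 : ℂ)/28) * z ^ 8) * hf + (((11 : ℂ)/14) + ((-3 : ℂ)/14) * z + ((11 : ℂ)/7) * z ^ 2 + ((13 : ℂ)/28) * z ^ 3 + ((5 : ℂ)/4) * z ^ 4 + ((1 : ℂ)/7) * z ^ 5 + ((13 : ℂ)/14) * z ^ 6 + ((-5 : ℂ)/28) * z ^ 7 + ((3 : ℂ)/2) * z ^ 8 + ((-1 : ℂ)/2) * z ^ 9 + ((33 :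 ℂ)/28) * z ^ 10 + ((15 : ℂ)/14) * z ^ 11 + ((6 : ℂ)/7) * z ^ 12 + ((3 : ℂ)/4) * z ^ 13 + ((15 : ℂ)/28) * z ^ 14 + ((3 : ℂ)/7) * z ^ 15 + ((3 : ℂ)/14) * z ^ 16 + ((3 : ℂ)/14) * z ^ 17) * h1
  exact one_ne_zero h
lemma cert10 (z : ℂ)
    (hf : 2*z^18 + 2*z^16 + z^15 + 2*z^14 + z^13 + 2*z^12 + z^11 + 3*z^10 + 3*z^8 + z^7 + 2*z^6 + z^5 + 2*z^4 + z^3 + 2*z^2 + 2 = 0)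
    (h1 : z ^ 10 = 1) : False := by
  have h : (1 : ℂ) = 0 := by
    linear_combination (((47 : ℂ)/224) + ((89 : ℂ)/224) * z + ((47 : ℂ)/224) * z ^ 2 + ((-135 : ℂ)/224) * z ^ 3 + ((-177 : ℂ)/224) * z ^ 4 + ((89 : ℂ)/224) * z ^ 5 + ((271 : ℂ)/224) * z ^ 6 + ((89 : ℂ)/224) * z ^ 7 + ((-177 : ℂ)/224) * z ^ 8 + ((-135 : ℂ)/224) * z ^ 9) * hf + (((-65 : ℂ)/112) + ((89 : ℂ)/112) * z + ((47 : ℂ)/56) * z ^ 2 + ((-45 : ℂ)/224) * z ^ 3 + ((-11 : ℂ)/32) * z ^ 4 + ((45 : ℂ)/56) * z ^ 5 + ((165 : ℂ)/112) * z ^ 6 + ((181 : ℂ)/224) * z ^ 7 + ((1 : ℂ)/2) * z ^ 8 + (1 : ℂ) * z ^ 9 + ((29 : ℂ)/224) * z ^ 10 + ((45 : ℂ)/112) * z ^ 11 + ((53 : ℂ)/56) * z ^ 12 + ((13 : ℂ)/32) * z ^ 13 + ((-53 : ℂ)/224) * z ^ 14 + ((23 : ℂ)/56) * z ^ 15 +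 ((177 : ℂ)/112) * z ^ 16 + ((135 : ℂ)/112) * z ^ 17) * h1
  exact one_ne_zero h
lemma cert11 (z : ℂ)
    (hf : 2*z^18 + 2*z^16 + z^15 + 2*z^14 + z^13 + 2*z^12 + z^11 + 3*z^10 + 3*z^8 + z^7 + 2*z^6 + z^5 + 2*z^4 + z^3 + 2*z^2 + 2 = 0)
    (h1 : z ^ 11 = 1) : False := by
  have h : (1 : ℂ) = 0 := by
    linear_combination (((115 : ℂ)/2492) + ((31 : ℂ)/2492) * z + ((-1061 : ℂ)/2492) * z ^ 2 + ((31 : ℂ)/2492) * z ^ 3 + ((115 : ℂ)/2492) * z ^ 4 + ((479 : ℂ)/2492) * z ^ 5 + ((59 : ℂ)/2492) * z ^ 6 + ((-109 : ℂ)/2492) * z ^ 7 + ((-109 : ℂ)/2492) * z ^ 8 + ((59 : ℂ)/2492) * z ^ 9 + ((479 : ℂ)/2492) * z ^ 10) * hf + (((-1131 : ℂ)/1246) + ((31 : ℂ)/1246) * z + ((-473 : ℂ)/623) * z ^ 2 + ((239 : ℂ)/2492) * z ^ 3 + ((-233 : ℂ)/356) * z ^ 4 + ((34 : ℂ)/623)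 * z ^ 5 + ((-741 : ℂ)/1246) * z ^ 6 + ((33 : ℂ)/2492) * z ^ 7 + ((-79 : ℂ)/178) * z ^ 8 + ((9 : ℂ)/178) * z ^ 9 + ((-1349 : ℂ)/2492) * z ^ 10 + ((-519 : ℂ)/1246) * z ^ 11 + ((-307 : ℂ)/623) * z ^ 12 + ((-131 : ℂ)/356) * z ^ 13 + ((-379 : ℂ)/2492) * z ^ 14 + ((-185 : ℂ)/623) * z ^ 15 + ((-59 : ℂ)/1246) * z ^ 16 + ((-479 : ℂ)/1246) * z ^ 17) * h1
  exact one_ne_zero h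
lemma cert12 (z : ℂ)
    (hf : 2*z^18 + 2*z^16 + z^15 + 2*z^14 + z^13 + 2*z^12 + z^11 + 3*z^10 + 3*z^8 + z^7 + 2*z^6 + z^5 + 2*z^4 + z^3 + 2*z^2 + 2 = 0)
    (h1 : z ^ 12 = 1) : False := by
  have h : (1 : ℂ) = 0 := by
    linear_combination (((153 : ℂ)/448) + ((-113 : ℂ)/448) * z + ((153 : ℂ)/448) * z ^ 2 + ((-337 : ℂ)/448) * z ^ 3 + ((153 : ℂ)/448) * z ^ 4 + ((-113 : ℂ)/448) * z ^ 5 + ((153 : ℂ)/448) * z ^ 6 + ((111 : ℂ)/448) * z ^ 7 + ((-295 : ℂ)/448) * z ^ 8 + ((335 : ℂ)/448) * z ^ 9 + ((-295 : ℂ)/448) * z ^ 10 + ((111 : ℂ)/448) * z ^ 11) * hf + (((-71 : ℂ)/224) + ((-113 : ℂ)/224) * z + ((153 : ℂ)/112) * z ^ 2 + ((-747 : ℂ)/448) * z ^ 3 + ((115 : ℂ)/64) * z ^ 4 + ((-205 : ℂ)/112) * z ^ 5 + ((387 : ℂ)/224) * z ^ 6 + ((-445 : ℂ)/448) * z ^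 7 + ((1 : ℂ)/2) * z ^ 8 + ((1 : ℂ)/4) * z ^ 9 + ((11 : ℂ)/448) * z ^ 10 + ((-149 : ℂ)/224) * z ^ 11 + ((107 : ℂ)/112) * z ^ 12 + ((-117 : ℂ)/64) * z ^ 13 + ((1069 : ℂ)/448) * z ^ 14 + ((-223 : ℂ)/112) * z ^ 15 + ((295 : ℂ)/224) * z ^ 16 + ((-111 : ℂ)/224) * z ^ 17) * h1
  exact one_ne_zero h
lemma cert13 (z : ℂ)
    (hf : 2*z^18 + 2*z^16 + z^15 + 2*z^14 + z^13 + 2*z^12 + z^11 + 3*z^10 + 3*z^8 + z^7 + 2*z^6 + z^5 + 2*z^4 + z^3 + 2*z^2 + 2 = 0)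
    (h1 : z ^ 13 = 1) : False := by
  have h : (1 : ℂ) = 0 := by
    linear_combination (((-15 : ℂ)/28) + ((-15 : ℂ)/28) * z + ((-43 : ℂ)/28) * z ^ 2 + ((13 : ℂ)/28) * z ^ 3 + ((69 : ℂ)/28) * z ^ 4 + ((13 : ℂ)/28) * z ^ 5 + ((-43 : ℂ)/28) * z ^ 6 + ((-15 : ℂ)/28) * z ^ 7 + ((-15 : ℂ)/28) * z ^ 8 + ((-15 : ℂ)/28) * z ^ 9 + ((41 : ℂ)/28) * z ^ 10 + ((41 : ℂ)/28) * z ^ 11 + ((-15 : ℂ)/28) * z ^ 12) * hf + (((-29 : ℂ)/14) + ((-15 : ℂ)/14) * z + ((-29 : ℂ)/7) * z ^ 2 + ((-19 : ℂ)/28) * z ^ 3 + ((1 : ℂ)/4) * z ^ 4 + ((-9 : ℂ)/7) * z ^ 5 + ((-33 : ℂ)/14) * z ^ 6 + ((3 : ℂ)/28) * z ^ 7 + ((-7 : ℂ)/2) * z ^ 8 + ((-5 : ℂ)/2) * z ^ 9 + ((-59 : ℂ)/28) * z ^ 10 + ((19 : ℂ)/14) * z ^ 11 + ((-12 : ℂ)/7)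 * z ^ 12 + ((-9 : ℂ)/4) * z ^ 13 + ((-37 : ℂ)/28) * z ^ 14 + ((-13 : ℂ)/7) * z ^ 15 + ((-41 : ℂ)/14) * z ^ 16 + ((15 : ℂ)/14) * z ^ 17) * h1
  exact one_ne_zero h
lemma cert14 (z : ℂ)
    (hf : 2*z^18 + 2*z^16 + z^15 + 2*z^14 + z^13 + 2*z^12 + z^11 + 3*z^10 + 3*z^8 + z^7 + 2*z^6 + z^5 + 2*z^4 + z^3 + 2*z^2 + 2 = 0)
    (h1 : z ^ 14 = 1) : False := by
  have h : (1 : ℂ) = 0 := by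
    linear_combination (((4399 : ℂ)/20384) + ((-263 : ℂ)/20384) * z + ((-5457 : ℂ)/20384) * z ^ 2 + ((-1383 : ℂ)/20384) * z ^ 3 + ((591 : ℂ)/20384) * z ^ 4 + ((3993 : ℂ)/20384) * z ^ 5 + ((591 : ℂ)/20384) * z ^ 6 + ((-1383 : ℂ)/20384) * z ^ 7 + ((-5457 : ℂ)/20384) * z ^ 8 + ((-263 : ℂ)/20384) * z ^ 9 + ((4399 : ℂ)/20384) * z ^ 10 + ((-487 : ℂ)/20384) * z ^ 11 + ((1935 : ℂ)/20384) * z ^ 12 + ((-487 : ℂ)/20384) * z ^ 13) * hf + (((-5793 : ℂ)/10192) + ((-263 : ℂ)/10192) * z + ((-529 : ℂ)/5096) * z ^ 2 + ((1107 : ℂ)/20384) * z ^ 3 + ((-171 : ℂ)/2912) * z ^ 4 + ((909 : ℂ)/5096) * z ^ 5 + ((-699 : ℂ)/10192) * z ^ 6 + ((1461 : ℂ)/20384) * z ^ 7 + ((-5 : ℂ)/26) * z ^ 8 + ((-2 : ℂ)/13) * z ^ 9 + ((-1699 : ℂ)/20384) * z ^ 10 + ((-547 : ℂ)/10192) * z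 ^ 11 + ((-15 : ℂ)/392) * z ^ 12 + ((11 : ℂ)/416) * z ^ 13 + ((-937 : ℂ)/1568) * z ^ 14 + ((487 : ℂ)/5096) * z ^ 15 + ((-1935 : ℂ)/10192) * z ^ 16 + ((487 : ℂ)/10192) * z ^ 17) * h1
  exact one_ne_zero h
lemma cert15 (z : ℂ)
    (hf : 2*z^18 + 2*z^16 + z^15 + 2*z^14 + z^13 + 2*z^12 + z^11 + 3*z^10 + 3*z^8 + z^7 + 2*z^6 + z^5 + 2*z^4 + z^3 + 2*z^2 + 2 = 0)
    (h1 : z ^ 15 = 1) : False := by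
  have h : (1 : ℂ) = 0 := by
    linear_combination (((1731 : ℂ)/4172) + ((2039 : ℂ)/4172) * z + ((135 : ℂ)/4172) * z ^ 2 + ((-1629 : ℂ)/4172) * z ^ 3 + ((-2301 : ℂ)/4172) * z ^ 4 + ((667 : ℂ)/4172) * z ^ 5 + ((2627 : ℂ)/4172) * z ^ 6 + ((667 : ℂ)/4172) * z ^ 7 + ((-2301 : ℂ)/4172) * z ^ 8 + ((-1629 : ℂ)/4172) * z ^ 9 + ((135 : ℂ)/4172) * z ^ 10 + ((2039 : ℂ)/4172) * z ^ 11 + ((1731 : ℂ)/4172) * z ^ 12 + ((-1881 : ℂ)/4172) * z ^ 13 + ((-1881 : ℂ)/4172) * z ^ 14) * hf + (((-355 : ℂ)/2086) + ((2039 : ℂ)/2086) * z + ((933 : ℂ)/1043) * z ^ 2 + ((2551 : ℂ)/4172) * z ^ 3 + ((167 : ℂ)/596) * z ^ 4 + ((1005 : ℂ)/1043) * z ^ 5 + ((2397 : ℂ)/2086) * z ^ 6 + ((3053 : ℂ)/4172) * z ^ 7 + ((185 : ℂ)/298) * z ^ 8 + ((195 : ℂ)/298) * z ^ 9 + ((1623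 : ℂ)/4172) * z ^ 10 + ((2237 : ℂ)/2086) * z ^ 11 + ((773 : ℂ)/1043) * z ^ 12 + ((273 : ℂ)/596) * z ^ 13 + ((1565 : ℂ)/4172) * z ^ 14 + ((75 : ℂ)/1043) * z ^ 15 + ((1881 : ℂ)/2086) * z ^ 16 + ((1881 : ℂ)/2086) * z ^ 17) * h1
  exact one_ne_zero h
lemma cert16 (z : ℂ)
    (hf : 2*z^18 + 2*z^16 + z^15 + 2*z^14 + z^13 + 2*z^12 + z^11 + 3*z^10 + 3*z^8 + z^7 + 2*z^6 + z^5 + 2*z^4 + z^3 + 2*z^2 + 2 = 0)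
    (h1 : z ^ 16 = 1) : False := by
  have h : (1 : ℂ) = 0 := by
    linear_combination (((555 : ℂ)/1792) + ((109 : ℂ)/1792) * z + ((-533 : ℂ)/1792) * z ^ 2 + ((-179 : ℂ)/1792) * z ^ 3 + ((363 : ℂ)/1792) * z ^ 4 + ((109 : ℂ)/1792) * z ^ 5 + ((-341 : ℂ)/1792) * z ^ 6 + ((-51 : ℂ)/1792) * z ^ 7 + ((-341 : ℂ)/1792) * z ^ 8 + ((109 : ℂ)/1792) * z ^ 9 + ((363 : ℂ)/1792) * z ^ 10 + ((-179 : ℂ)/1792) * z ^ 11 + ((-533 : ℂ)/1792) * z ^ 12 + ((109 : ℂ)/1792) * z ^ 13 + ((555 : ℂ)/1792) * z ^ 14 + ((-51 : ℂ)/1792) * z ^ 15) * hf + (((-341 : ℂ)/896) + ((109 : ℂ)/896) * z + ((11 : ℂ)/448) * z ^ 2 + ((415 : ℂ)/1792) * z ^ 3 + ((879 : ℂ)/1792) * z ^ 4 + ((25 : ℂ)/448) * z ^ 5 + ((9 : ℂ)/896) * z ^ 6 + ((361 : ℂ)/1792) * z ^ 7 + ((-13 : ℂ)/112) * z ^ 9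 + ((33 : ℂ)/1792) * z ^ 10 + ((1 : ℂ)/896) * z ^ 11 + ((-207 : ℂ)/448) * z ^ 12 + ((-313 : ℂ)/1792) * z ^ 13 + ((1 : ℂ)/256) * z ^ 14 + ((-29 : ℂ)/448) * z ^ 15 + ((-555 : ℂ)/896) * z ^ 16 + ((51 : ℂ)/896) * z ^ 17) * h1
  exact one_ne_zero h
lemma cert17 (z : ℂ)
    (hf : 2*z^18 + 2*z^16 + z^15 + 2*z^14 + z^13 + 2*z^12 + z^11 + 3*z^10 + 3*z^8 + z^7 + 2*z^6 + z^5 + 2*z^4 + z^3 + 2*z^2 + 2 = 0)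
    (h1 : z ^ 17 = 1) : False := by
  have h : (1 : ℂ) = 0 := by
    linear_combination (((-163 : ℂ)/28) + ((145 : ℂ)/28) * z + ((201 : ℂ)/28) * z ^ 2 + ((-107 : ℂ)/28) * z ^ 3 + ((-219 : ℂ)/28) * z ^ 4 + ((61 : ℂ)/28) * z ^ 5 + ((229 : ℂ)/28) * z ^ 6 + ((-23 : ℂ)/28) * z ^ 7 + ((-247 : ℂ)/28) * z ^ 8 + ((-23 : ℂ)/28) * z ^ 9 + ((229 : ℂ)/28) * z ^ 10 + ((61 : ℂ)/28) * z ^ 11 + ((-219 : ℂ)/28) * z ^ 12 + ((-107 : ℂ)/28) * z ^ 13 + ((201 : ℂ)/28) * z ^ 14 + ((145 : ℂ)/28) * z ^ 15 + ((-163 : ℂ)/28) * z ^ 16) * hf + (((-177 : ℂ)/14) + ((145 : ℂ)/14) * z + ((19 : ℂ)/7) * z ^ 2 + ((-87 : ℂ)/28) * z ^ 3 + ((-31 : ℂ)/4) * z ^ 4 + ((59 : ℂ)/7) * z ^ 5 + ((67 : ℂ)/14) * z ^ 6 + ((-29 : ℂ)/28) * z ^ 7 + ((-33 : ℂ)/2)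 * z ^ 8 + ((33 : ℂ)/2) * z ^ 9 + ((29 : ℂ)/28) * z ^ 10 + ((-67 : ℂ)/14) * z ^ 11 + ((-59 : ℂ)/7) * z ^ 12 + ((31 : ℂ)/4) * z ^ 13 + ((87 : ℂ)/28) * z ^ 14 + ((-19 : ℂ)/7) * z ^ 15 + ((-145 : ℂ)/14) * z ^ 16 + ((163 : ℂ)/14) * z ^ 17) * h1
  exact one_ne_zero h
lemma cert18 (z : ℂ)
    (hf : 2*z^18 + 2*z^16 + z^15 + 2*z^14 + z^13 + 2*z^12 + z^11 + 3*z^10 + 3*z^8 + z^7 + 2*z^6 + z^5 + 2*z^4 + z^3 + 2*z^2 + 2 = 0)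
    (h1 : z ^ 18 = 1) : False := by
  have h : (1 : ℂ) = 0 := by
    linear_combination (((1763 : ℂ)/3808) + ((-603 : ℂ)/3808) * z + ((-925 : ℂ)/3808) * z ^ 2 + ((-827 : ℂ)/3808) * z ^ 3 + ((-477 : ℂ)/3808) * z ^ 4 + ((69 : ℂ)/3808) * z ^ 5 + ((419 : ℂ)/3808) * z ^ 6 + ((517 : ℂ)/3808) * z ^ 7 + ((195 : ℂ)/3808) * z ^ 8 + ((1637 : ℂ)/3808) * z ^ 9 + ((195 : ℂ)/3808) * z ^ 10 + ((517 : ℂ)/3808) * z ^ 11 + ((419 : ℂ)/3808) * z ^ 12 + ((69 : ℂ)/3808) * z ^ 13 + ((-477 : ℂ)/3808) * z ^ 14 + ((-827 : ℂ)/3808) * z ^ 15 + ((-925 : ℂ)/3808) * z ^ 16 + ((-603 : ℂ)/3808) * z ^ 17) * hf + (((-141 : ℂ)/1904) + ((-603 : ℂ)/1904) * z + ((419 : ℂ)/952) * z ^ 2 + ((-1097 : ℂ)/3808) * z ^ 3 + ((1 : ℂ)/32) * z ^ 4 + ((-471 : ℂ)/952) * z ^ 5 + ((65 : ℂ)/1904)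 * z ^ 6 + ((-1327 : ℂ)/3808) * z ^ 7 + ((21 : ℂ)/34) * z ^ 8 + ((2937 : ℂ)/3808) * z ^ 10 + ((1545 : ℂ)/1904) * z ^ 11 + ((849 : ℂ)/952) * z ^ 12 + ((521 : ℂ)/544) * z ^ 13 + ((3407 : ℂ)/3808) * z ^ 14 + ((715 : ℂ)/952) * z ^ 15 + ((925 : ℂ)/1904) * z ^ 16 + ((603 : ℂ)/1904) * z ^ 17) * h1
  exact one_ne_zero h
lemma cert19 (z : ℂ)
    (hf : 2*z^18 + 2*z^16 + z^15 + 2*z^14 + z^13 + 2*z^12 + z^11 + 3*z^10 + 3*z^8 + z^7 + 2*z^6 + z^5 + 2*z^4 + z^3 + 2*z^2 + 2 = 0)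
    (h1 : z ^ 19 = 1) : False := by
  have h : (1 : ℂ) = 0 := by
    linear_combination (((227 : ℂ)/28) + ((227 : ℂ)/28) * z + ((115 : ℂ)/28) * z ^ 2 + ((-25 : ℂ)/28) * z ^ 3 + ((-165 : ℂ)/28) * z ^ 4 + ((-221 : ℂ)/28) * z ^ 5 + ((-193 : ℂ)/28) * z ^ 6 + ((-81 : ℂ)/28) * z ^ 7 + ((59 : ℂ)/28) * z ^ 8 + ((171 : ℂ)/28) * z ^ 9 + ((227 : ℂ)/28) * z ^ 10 + ((171 : ℂ)/28) * z ^ 11 + ((59 : ℂ)/28) * z ^ 12 + ((-81 : ℂ)/28) * z ^ 13 + ((-193 : ℂ)/28) * z ^ 14 + ((-221 : ℂ)/28) * z ^ 15 + ((-165 : ℂ)/28) * z ^ 16 + ((-25 : ℂ)/28) * z ^ 17 + ((115 : ℂ)/28) * z ^ 18) * hf + (((213 : ℂ)/14) + ((227 : ℂ)/14) * z + ((171 : ℂ)/7) * z ^ 2 + ((631 : ℂ)/28) * z ^ 3 + ((83 : ℂ)/4) * z ^ 4 + ((76 : ℂ)/7) * z ^ 5 + ((85 : ℂ)/14) * z ^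 6 + ((-23 : ℂ)/28) * z ^ 7 + ((21 : ℂ)/2) * z ^ 8 + ((9 : ℂ)/2) * z ^ 9 + ((555 : ℂ)/28) * z ^ 10 + ((307 : ℂ)/14) * z ^ 11 + ((176 : ℂ)/7) * z ^ 12 + ((73 : ℂ)/4) * z ^ 13 + ((377 : ℂ)/28) * z ^ 14 + ((25 : ℂ)/7) * z ^ 15 + ((25 : ℂ)/14) * z ^ 16 + ((-115 : ℂ)/14) * z ^ 17) * h1
  exact one_ne_zero h
lemma cert20 (z : ℂ)
    (hf : 2*z^18 + 2*z^16 + z^15 + 2*z^14 + z^13 + 2*z^12 + z^11 + 3*z^10 + 3*z^8 + z^7 + 2*z^6 + z^5 + 2*z^4 + z^3 + 2*z^2 + 2 = 0)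
    (h1 : z ^ 20 = 1) : False := by
  have h : (1 : ℂ) = 0 := by
    linear_combination (((-177 : ℂ)/448) + ((201 : ℂ)/448) * z + ((-177 : ℂ)/448) * z ^ 2 + ((-23 : ℂ)/448) * z ^ 3 + ((-177 : ℂ)/448) * z ^ 4 + ((201 : ℂ)/448) * z ^ 5 + ((271 : ℂ)/448) * z ^ 6 + ((-23 : ℂ)/448) * z ^ 7 + ((-177 : ℂ)/448) * z ^ 8 + ((-247 : ℂ)/448) * z ^ 9 + ((271 : ℂ)/448) * z ^ 10 + ((-23 : ℂ)/448) * z ^ 11 + ((271 : ℂ)/448) * z ^ 12 + ((-247 : ℂ)/448) * z ^ 13 + ((-177 : ℂ)/448) * z ^ 14 + ((-23 : ℂ)/448) * z ^ 15 + ((271 : ℂ)/448) * z ^ 16 + ((201 : ℂ)/448) * z ^ 17 + ((-177 : ℂ)/448) * z ^ 18 + ((-23 : ℂ)/448) * z ^ 19) * hf + (((-401 : ℂ)/224) + ((201 : ℂ)/224) * z + ((-177 : ℂ)/112) * z ^ 2 + ((179 : ℂ)/448) * z ^ 3 + ((-123 : ℂ)/64) * z ^ 4 + ((101 : ℂ)/112)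 * z ^ 5 + ((-171 : ℂ)/224) * z ^ 6 + ((181 : ℂ)/448) * z ^ 7 + ((-3 : ℂ)/2) * z ^ 8 + ((3 : ℂ)/4) * z ^ 9 + ((-531 : ℂ)/448) * z ^ 10 + ((45 : ℂ)/224) * z ^ 11 + ((-3 : ℂ)/112) * z ^ 12 + ((-19 : ℂ)/64) * z ^ 13 + ((-165 : ℂ)/448) * z ^ 14 + ((-89 : ℂ)/112) * z ^ 15 + ((177 : ℂ)/224) * z ^ 16 + ((23 : ℂ)/224) * z ^ 17) * h1
  exact one_ne_zero h
lemma cert21 (z : ℂ)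
    (hf : 2*z^18 + 2*z^16 + z^15 + 2*z^14 + z^13 + 2*z^12 + z^11 + 3*z^10 + 3*z^8 + z^7 + 2*z^6 + z^5 + 2*z^4 + z^3 + 2*z^2 + 2 = 0)
    (h1 : z ^ 21 = 1) : False := by
  have h : (1 : ℂ) = 0 := by
    linear_combination (((-17 : ℂ)/980) + ((-157 : ℂ)/980) * z + ((-157 : ℂ)/980) * z ^ 2 + ((-17 : ℂ)/980) * z ^ 3 + ((-129 : ℂ)/980) * z ^ 4 + ((291 : ℂ)/980) * z ^ 5 + ((263 : ℂ)/980) * z ^ 6 + ((-213 : ℂ)/980) * z ^ 7 + ((-353 : ℂ)/980) * z ^ 8 + ((47 : ℂ)/196) * z ^ 9 + ((75 : ℂ)/196) * z ^ 10 + ((-129 : ℂ)/980) * z ^ 11 + ((-297 : ℂ)/980) * z ^ 12 + ((-129 : ℂ)/980) * z ^ 13 + ((75 : ℂ)/196) * z ^ 14 + ((47 : ℂ)/196) * z ^ 15 + ((-353 : ℂ)/980) * z ^ 16 + ((-213 : ℂ)/980) * z ^ 17 + ((263 : ℂ)/980) * z ^ 18 + ((291 : ℂ)/980) * z ^ 19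 + ((-129 : ℂ)/980) * z ^ 20) * hf + (((-507 : ℂ)/490) + ((-157 : ℂ)/490) * z + ((-87 : ℂ)/245) * z ^ 2 + ((-73 : ℂ)/196) * z ^ 3 + ((-109 : ℂ)/140) * z ^ 4 + ((3 : ℂ)/49) * z ^ 5 + ((-127 : ℂ)/490) * z ^ 6 + ((-99 : ℂ)/196) * z ^ 7 + ((-7 : ℂ)/10) * z ^ 8 + ((1 : ℂ)/10) * z ^ 9 + ((-149 : ℂ)/980) * z ^ 10 + ((-39 : ℂ)/98) * z ^ 11 + ((-38 : ℂ)/49) * z ^ 12 + ((3 : ℂ)/20) * z ^ 13 + ((-27 : ℂ)/980) * z ^ 14 + ((-67 : ℂ)/245) * z ^ 15 + ((-291 : ℂ)/490) * z ^ 16 + ((129 : ℂ)/490) * z ^ 17) * h1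
  exact one_ne_zero h
lemma cert22 (z : ℂ)
    (hf : 2*z^18 + 2*z^16 + z^15 + 2*z^14 + z^13 + 2*z^12 + z^11 + 3*z^10 + 3*z^8 + z^7 + 2*z^6 + z^5 + 2*z^4 + z^3 + 2*z^2 + 2 = 0)
    (h1 : z ^ 22 = 1) : False := by
  have h : (1 : ℂ) = 0 := by
    linear_combination (((93439 : ℂ)/458528) + ((-30167 : ℂ)/458528) * z + ((-194177 : ℂ)/458528) * z ^ 2 + ((-30167 : ℂ)/458528) * z ^ 3 + ((93439 : ℂ)/458528) * z ^ 4 + ((50921 : ℂ)/458528) * z ^ 5 + ((-31329 : ℂ)/458528) * z ^ 6 + ((6793 : ℂ)/458528) * z ^ 7 + ((-26849 : ℂ)/458528) * z ^ 8 + ((42185 : ℂ)/458528) * z ^ 9 + ((37215 : ℂ)/458528) * z ^ 10 + ((-72279 : ℂ)/458528) * z ^ 11 + ((35871 : ℂ)/458528) * z ^ 12 + ((-1047 : ℂ)/458528) * z ^ 13 + ((35871 : ℂ)/458528) * z ^ 14 + ((-72279 : ℂ)/458528) * z ^ 15 + ((37215 : ℂ)/458528) * z ^ 16 + ((42185 :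 ℂ)/458528) * z ^ 17 + ((-26849 : ℂ)/458528) * z ^ 18 + ((6793 : ℂ)/458528) * z ^ 19 + ((-31329 : ℂ)/458528) * z ^ 20 + ((50921 : ℂ)/458528) * z ^ 21) * hf + (((-135825 : ℂ)/229264) + ((-30167 : ℂ)/229264) * z + ((-50369 : ℂ)/114632) * z ^ 2 + ((-27229 : ℂ)/458528) * z ^ 3 + ((-6395 : ℂ)/65504) * z ^ 4 + ((-29891 : ℂ)/114632) * z ^ 5 + ((-68795 : ℂ)/229264) * z ^ 6 + ((-12539 : ℂ)/458528) * z ^ 7 + ((-419 : ℂ)/4094) * z ^ 8 + ((-371 : ℂ)/2047) * z ^ 9 + ((-129715 : ℂ)/458528) * z ^ 10 + ((1469 : ℂ)/229264) * z ^ 11 + ((-3947 : ℂ)/114632) * z ^ 12 + ((-24067 : ℂ)/65504) * z ^ 13 + ((2845 : ℂ)/19936) * z ^ 14 + ((-28857 : ℂ)/114632) * z ^ 15 + ((31329 : ℂ)/229264) * z ^ 16 + ((-50921 : ℂ)/229264) * z ^ 17) * h1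
  exact one_ne_zero h
lemma cert23 (z : ℂ)
    (hf : 2*z^18 + 2*z^16 + z^15 + 2*z^14 + z^13 + 2*z^12 + z^11 + 3*z^10 + 3*z^8 + z^7 + 2*z^6 + z^5 + 2*z^4 + z^3 + 2*z^2 + 2 = 0)
    (h1 : z ^ 23 = 1) : False := by
  have h : (1 : ℂ) = 0 := by
    linear_combination (((70129 : ℂ)/364532) + ((-77963 : ℂ)/364532) * z + ((-26079 : ℂ)/364532) * z ^ 2 + ((-26079 : ℂ)/364532) * z ^ 3 + ((-77963 : ℂ)/364532) * z ^ 4 + ((70129 : ℂ)/364532) * z ^ 5 + ((89225 : ℂ)/364532) * z ^ 6 + ((-47863 : ℂ)/364532) * z ^ 7 + ((-90367 : ℂ)/364532) * z ^ 8 + ((116301 : ℂ)/364532) * z ^ 9 + ((13317 : ℂ)/364532) * z ^ 10 + ((-112655 : ℂ)/364532) * z ^ 11 + ((88245 : ℂ)/364532) * z ^ 12 + ((39749 : ℂ)/364532) * z ^ 13 + ((-111059 : ℂ)/364532) * z ^ 14 + ((39749 : ℂ)/364532) * z ^ 15 + ((88245 : ℂ)/364532) * z ^ 16 + ((-112655 :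 ℂ)/364532) * z ^ 17 + ((13317 : ℂ)/364532) * z ^ 18 + ((116301 : ℂ)/364532) * z ^ 19 + ((-90367 : ℂ)/364532) * z ^ 20 + ((-47863 : ℂ)/364532) * z ^ 21 + ((89225 : ℂ)/364532) * z ^ 22) * hf + (((-112137 : ℂ)/182266) + ((-77963 : ℂ)/182266) * z + ((22025 : ℂ)/91133) * z ^ 2 + ((-137955 : ℂ)/364532) * z ^ 3 + ((-20827 : ℂ)/52076) * z ^ 4 + ((-5944 : ℂ)/91133) * z ^ 5 + ((3291 : ℂ)/182266) * z ^ 6 + ((-197465 : ℂ)/364532) * z ^ 7 + ((-2421 : ℂ)/26038) * z ^ 8 + ((-1695 : ℂ)/26038) * z ^ 9 + ((-3239 : ℂ)/364532) * z ^ 10 + ((-134639 : ℂ)/182266) * z ^ 11 + ((22394 : ℂ)/91133) * z ^ 12 + ((3359 : ℂ)/52076) * z ^ 13 + ((-226101 : ℂ)/364532) * z ^ 14 + ((571 : ℂ)/91133) * z ^ 15 + ((47863 : ℂ)/182266) * z ^ 16 + ((-89225 : ℂ)/182266) * z ^ 17) * h1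
  exact one_ne_zero h
lemma cert24 (z : ℂ)
    (hf : 2*z^18 + 2*z^16 + z^15 + 2*z^14 + z^13 + 2*z^12 + z^11 + 3*z^10 + 3*z^8 + z^7 + 2*z^6 + z^5 + 2*z^4 + z^3 + 2*z^2 + 2 = 0)
    (h1 : z ^ 24 = 1) : False := by
  have h : (1 : ℂ) = 0 := by
    linear_combination (((249 : ℂ)/896) + ((-7 : ℂ)/128) * z + ((57 : ℂ)/896) * z ^ 2 + ((-401 : ℂ)/896) * z ^ 3 + ((57 : ℂ)/896) * z ^ 4 + ((-7 : ℂ)/128) * z ^ 5 + ((249 : ℂ)/896) * z ^ 6 + ((111 : ℂ)/896) * z ^ 7 + ((-391 : ℂ)/896) * z ^ 8 + ((335 : ℂ)/896) * z ^ 9 + ((-199 : ℂ)/896) * z ^ 10 + ((111 : ℂ)/896) * z ^ 11 + ((57 : ℂ)/896) * z ^ 12 + ((-177 : ℂ)/896) * z ^ 13 + ((249 : ℂ)/896) * z ^ 14 + ((-39 : ℂ)/128) * z ^ 15 + ((249 : ℂ)/896) * z ^ 16 + ((-177 : ℂ)/896) * z ^ 17 + ((57 : ℂ)/896) * z ^ 18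 + ((111 : ℂ)/896) * z ^ 19 + ((-199 : ℂ)/896) * z ^ 20 + ((335 : ℂ)/896) * z ^ 21 + ((-391 : ℂ)/896) * z ^ 22 + ((111 : ℂ)/896) * z ^ 23) * hf + (((-199 : ℂ)/448) + ((-7 : ℂ)/64) * z + ((153 : ℂ)/224) * z ^ 2 + ((-93 : ℂ)/128) * z ^ 3 + ((677 : ℂ)/896) * z ^ 4 + ((-173 : ℂ)/224) * z ^ 5 + ((387 : ℂ)/448) * z ^ 6 + ((-59 : ℂ)/128) * z ^ 7 + ((3 : ℂ)/14) * z ^ 8 + ((13 : ℂ)/56) * z ^ 9 + ((11 : ℂ)/896) * z ^ 10 + ((-85 : ℂ)/448) * z ^ 11 + ((155 : ℂ)/224) * z ^ 12 + ((-723 : ℂ)/896) * z ^ 13 + ((1069 : ℂ)/896) * z ^ 14 + ((-223 : ℂ)/224) * z ^ 15 + ((391 : ℂ)/448) * z ^ 16 + ((-111 : ℂ)/448) * z ^ 17) * h1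
  exact one_ne_zero h
lemma cert25 (z : ℂ)
    (hf : 2*z^18 + 2*z^16 + z^15 + 2*z^14 + z^13 + 2*z^12 + z^11 + 3*z^10 + 3*z^8 + z^7 + 2*z^6 + z^5 + 2*z^4 + z^3 + 2*z^2 + 2 = 0)
    (h1 : z ^ 25 = 1) : False := by
  have h : (1 : ℂ) = 0 := by
    linear_combination (((85185 : ℂ)/247772) + ((134101 : ℂ)/247772) * z + ((21345 : ℂ)/247772) * z ^ 2 + ((-131983 : ℂ)/247772) * z ^ 3 + ((-131983 : ℂ)/247772) * z ^ 4 + ((21345 : ℂ)/247772) * z ^ 5 + ((134101 : ℂ)/247772) * z ^ 6 + ((85185 : ℂ)/247772) * z ^ 7 + ((-109107 : ℂ)/247772) * z ^ 8 + ((-61675 : ℂ)/247772) * z ^ 9 + ((29857 : ℂ)/247772) * z ^ 10 + ((50325 : ℂ)/247772) * z ^ 11 + ((13617 : ℂ)/247772) * z ^ 12 + ((-26199 : ℂ)/247772) * z ^ 13 + ((-16147 : ℂ)/247772) * z ^ 14 + ((429 : ℂ)/247772) * z ^ 15 + ((29353 : ℂ)/247772) * z ^ 16 + ((429 : ℂ)/247772)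 * z ^ 17 + ((-16147 : ℂ)/247772) * z ^ 18 + ((-26199 : ℂ)/247772) * z ^ 19 + ((13617 : ℂ)/247772) * z ^ 20 + ((50325 : ℂ)/247772) * z ^ 21 + ((29857 : ℂ)/247772) * z ^ 22 + ((-61675 : ℂ)/247772) * z ^ 23 + ((-109107 : ℂ)/247772) * z ^ 24) * hf + (((-38701 : ℂ)/123886) + ((134101 : ℂ)/123886) * z + ((53265 : ℂ)/61943) * z ^ 2 + ((89421 : ℂ)/247772) * z ^ 3 + ((11885 : ℂ)/35396) * z ^ 4 + ((38364 : ℂ)/61943) * z ^ 5 + ((109707 : ℂ)/123886) * z ^ 6 + ((191843 : ℂ)/247772) * z ^ 7 + ((7695 : ℂ)/17698) * z ^ 8 + ((17965 : ℂ)/17698) * z ^ 9 + ((139873 : ℂ)/247772) * z ^ 10 + ((87455 : ℂ)/123886) * z ^ 11 + ((38587 : ℂ)/61943) * z ^ 12 + ((27563 : ℂ)/35396) * z ^ 13 + ((131807 : ℂ)/247772) * z ^ 14 + ((39625 : ℂ)/61943) * z ^ 15 + ((61675 : ℂ)/123886) * z ^ 16 + ((109107 : ℂ)/123886) * z ^ 17)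 * h1
  exact one_ne_zero h
lemma cert26 (z : ℂ)
    (hf : 2*z^18 + 2*z^16 + z^15 + 2*z^14 + z^13 + 2*z^12 + z^11 + 3*z^10 + 3*z^8 + z^7 + 2*z^6 + z^5 + 2*z^4 + z^3 + 2*z^2 + 2 = 0)
    (h1 : z ^ 26 = 1) : False := by
  have h : (1 : ℂ) = 0 := by
    linear_combination (((-237 : ℂ)/1120) + ((-363 : ℂ)/1120) * z + ((-1133 : ℂ)/1120) * z ^ 2 + ((309 : ℂ)/1120) * z ^ 3 + ((311 : ℂ)/224) * z ^ 4 + ((309 : ℂ)/1120) * z ^ 5 + ((-1133 : ℂ)/1120) * z ^ 6 + ((-363 : ℂ)/1120) * z ^ 7 + ((-237 : ℂ)/1120) * z ^ 8 + ((-139 : ℂ)/1120) * z ^ 9 + ((1107 : ℂ)/1120) * z ^ 10 + ((533 : ℂ)/1120) * z ^ 11 + ((-461 : ℂ)/1120) * z ^ 12 + ((-363 : ℂ)/1120) * z ^ 13 + ((-237 : ℂ)/1120) * z ^ 14 + ((-587 : ℂ)/1120) * z ^ 15 + ((211 : ℂ)/1120) * z ^ 16 + ((241 : ℂ)/224) *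 z ^ 17 + ((211 : ℂ)/1120) * z ^ 18 + ((-587 : ℂ)/1120) * z ^ 19 + ((-237 : ℂ)/1120) * z ^ 20 + ((-363 : ℂ)/1120) * z ^ 21 + ((-461 : ℂ)/1120) * z ^ 22 + ((533 : ℂ)/1120) * z ^ 23 + ((1107 : ℂ)/1120) * z ^ 24 + ((-139 : ℂ)/1120) * z ^ 25) * hf + (((-797 : ℂ)/560) + ((-363 : ℂ)/560) * z + ((-137 : ℂ)/56) * z ^ 2 + ((-69 : ℂ)/224) * z ^ 3 + ((1 : ℂ)/160) * z ^ 4 + ((-43 : ℂ)/56) * z ^ 5 + ((-195 : ℂ)/112) * z ^ 6 + ((-31 : ℂ)/1120) * z ^ 7 + ((-21 : ℂ)/10) * z ^ 8 + ((-7 : ℂ)/5) * z ^ 9 + ((-1271 : ℂ)/1120) * z ^ 10 + ((233 : ℂ)/560) * z ^ 11 + ((-303 : ℂ)/280) * z ^ 12 + ((-167 : ℂ)/160) * z ^ 13 + ((-1153 : ℂ)/1120) * z ^ 14 + ((-197 : ℂ)/280) * z ^ 15 + ((-1107 : ℂ)/560) * z ^ 16 + ((139 : ℂ)/560) * z ^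 17) * h1
  exact one_ne_zero h
lemma cert27 (z : ℂ)
    (hf : 2*z^18 + 2*z^16 + z^15 + 2*z^14 + z^13 + 2*z^12 + z^11 + 3*z^10 + 3*z^8 + z^7 + 2*z^6 + z^5 + 2*z^4 + z^3 + 2*z^2 + 2 = 0)
    (h1 : z ^ 27 = 1) : False := by
  have h : (1 : ℂ) = 0 := by
    linear_combination (((285683 : ℂ)/802844) + ((-187685 : ℂ)/802844) * z + ((-148709 : ℂ)/802844) * z ^ 2 + ((-31725 : ℂ)/802844) * z ^ 3 + ((68515 : ℂ)/802844) * z ^ 4 + ((68515 : ℂ)/802844) * z ^ 5 + ((-31725 : ℂ)/802844) * z ^ 6 + ((-148709 : ℂ)/802844) * z ^ 7 + ((-187685 : ℂ)/802844) * z ^ 8 + ((285683 : ℂ)/802844) * z ^ 9 + ((75151 : ℂ)/802844) * z ^ 10 + ((36483 : ℂ)/802844) * z ^ 11 + ((23827 : ℂ)/802844) * z ^ 12 + ((-61713 : ℂ)/802844) * z ^ 13 + ((-92821 : ℂ)/802844) * z ^ 14 + ((-78121 : ℂ)/802844) * z ^ 15 + ((26207 : ℂ)/802844) * z ^ 16 +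 ((26515 : ℂ)/802844) * z ^ 17 + ((145459 : ℂ)/802844) * z ^ 18 + ((26515 : ℂ)/802844) * z ^ 19 + ((26207 : ℂ)/802844) * z ^ 20 + ((-78121 : ℂ)/802844) * z ^ 21 + ((-92821 : ℂ)/802844) * z ^ 22 + ((-61713 : ℂ)/802844) * z ^ 23 + ((23827 : ℂ)/802844) * z ^ 24 + ((36483 : ℂ)/802844) * z ^ 25 + ((75151 : ℂ)/802844) * z ^ 26) * hf + (((-115739 : ℂ)/401422) + ((-187685 : ℂ)/401422) * z + ((68487 : ℂ)/200711) * z ^ 2 + ((-153137 : ℂ)/802844) * z ^ 3 + ((31899 : ℂ)/114692) * z ^ 4 + ((-41204 : ℂ)/200711) * z ^ 5 + ((64059 : ℂ)/401422) * z ^ 6 + ((-393719 : ℂ)/802844) * z ^ 7 + ((7639 : ℂ)/57346) * z ^ 8 + ((-23389 : ℂ)/57346) * z ^ 9 + ((147515 : ℂ)/802844) * z ^ 10 + ((-19749 : ℂ)/401422) * z ^ 11 + ((26931 : ℂ)/200711) * z ^ 12 + ((-6971 : ℂ)/114692) * z ^ 13 + ((-24691 : ℂ)/802844) * z ^ 14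 + ((-49489 : ℂ)/200711) * z ^ 15 + ((-36483 : ℂ)/401422) * z ^ 16 + ((-75151 : ℂ)/401422) * z ^ 17) * h1
  exact one_ne_zero h
lemma cert28 (z : ℂ)
    (hf : 2*z^18 + 2*z^16 + z^15 + 2*z^14 + z^13 + 2*z^12 + z^11 + 3*z^10 + 3*z^8 + z^7 + 2*z^6 + z^5 + 2*z^4 + z^3 + 2*z^2 + 2 = 0)
    (h1 : z ^ 28 = 1) : False := by
  have h : (1 : ℂ) = 0 := by
    linear_combination (((3610513 : ℂ)/9091264) + ((1847255 : ℂ)/9091264) * z + ((-1481903 : ℂ)/9091264) * z ^ 2 + ((-1011657 : ℂ)/9091264) * z ^ 3 + ((-1132015 : ℂ)/9091264) * z ^ 4 + ((-363177 : ℂ)/9091264) * z ^ 5 + ((-1132015 : ℂ)/9091264) * z ^ 6 + ((-1011657 : ℂ)/9091264) * z ^ 7 + ((-1481903 : ℂ)/9091264) * z ^ 8 + ((1847255 : ℂ)/9091264) * z ^ 9 + ((3610513 : ℂ)/9091264) * z ^ 10 + ((737335 : ℂ)/9091264) * z ^ 11 + ((1935 : ℂ)/40768) * z ^ 12 + ((-954537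 : ℂ)/9091264) * z ^ 13 + ((-1648559 : ℂ)/9091264) * z ^ 14 + ((-1964553 : ℂ)/9091264) * z ^ 15 + ((-951919 : ℂ)/9091264) * z ^ 16 + ((394839 : ℂ)/9091264) * z ^ 17 + ((1395601 : ℂ)/9091264) * z ^ 18 + ((2144055 : ℂ)/9091264) * z ^ 19 + ((1395601 : ℂ)/9091264) * z ^ 20 + ((394839 : ℂ)/9091264) * z ^ 21 + ((-951919 : ℂ)/9091264) * z ^ 22 + ((-1964553 : ℂ)/9091264) * z ^ 23 + ((-1648559 : ℂ)/9091264) * z ^ 24 + ((-954537 : ℂ)/9091264) * z ^ 25 + ((1935 : ℂ)/40768) * z ^ 26 + ((737335 : ℂ)/9091264) * z ^ 27) * hf + (((-935119 : ℂ)/4545632) + ((1847255 : ℂ)/4545632) * z + ((1064305 : ℂ)/2272816) * z ^ 2 + ((5281709 : ℂ)/9091264) * z ^ 3 + ((548635 : ℂ)/1298752) * z ^ 4 + ((768363 : ℂ)/2272816) * z ^ 5 + ((282379 : ℂ)/4545632) * z ^ 6 + ((-81877 : ℂ)/9091264) * z ^ 7 + ((541 : ℂ)/5798) * z ^ 8 +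 ((915 : ℂ)/11596) * z ^ 9 + ((3728499 : ℂ)/9091264) * z ^ 10 + ((2395443 : ℂ)/4545632) * z ^ 11 + ((87599 : ℂ)/174832) * z ^ 12 + ((80245 : ℂ)/185536) * z ^ 13 + ((130521 : ℂ)/699328) * z ^ 14 + ((487 : ℂ)/10192) * z ^ 15 + ((-1935 : ℂ)/20384) * z ^ 16 + ((-737335 : ℂ)/4545632) * z ^ 17) * h1
  exact one_ne_zero h
lemma cert29 (z : ℂ)
    (hf : 2*z^18 + 2*z^16 + z^15 + 2*z^14 + z^13 + 2*z^12 + z^11 + 3*z^10 + 3*z^8 + z^7 + 2*z^6 + z^5 + 2*z^4 + z^3 + 2*z^2 + 2 = 0)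
    (h1 : z ^ 29 = 1) : False := by
  have h : (1 : ℂ) = 0 := by
    linear_combination (((2923 : ℂ)/9716) + ((-3125 : ℂ)/9716) * z + ((879 : ℂ)/9716) * z ^ 2 + ((-6765 : ℂ)/9716) * z ^ 3 + ((4771 : ℂ)/9716) * z ^ 4 + ((1775 : ℂ)/9716) * z ^ 5 + ((1775 : ℂ)/9716) * z ^ 6 + ((4771 : ℂ)/9716) * z ^ 7 + ((-6765 : ℂ)/9716) * z ^ 8 + ((879 : ℂ)/9716) * z ^ 9 + ((-3125 : ℂ)/9716) * z ^ 10 + ((2923 : ℂ)/9716) * z ^ 11 + ((-6009 : ℂ)/9716) * z ^ 12 + ((3539 : ℂ)/9716) * z ^ 13 + ((1495 : ℂ)/9716) * z ^ 14 + ((907 : ℂ)/9716) * z ^ 15 + ((3399 : ℂ)/9716) * z ^ 16 + ((-1613 : ℂ)/9716) * z ^ 17 + ((2027 : ℂ)/9716) * z ^ 18 + ((-4525 : ℂ)/9716) * z ^ 19 + ((991 : ℂ)/9716) * z ^ 20 + ((-4525 : ℂ)/9716) * z ^ 21 + ((2027 : ℂ)/9716) * z ^ 22 + ((-1613 : ℂ)/9716)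 * z ^ 23 + ((3399 : ℂ)/9716) * z ^ 24 + ((907 : ℂ)/9716) * z ^ 25 + ((1495 : ℂ)/9716) * z ^ 26 + ((3539 : ℂ)/9716) * z ^ 27 + ((-6009 : ℂ)/9716) * z ^ 28) * hf + (((-1935 : ℂ)/4858) + ((-3125 : ℂ)/4858) * z + ((1901 : ℂ)/2429) * z ^ 2 + ((-16857 : ℂ)/9716) * z ^ 3 + ((2003 : ℂ)/1388) * z ^ 4 + ((-3107 : ℂ)/2429) * z ^ 5 + ((5403 : ℂ)/4858) * z ^ 6 + ((1885 : ℂ)/9716) * z ^ 7 + ((141 : ℂ)/694) * z ^ 8 + ((-45 : ℂ)/694) * z ^ 9 + ((4499 : ℂ)/9716) * z ^ 10 + ((-3135 : ℂ)/4858) * z ^ 11 + ((-288 : ℂ)/2429) * z ^ 12 + ((-187 : ℂ)/1388) * z ^ 13 + ((-2883 : ℂ)/9716) * z ^ 14 + ((2257 : ℂ)/2429) * z ^ 15 + ((-3539 : ℂ)/4858) * z ^ 16 + ((6009 : ℂ)/4858) * z ^ 17) * h1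
  exact one_ne_zero h
lemma cert30 (z : ℂ)
    (hf : 2*z^18 + 2*z^16 + z^15 + 2*z^14 + z^13 + 2*z^12 + z^11 + 3*z^10 + 3*z^8 + z^7 + 2*z^6 + z^5 + 2*z^4 + z^3 + 2*z^2 + 2 = 0)
    (h1 : z ^ 30 = 1) : False := by
  have h : (1 : ℂ) = 0 := by
    linear_combination (((520997 : ℂ)/967904) + ((-33613 : ℂ)/967904) * z + ((-348347 : ℂ)/967904) * z ^ 2 + ((-108653 : ℂ)/967904) * z ^ 3 + ((-46843 : ℂ)/967904) * z ^ 4 + ((124307 : ℂ)/967904) * z ^ 5 + ((157669 : ℂ)/967904) * z ^ 6 + ((124307 : ℂ)/967904) * z ^ 7 + ((-46843 : ℂ)/967904) * z ^ 8 + ((-108653 : ℂ)/967904) * z ^ 9 + ((-348347 : ℂ)/967904) * z ^ 10 + ((-33613 : ℂ)/967904) * z ^ 11 + ((520997 : ℂ)/967904) * z ^ 12 + ((12307 : ℂ)/967904) * z ^ 13 + ((-448699 : ℂ)/967904) * z ^ 14 + ((-119405 : ℂ)/967904) * z ^ 15 + ((506661 : ℂ)/967904) * z ^ 16 + ((379667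 : ℂ)/967904) * z ^ 17 + ((-269275 : ℂ)/967904) * z ^ 18 + ((-486989 : ℂ)/967904) * z ^ 19 + ((30437 : ℂ)/967904) * z ^ 20 + ((451795 : ℂ)/967904) * z ^ 21 + ((30437 : ℂ)/967904) * z ^ 22 + ((-486989 : ℂ)/967904) * z ^ 23 + ((-269275 : ℂ)/967904) * z ^ 24 + ((379667 : ℂ)/967904) * z ^ 25 + ((506661 : ℂ)/967904) * z ^ 26 + ((-119405 : ℂ)/967904) * z ^ 27 + ((-448699 : ℂ)/967904) * z ^ 28 + ((12307 : ℂ)/967904) * z ^ 29) * hf + (((37045 : ℂ)/483952) + ((-33613 : ℂ)/483952) * z + ((86325 : ℂ)/241976) * z ^ 2 + ((236465 : ℂ)/967904) * z ^ 3 + ((31143 : ℂ)/138272) * z ^ 4 + ((34183 : ℂ)/241976) * z ^ 5 + ((212343 : ℂ)/483952) * z ^ 6 + ((338503 : ℂ)/967904) * z ^ 7 + ((8717 : ℂ)/8642) * z ^ 8 + ((-1231 : ℂ)/4321) * z ^ 9 + ((89183 : ℂ)/967904) * z ^ 10 + ((185439 : ℂ)/483952) * z ^ 11 + ((132431 : ℂ)/241976)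 * z ^ 12 + ((-13777 : ℂ)/138272) * z ^ 13 + ((-128231 : ℂ)/967904) * z ^ 14 + ((53549 : ℂ)/241976) * z ^ 15 + ((448699 : ℂ)/483952) * z ^ 16 + ((-12307 : ℂ)/483952) * z ^ 17) * h1
  exact one_ne_zero h
lemma cert31 (z : ℂ)
    (hf : 2*z^18 + 2*z^16 + z^15 + 2*z^14 + z^13 + 2*z^12 + z^11 + 3*z^10 + 3*z^8 + z^7 + 2*z^6 + z^5 + 2*z^4 + z^3 + 2*z^2 + 2 = 0)
    (h1 : z ^ 31 = 1) : False := by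
  have h : (1 : ℂ) = 0 := by
    linear_combination (((2313 : ℂ)/10444) + ((255 : ℂ)/10444) * z + ((-6479 : ℂ)/10444) * z ^ 2 + ((2649 : ℂ)/10444) * z ^ 3 + ((-613 : ℂ)/10444) * z ^ 4 + ((2369 : ℂ)/10444) * z ^ 5 + ((-1495 : ℂ)/10444) * z ^ 6 + ((-1495 : ℂ)/10444) * z ^ 7 + ((2369 : ℂ)/10444) * z ^ 8 + ((-613 : ℂ)/10444) * z ^ 9 + ((2649 : ℂ)/10444) * z ^ 10 + ((-6479 : ℂ)/10444) * z ^ 11 + ((255 : ℂ)/10444) * z ^ 12 + ((2313 : ℂ)/10444) * z ^ 13 + ((1767 : ℂ)/10444) * z ^ 14 + ((2117 : ℂ)/10444) * z ^ 15 + ((-3567 : ℂ)/10444) * z ^ 16 + ((129 : ℂ)/10444) * z ^ 17 + ((-445 : ℂ)/10444) * z ^ 18 + ((2943 : ℂ)/10444) * z ^ 19 + ((1697 : ℂ)/10444) * z ^ 20 + ((-2489 : ℂ)/10444) * z ^ 21 + ((-1929 : ℂ)/10444) * z ^ 22 + ((-2489 : ℂ)/10444) * z ^ 23 + ((1697 :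 ℂ)/10444) * z ^ 24 + ((2943 : ℂ)/10444) * z ^ 25 + ((-445 : ℂ)/10444) * z ^ 26 + ((129 : ℂ)/10444) * z ^ 27 + ((-3567 : ℂ)/10444) * z ^ 28 + ((2117 : ℂ)/10444) * z ^ 29 + ((1767 : ℂ)/10444) * z ^ 30) * hf + (((-2909 : ℂ)/5222) + ((255 : ℂ)/5222) * z + ((-2083 : ℂ)/2611) * z ^ 2 + ((8121 : ℂ)/10444) * z ^ 3 + ((-1329 : ℂ)/1492) * z ^ 4 + ((1595 : ℂ)/2611) * z ^ 5 + ((-2411 : ℂ)/2611) * z ^ 6 + ((2777 : ℂ)/10444) * z ^ 7 + ((-8 : ℂ)/373) * z ^ 8 + ((-143 : ℂ)/746) * z ^ 9 + ((-3155 : ℂ)/10444) * z ^ 10 + ((-575 : ℂ)/5222) * z ^ 11 + ((-4289 : ℂ)/5222) * z ^ 12 + ((339 : ℂ)/1492) * z ^ 13 + ((-6259 : ℂ)/10444) * z ^ 14 + ((900 : ℂ)/2611) * z ^ 15 + ((-2117 : ℂ)/5222) * z ^ 16 + ((-1767 : ℂ)/5222) * z ^ 17) * h1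
  exact one_ne_zero h
lemma cert32 (z : ℂ)
    (hf : 2*z^18 + 2*z^16 + z^15 + 2*z^14 + z^13 + 2*z^12 + z^11 + 3*z^10 + 3*z^8 + z^7 + 2*z^6 + z^5 + 2*z^4 + z^3 + 2*z^2 + 2 = 0)
    (h1 : z ^ 32 = 1) : False := by
  have h : (1 : ℂ) = 0 := by
    linear_combination (((171211 : ℂ)/347648) + ((180813 : ℂ)/347648) * z + ((-56181 : ℂ)/347648) * z ^ 2 + ((-176851 : ℂ)/347648) * z ^ 3 + ((-64245 : ℂ)/347648) * z ^ 4 + ((-43187 : ℂ)/347648) * z ^ 5 + ((21579 : ℂ)/347648) * z ^ 6 + ((195757 : ℂ)/347648) * z ^ 7 + ((21579 : ℂ)/347648) * z ^ 8 + ((-43187 : ℂ)/347648) * z ^ 9 + ((-64245 : ℂ)/347648) * z ^ 10 + ((-176851 : ℂ)/347648) * z ^ 11 + ((-56181 : ℂ)/347648) * z ^ 12 + ((180813 : ℂ)/347648) * z ^ 13 + ((171211 : ℂ)/347648) * z ^ 14 + ((-51 : ℂ)/3584) * z ^ 15 + ((-63541 : ℂ)/347648) * z ^ 16 + ((-159667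 : ℂ)/347648) * z ^ 17 + ((-47221 : ℂ)/347648) * z ^ 18 + ((142125 : ℂ)/347648) * z ^ 19 + ((134667 : ℂ)/347648) * z ^ 20 + ((64333 : ℂ)/347648) * z ^ 21 + ((-87733 : ℂ)/347648) * z ^ 22 + ((-205651 : ℂ)/347648) * z ^ 23 + ((-87733 : ℂ)/347648) * z ^ 24 + ((64333 : ℂ)/347648) * z ^ 25 + ((134667 : ℂ)/347648) * z ^ 26 + ((142125 : ℂ)/347648) * z ^ 27 + ((-47221 : ℂ)/347648) * z ^ 28 + ((-159667 : ℂ)/347648) * z ^ 29 + ((-63541 : ℂ)/347648) * z ^ 30 + ((-51 : ℂ)/3584) * z ^ 31) * hf + (((-2613 : ℂ)/173824) + ((180813 : ℂ)/173824) * z + ((57515 : ℂ)/86912) * z ^ 2 + ((179135 : ℂ)/347648) * z ^ 3 + ((282383 : ℂ)/347648) * z ^ 4 + ((9145 : ℂ)/86912) * z ^ 5 + ((74345 : ℂ)/173824) * z ^ 6 + ((363849 : ℂ)/347648) * z ^ 7 + ((357 : ℂ)/388) * z ^ 8 + ((19291 : ℂ)/21728) * z ^ 9 + ((150145 : ℂ)/347648)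 * z ^ 10 + ((13537 : ℂ)/173824) * z ^ 11 + ((29201 : ℂ)/86912) * z ^ 12 + ((108519 : ℂ)/347648) * z ^ 13 + ((32353 : ℂ)/49664) * z ^ 14 + ((82307 : ℂ)/86912) * z ^ 15 + ((63541 : ℂ)/173824) * z ^ 16 + ((51 : ℂ)/1792) * z ^ 17) * h1
  exact one_ne_zero h
lemma cert33 (z : ℂ)
    (hf : 2*z^18 + 2*z^16 + z^15 + 2*z^14 + z^13 + 2*z^12 + z^11 + 3*z^10 + 3*z^8 + z^7 + 2*z^6 + z^5 + 2*z^4 + z^3 + 2*z^2 + 2 = 0)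
    (h1 : z ^ 33 = 1) : False := by
  have h : (1 : ℂ) = 0 := by
    linear_combination (((196379 : ℂ)/1642228) + ((-265649 : ℂ)/1642228) * z + ((-331085 : ℂ)/1642228) * z ^ 2 + ((185403 : ℂ)/1642228) * z ^ 3 + ((-164961 : ℂ)/1642228) * z ^ 4 + ((444963 : ℂ)/1642228) * z ^ 5 + ((245547 : ℂ)/1642228) * z ^ 6 + ((-586305 : ℂ)/1642228) * z ^ 7 + ((-586305 : ℂ)/1642228) * z ^ 8 + ((245547 : ℂ)/1642228) * z ^ 9 + ((444963 : ℂ)/1642228) * z ^ 10 + ((-164961 : ℂ)/1642228) * z ^ 11 + ((185403 : ℂ)/1642228) * z ^ 12 + ((-331085 : ℂ)/1642228) * z ^ 13 + ((-265649 : ℂ)/1642228) * z ^ 14 + ((196379 : ℂ)/1642228) * z ^ 15 + ((198255 : ℂ)/1642228) * z ^ 16 + ((190723 : ℂ)/1642228) * z ^ 17 + ((275927 : ℂ)/1642228) * z ^ 18 + ((238547 : ℂ)/1642228) * z ^ 19 + ((-397389 : ℂ)/1642228) * z ^ 20 + ((-327557 : ℂ)/1642228) * z ^ 21 + ((44367 :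 ℂ)/1642228) * z ^ 22 + ((100675 : ℂ)/1642228) * z ^ 23 + ((-37029 : ℂ)/1642228) * z ^ 24 + ((100675 : ℂ)/1642228) * z ^ 25 + ((44367 : ℂ)/1642228) * z ^ 26 + ((-327557 : ℂ)/1642228) * z ^ 27 + ((-397389 : ℂ)/1642228) * z ^ 28 + ((238547 : ℂ)/1642228) * z ^ 29 + ((275927 : ℂ)/1642228) * z ^ 30 + ((190723 : ℂ)/1642228) * z ^ 31 + ((198255 : ℂ)/1642228) * z ^ 32) * hf + (((-624735 : ℂ)/821114) + ((-265649 : ℂ)/821114) * z + ((-67353 : ℂ)/410557) * z ^ 2 + ((35887 : ℂ)/1642228) * z ^ 3 + ((-123569 : ℂ)/234604) * z ^ 4 + ((148682 : ℂ)/410557) * z ^ 5 + ((-94243 : ℂ)/821114) * z ^ 6 + ((-742843 : ℂ)/1642228) * z ^ 7 + ((-51411 : ℂ)/117302) * z ^ 8 + ((-33445 : ℂ)/117302) * z ^ 9 + ((-481569 : ℂ)/1642228) * z ^ 10 + ((-335795 : ℂ)/821114) * z ^ 11 + ((-169402 : ℂ)/410557) * z ^ 12 + ((-49187 : ℂ)/234604)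 * z ^ 13 + ((-1056795 : ℂ)/1642228) * z ^ 14 + ((-237091 : ℂ)/410557) * z ^ 15 + ((-190723 : ℂ)/821114) * z ^ 16 + ((-198255 : ℂ)/821114) * z ^ 17) * h1
  exact one_ne_zero h
lemma cert34 (z : ℂ)
    (hf : 2*z^18 + 2*z^16 + z^15 + 2*z^14 + z^13 + 2*z^12 + z^11 + 3*z^10 + 3*z^8 + z^7 + 2*z^6 + z^5 + 2*z^4 + z^3 + 2*z^2 + 2 = 0)
    (h1 : z ^ 34 = 1) : False := by
  have h : (1 : ℂ) = 0 := by
    linear_combination (((-1000721 : ℂ)/357728) + ((917881 : ℂ)/357728) * z + ((1246223 : ℂ)/357728) * z ^ 2 + ((-712615 : ℂ)/357728) * z ^ 3 + ((-1392273 : ℂ)/357728) * z ^ 4 + ((427769 : ℂ)/357728) * z ^ 5 + ((1491279 : ℂ)/357728) * z ^ 6 + ((-149255 : ℂ)/357728) * z ^ 7 + ((-1645841 : ℂ)/357728) * z ^ 8 + ((-149255 : ℂ)/357728) * z ^ 9 + ((1491279 : ℂ)/357728) * z ^ 10 + ((427769 : ℂ)/357728) * z ^ 11 + ((-1392273 :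 ℂ)/357728) * z ^ 12 + ((-712615 : ℂ)/357728) * z ^ 13 + ((1246223 : ℂ)/357728) * z ^ 14 + ((917881 : ℂ)/357728) * z ^ 15 + ((-1000721 : ℂ)/357728) * z ^ 16 + ((-1081767 : ℂ)/357728) * z ^ 17 + ((934639 : ℂ)/357728) * z ^ 18 + ((1321753 : ℂ)/357728) * z ^ 19 + ((-654417 : ℂ)/357728) * z ^ 20 + ((-1405671 : ℂ)/357728) * z ^ 21 + ((351567 : ℂ)/357728) * z ^ 22 + ((1434425 : ℂ)/357728) * z ^ 23 + ((-144593 : ℂ)/357728) * z ^ 24 + ((-1509831 : ℂ)/357728) * z ^ 25 + ((-144593 : ℂ)/357728) * z ^ 26 + ((1434425 : ℂ)/357728) * z ^ 27 + ((351567 : ℂ)/357728) * z ^ 28 + ((-1405671 : ℂ)/357728) * z ^ 29 + ((-654417 : ℂ)/357728) * z ^ 30 + ((1321753 : ℂ)/357728) * z ^ 31 + ((934639 : ℂ)/357728) * z ^ 32 + ((-1081767 : ℂ)/357728) * z ^ 33) * hf + (((-1179585 : ℂ)/178864) + ((917881 : ℂ)/178864) * z + ((122751 : ℂ)/89432) *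 z ^ 2 + ((-590189 : ℂ)/357728) * z ^ 3 + ((-196523 : ℂ)/51104) * z ^ 4 + ((377893 : ℂ)/89432) * z ^ 5 + ((447141 : ℂ)/178864) * z ^ 6 + ((-179211 : ℂ)/357728) * z ^ 7 + ((-26521 : ℂ)/3194) * z ^ 8 + ((13090 : ℂ)/1597) * z ^ 9 + ((191293 : ℂ)/357728) * z ^ 10 + ((-408851 : ℂ)/178864) * z ^ 11 + ((-375891 : ℂ)/89432) * z ^ 12 + ((199533 : ℂ)/51104) * z ^ 13 + ((521323 : ℂ)/357728) * z ^ 14 + ((-119993 : ℂ)/89432) * z ^ 15 + ((-934639 : ℂ)/178864) * z ^ 16 + ((1081767 : ℂ)/178864) * z ^ 17) * h1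
  exact one_ne_zero h
lemma cert35 (z : ℂ)
    (hf : 2*z^18 + 2*z^16 + z^15 + 2*z^14 + z^13 + 2*z^12 + z^11 + 3*z^10 + 3*z^8 + z^7 + 2*z^6 + z^5 + 2*z^4 + z^3 + 2*z^2 + 2 = 0)
    (h1 : z ^ 35 = 1) : False := by
  have h : (1 : ℂ) = 0 := by
    linear_combination (((-119199 : ℂ)/205604) + ((-58579 : ℂ)/205604) * z + ((-154619 : ℂ)/205604) * z ^ 2 + ((-136055 : ℂ)/205604) * z ^ 3 + ((-2691 : ℂ)/205604) * z ^ 4 + ((68877 : ℂ)/205604) * z ^ 5 + ((108245 : ℂ)/205604) * z ^ 6 + ((194597 : ℂ)/205604) * z ^ 7 + ((96261 : ℂ)/205604) * z ^ 8 + ((96261 : ℂ)/205604) * z ^ 9 + ((194597 : ℂ)/205604) * z ^ 10 + ((108245 : ℂ)/205604) * z ^ 11 + ((68877 : ℂ)/205604) * z ^ 12 + ((-2691 : ℂ)/205604) * z ^ 13 + ((-136055 : ℂ)/205604) * z ^ 14 + ((-154619 : ℂ)/205604) * z ^ 15 + ((-58579 : ℂ)/205604) * z ^ 16 + ((-119199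 : ℂ)/205604) * z ^ 17 + ((-181443 : ℂ)/205604) * z ^ 18 + ((-137119 : ℂ)/205604) * z ^ 19 + ((-107943 : ℂ)/205604) * z ^ 20 + ((17413 : ℂ)/205604) * z ^ 21 + ((58237 : ℂ)/205604) * z ^ 22 + ((1005 : ℂ)/205604) * z ^ 23 + ((73665 : ℂ)/205604) * z ^ 24 + ((184881 : ℂ)/205604) * z ^ 25 + ((196277 : ℂ)/205604) * z ^ 26 + ((184881 : ℂ)/205604) * z ^ 27 + ((73665 : ℂ)/205604) * z ^ 28 + ((1005 : ℂ)/205604) * z ^ 29 + ((58237 : ℂ)/205604) * z ^ 30 + ((17413 : ℂ)/205604) * z ^ 31 + ((-107943 : ℂ)/205604) * z ^ 32 + ((-137119 : ℂ)/205604) * z ^ 33 + ((-181443 : ℂ)/205604) * z ^ 34) * hf + (((-222001 : ℂ)/102802) + ((-58579 : ℂ)/102802) * z + ((-136909 : ℂ)/51401) * z ^ 2 + ((-508467 : ℂ)/205604) * z ^ 3 + ((-87371 : ℂ)/29372) * z ^ 4 + ((-131333 : ℂ)/51401) * z ^ 5 + ((-265581 : ℂ)/102802) * z ^ 6 + ((-138829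 : ℂ)/205604) * z ^ 7 + ((-3969 : ℂ)/2098) * z ^ 8 + ((2271 : ℂ)/2098) * z ^ 9 + ((98789 : ℂ)/205604) * z ^ 10 + ((217337 : ℂ)/102802) * z ^ 11 + ((131697 : ℂ)/51401) * z ^ 12 + ((12233 : ℂ)/4196) * z ^ 13 + ((420855 : ℂ)/205604) * z ^ 14 + ((144693 : ℂ)/51401) * z ^ 15 + ((137119 : ℂ)/102802) * z ^ 16 + ((181443 : ℂ)/102802) * z ^ 17) * h1
  exact one_ne_zero h
lemma cert36 (z : ℂ)
    (hf : 2*z^18 + 2*z^16 + z^15 + 2*z^14 + z^13 + 2*z^12 + z^11 + 3*z^10 + 3*z^8 + z^7 + 2*z^6 + z^5 + 2*z^4 + z^3 + 2*z^2 + 2 = 0)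
    (h1 : z ^ 36 = 1) : False := by
  have h : (1 : ℂ) = 0 := by
    linear_combination (((1763 : ℂ)/7616) + ((-218423 : ℂ)/281792) * z + ((26703 : ℂ)/281792) * z ^ 2 + ((-13463 : ℂ)/281792) * z ^ 3 + ((-10033 : ℂ)/281792) * z ^ 4 + ((15881 : ℂ)/281792) * z ^ 5 + ((61199 : ℂ)/281792) * z ^ 6 + ((-93207 : ℂ)/281792) * z ^ 7 + ((-65137 : ℂ)/281792) * z ^ 8 + ((306185 : ℂ)/281792) * z ^ 9 + ((-65137 : ℂ)/281792) * z ^ 10 + ((-93207 : ℂ)/281792) * z ^ 11 + ((61199 : ℂ)/281792) * z ^ 12 + ((15881 : ℂ)/281792) * z ^ 13 + ((-10033 : ℂ)/281792) * z ^ 14 + ((-13463 : ℂ)/281792) * z ^ 15 + ((26703 : ℂ)/281792) * z ^ 16 + ((-218423 : ℂ)/281792) * z ^ 17 + ((1763 : ℂ)/7616) * z ^ 18 + ((173801 : ℂ)/281792) * z ^ 19 + ((-95153 : ℂ)/281792) * z ^ 20 + ((-47735 : ℂ)/281792) * z ^ 21 + ((-25265 : ℂ)/281792) * z ^ 22 +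 ((-10775 : ℂ)/281792) * z ^ 23 + ((-30193 : ℂ)/281792) * z ^ 24 + ((131465 : ℂ)/281792) * z ^ 25 + ((79567 : ℂ)/281792) * z ^ 26 + ((-185047 : ℂ)/281792) * z ^ 27 + ((79567 : ℂ)/281792) * z ^ 28 + ((131465 : ℂ)/281792) * z ^ 29 + ((-30193 : ℂ)/281792) * z ^ 30 + ((-10775 : ℂ)/281792) * z ^ 31 + ((-25265 : ℂ)/281792) * z ^ 32 + ((-47735 : ℂ)/281792) * z ^ 33 + ((-95153 : ℂ)/281792) * z ^ 34 + ((173801 : ℂ)/281792) * z ^ 35) * hf + (((-2045 : ℂ)/3808) + ((-218423 : ℂ)/140896) * z + ((45967 : ℂ)/70448) * z ^ 2 + ((-398541 : ℂ)/281792) * z ^ 3 + ((-459 : ℂ)/2368) * z ^ 4 + ((-85019 : ℂ)/70448) * z ^ 5 + ((27157 : ℂ)/140896) * z ^ 6 + ((-536523 : ℂ)/281792) * z ^ 7 + ((23 : ℂ)/1258) * z ^ 8 + ((-77 : ℂ)/148) * z ^ 9 + ((26797 : ℂ)/281792) * z ^ 10 + ((-186547 : ℂ)/140896) * z ^ 11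 + ((43789 : ℂ)/70448) * z ^ 12 + ((-19347 : ℂ)/40256) * z ^ 13 + ((67035 : ℂ)/281792) * z ^ 14 + ((-63033 : ℂ)/70448) * z ^ 15 + ((95153 : ℂ)/140896) * z ^ 16 + ((-173801 : ℂ)/140896) * z ^ 17) * h1
  exact one_ne_zero h
lemma cert37 (z : ℂ)
    (hf : 2*z^18 + 2*z^16 + z^15 + 2*z^14 + z^13 + 2*z^12 + z^11 + 3*z^10 + 3*z^8 + z^7 + 2*z^6 + z^5 + 2*z^4 + z^3 + 2*z^2 + 2 = 0)
    (h1 : z ^ 37 = 1) : False := by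
  have h : (1 : ℂ) = 0 := by
    linear_combination (((13009735 : ℂ)/45956932) + ((3304767 : ℂ)/45956932) * z + ((-8734477 : ℂ)/45956932) * z ^ 2 + ((-7256945 : ℂ)/45956932) * z ^ 3 + ((-5337629 : ℂ)/45956932) * z ^ 4 + ((1297027 : ℂ)/45956932) * z ^ 5 + ((950639 : ℂ)/45956932) * z ^ 6 + ((63235 : ℂ)/45956932) * z ^ 7 + ((-4834161 : ℂ)/45956932) * z ^ 8 + ((11675871 : ℂ)/45956932) * z ^ 9 + ((11675871 : ℂ)/45956932) * z ^ 10 + ((-4834161 : ℂ)/45956932) * z ^ 11 + ((63235 : ℂ)/45956932) * z ^ 12 + ((950639 : ℂ)/45956932) * z ^ 13 + ((1297027 : ℂ)/45956932) * z ^ 14 + ((-5337629 : ℂ)/45956932) * z ^ 15 + ((-7256945 : ℂ)/45956932) * z ^ 16 + ((-8734477 : ℂ)/45956932) * z ^ 17 + ((3304767 : ℂ)/45956932) * z ^ 18 + ((13009735 : ℂ)/45956932) * z ^ 19 + ((3044787 : ℂ)/45956932) * z ^ 20 + ((-1460133 : ℂ)/45956932) * z ^ 21 + ((-6509009 : ℂ)/45956932)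 * z ^ 22 + ((-7435389 : ℂ)/45956932) * z ^ 23 + ((-4059989 : ℂ)/45956932) * z ^ 24 + ((2700023 : ℂ)/45956932) * z ^ 25 + ((7803975 : ℂ)/45956932) * z ^ 26 + ((4038339 : ℂ)/45956932) * z ^ 27 + ((-2880013 : ℂ)/45956932) * z ^ 28 + ((4038339 : ℂ)/45956932) * z ^ 29 + ((7803975 : ℂ)/45956932) * z ^ 30 + ((2700023 : ℂ)/45956932) * z ^ 31 + ((-4059989 : ℂ)/45956932) * z ^ 32 + ((-7435389 : ℂ)/45956932) * z ^ 33 + ((-6509009 : ℂ)/45956932) * z ^ 34 + ((-1460133 : ℂ)/45956932) * z ^ 35 + ((3044787 : ℂ)/45956932) * z ^ 36) * hf + (((-9968731 : ℂ)/22978466) + ((3304767 : ℂ)/22978466) * z + ((2137629 : ℂ)/11489233) * z ^ 2 + ((5105379 : ℂ)/45956932) * z ^ 3 + ((168575 : ℂ)/6565276) * z ^ 4 + ((-258761 : ℂ)/11489233) * z ^ 5 + ((-2087821 : ℂ)/22978466) * z ^ 6 + ((-6246203 : ℂ)/45956932) * z ^ 7 + ((33057 : ℂ)/3282638) * z ^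 8 + ((596515 : ℂ)/3282638) * z ^ 9 + ((11838531 : ℂ)/45956932) * z ^ 10 + ((4167997 : ℂ)/22978466) * z ^ 11 + ((3963805 : ℂ)/11489233) * z ^ 12 + ((2358365 : ℂ)/6565276) * z ^ 13 + ((14746257 : ℂ)/45956932) * z ^ 14 + ((1732111 : ℂ)/11489233) * z ^ 15 + ((1460133 : ℂ)/22978466) * z ^ 16 + ((-3044787 : ℂ)/22978466) * z ^ 17) * h1
  exact one_ne_zero h
lemma cert38 (z : ℂ)
    (hf : 2*z^18 + 2*z^16 + z^15 + 2*z^14 + z^13 + 2*z^12 + z^11 + 3*z^10 + 3*z^8 + z^7 + 2*z^6 + z^5 + 2*z^4 + z^3 + 2*z^2 + 2 = 0)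
    (h1 : z ^ 38 = 1) : False := by
  have h : (1 : ℂ) = 0 := by
    linear_combination (((32077 : ℂ)/8288) + ((35115 : ℂ)/8288) * z + ((18861 : ℂ)/8288) * z ^ 2 + ((-7445 : ℂ)/8288) * z ^ 3 + ((-23923 : ℂ)/8288) * z ^ 4 + ((-32085 : ℂ)/8288) * z ^ 5 + ((-27955 : ℂ)/8288) * z ^ 6 + ((-10133 : ℂ)/8288) * z ^ 7 + ((4525 : ℂ)/8288) * z ^ 8 + ((25483 : ℂ)/8288) * z ^ 9 + ((37229 : ℂ)/8288) * z ^ 10 + ((25483 : ℂ)/8288) * z ^ 11 + ((4525 : ℂ)/8288) * z ^ 12 + ((-10133 : ℂ)/8288) * z ^ 13 + ((-27955 : ℂ)/8288) * z ^ 14 + ((-32085 : ℂ)/8288) * z ^ 15 + ((-23923 : ℂ)/8288) * z ^ 16 + ((-7445 : ℂ)/8288) * z ^ 17 + ((18861 : ℂ)/8288) * z ^ 18 + ((35115 : ℂ)/8288) * z ^ 19 + ((32077 : ℂ)/8288) * z ^ 20 + ((15179 : ℂ)/8288) * z ^ 21 + ((45 : ℂ)/8288) * z ^ 22 + ((-24917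 : ℂ)/8288) * z ^ 23 + ((-33331 : ℂ)/8288) * z ^ 24 + ((-29173 : ℂ)/8288) * z ^ 25 + ((-13843 : ℂ)/8288) * z ^ 26 + ((12939 : ℂ)/8288) * z ^ 27 + ((25133 : ℂ)/8288) * z ^ 28 + ((29963 : ℂ)/8288) * z ^ 29 + ((25133 : ℂ)/8288) * z ^ 30 + ((12939 : ℂ)/8288) * z ^ 31 + ((-13843 : ℂ)/8288) * z ^ 32 + ((-29173 : ℂ)/8288) * z ^ 33 + ((-33331 : ℂ)/8288) * z ^ 34 + ((-24917 : ℂ)/8288) * z ^ 35 + ((45 : ℂ)/8288) * z ^ 36 + ((15179 : ℂ)/8288) * z ^ 37) * hf + (((27933 : ℂ)/4144) + ((35115 : ℂ)/4144) * z + ((25469 : ℂ)/2072) * z ^ 2 + ((87417 : ℂ)/8288) * z ^ 3 + ((12735 : ℂ)/1184) * z ^ 4 + ((10527 : ℂ)/2072) * z ^ 5 + ((12895 : ℂ)/4144) * z ^ 6 + ((-2081 : ℂ)/8288) * z ^ 7 + ((311 : ℂ)/74) * z ^ 8 + ((107 : ℂ)/37) * z ^ 9 + ((82903 : ℂ)/8288)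 * z ^ 10 + ((42615 : ℂ)/4144) * z ^ 11 + ((25999 : ℂ)/2072) * z ^ 12 + ((11111 : ℂ)/1184) * z ^ 13 + ((1389 : ℂ)/224) * z ^ 14 + ((4869 : ℂ)/2072) * z ^ 15 + ((-45 : ℂ)/4144) * z ^ 16 + ((-15179 : ℂ)/4144) * z ^ 17) * h1
  exact one_ne_zero h
lemma cert39 (z : ℂ)
    (hf : 2*z^18 + 2*z^16 + z^15 + 2*z^14 + z^13 + 2*z^12 + z^11 + 3*z^10 + 3*z^8 + z^7 + 2*z^6 + z^5 + 2*z^4 + z^3 + 2*z^2 + 2 = 0)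
    (h1 : z ^ 39 = 1) : False := by
  have h : (1 : ℂ) = 0 := by
    linear_combination (((-192159 : ℂ)/2201444) + ((-623583 : ℂ)/2201444) * z + ((-1511379 : ℂ)/2201444) * z ^ 2 + ((62137 : ℂ)/2201444) * z ^ 3 + ((1833193 : ℂ)/2201444) * z ^ 4 + ((735789 : ℂ)/2201444) * z ^ 5 + ((-649091 : ℂ)/2201444) * z ^ 6 + ((-234299 : ℂ)/2201444) * z ^ 7 + ((-787747 : ℂ)/2201444) * z ^ 8 + ((-363575 : ℂ)/2201444) * z ^ 9 + ((968805 : ℂ)/2201444) * z ^ 10 + ((968805 : ℂ)/2201444) * z ^ 11 + ((-363575 : ℂ)/2201444) * z ^ 12 + ((-787747 : ℂ)/2201444) * z ^ 13 + ((-234299 : ℂ)/2201444) * z ^ 14 + ((-649091 : ℂ)/2201444) * z ^ 15 + ((735789 : ℂ)/2201444) * z ^ 16 + ((1833193 : ℂ)/2201444) * z ^ 17 + ((62137 : ℂ)/2201444) * z ^ 18 + ((-1511379 : ℂ)/2201444) * z ^ 19 + ((-623583 : ℂ)/2201444) * z ^ 20 + ((-192159 : ℂ)/2201444) * z ^ 21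 + ((-664519 : ℂ)/2201444) * z ^ 22 + ((922969 : ℂ)/2201444) * z ^ 23 + ((1331769 : ℂ)/2201444) * z ^ 24 + ((-151251 : ℂ)/2201444) * z ^ 25 + ((-199439 : ℂ)/2201444) * z ^ 26 + ((-321463 : ℂ)/2201444) * z ^ 27 + ((-1220319 : ℂ)/2201444) * z ^ 28 + ((224173 : ℂ)/2201444) * z ^ 29 + ((1758601 : ℂ)/2201444) * z ^ 30 + ((224173 : ℂ)/2201444) * z ^ 31 + ((-1220319 : ℂ)/2201444) * z ^ 32 + ((-321463 : ℂ)/2201444) * z ^ 33 + ((-199439 : ℂ)/2201444) * z ^ 34 + ((-151251 : ℂ)/2201444) * z ^ 35 + ((1331769 : ℂ)/2201444) * z ^ 36 + ((922969 : ℂ)/2201444) * z ^ 37 + ((-664519 : ℂ)/2201444) * z ^ 38) * hf + (((-1292881 : ℂ)/1100722) + ((-623583 : ℂ)/1100722) * z + ((-851769 : ℂ)/550361) * z ^ 2 + ((-1315051 : ℂ)/2201444) * z ^ 3 + ((-52039 : ℂ)/314492) * z ^ 4 + ((-338713 : ℂ)/550361) * z ^ 5 + ((-800159 : ℂ)/1100722)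 * z ^ 6 + ((9743 : ℂ)/2201444) * z ^ 7 + ((-188013 : ℂ)/157246) * z ^ 8 + ((-128423 : ℂ)/157246) * z ^ 9 + ((-1816667 : ℂ)/2201444) * z ^ 10 + ((366649 : ℂ)/1100722) * z ^ 11 + ((-391940 : ℂ)/550361) * z ^ 12 + ((-265513 : ℂ)/314492) * z ^ 13 + ((-878917 : ℂ)/2201444) * z ^ 14 + ((-333625 : ℂ)/550361) * z ^ 15 + ((-922969 : ℂ)/1100722) * z ^ 16 + ((664519 : ℂ)/1100722) * z ^ 17) * h1
  exact one_ne_zero h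
lemma cert40 (z : ℂ)
    (hf : 2*z^18 + 2*z^16 + z^15 + 2*z^14 + z^13 + 2*z^12 + z^11 + 3*z^10 + 3*z^8 + z^7 + 2*z^6 + z^5 + 2*z^4 + z^3 + 2*z^2 + 2 = 0)
    (h1 : z ^ 40 = 1) : False := by
  have h : (1 : ℂ) = 0 := by
    linear_combination (((-79689 : ℂ)/5269376) + ((201 : ℂ)/896) * z + ((-2002185 : ℂ)/5269376) * z ^ 2 + ((-191007 : ℂ)/5269376) * z ^ 3 + ((-1049737 : ℂ)/5269376) * z ^ 4 + ((1488513 : ℂ)/5269376) * z ^ 5 + ((1505335 : ℂ)/5269376) * z ^ 6 + ((-203167 : ℂ)/5269376) * z ^ 7 + ((-1145033 : ℂ)/5269376) * z ^ 8 + ((-1322239 : ℂ)/5269376) * z ^ 9 + ((1806711 : ℂ)/5269376) * z ^ 10 + ((-535967 : ℂ)/5269376) * z ^ 11 + ((1806711 : ℂ)/5269376) * z ^ 12 + ((-1322239 : ℂ)/5269376) * z ^ 13 + ((-1145033 : ℂ)/5269376) * z ^ 14 + ((-203167 : ℂ)/5269376) * z ^ 15 + ((1505335 : ℂ)/5269376)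 * z ^ 16 + ((1488513 : ℂ)/5269376) * z ^ 17 + ((-1049737 : ℂ)/5269376) * z ^ 18 + ((-191007 : ℂ)/5269376) * z ^ 19 + ((-2002185 : ℂ)/5269376) * z ^ 20 + ((201 : ℂ)/896) * z ^ 21 + ((-79689 : ℂ)/5269376) * z ^ 22 + ((-79519 : ℂ)/5269376) * z ^ 23 + ((-1032137 : ℂ)/5269376) * z ^ 24 + ((875649 : ℂ)/5269376) * z ^ 25 + ((1682167 : ℂ)/5269376) * z ^ 26 + ((-67359 : ℂ)/5269376) * z ^ 27 + ((-936841 : ℂ)/5269376) * z ^ 28 + ((-1582975 : ℂ)/5269376) * z ^ 29 + ((1380791 : ℂ)/5269376) * z ^ 30 + ((265441 : ℂ)/5269376) * z ^ 31 + ((1380791 : ℂ)/5269376) * z ^ 32 + ((-1582975 : ℂ)/5269376) * z ^ 33 + ((-936841 : ℂ)/5269376) * z ^ 34 + ((-67359 : ℂ)/5269376) * z ^ 35 + ((1682167 : ℂ)/5269376) * z ^ 36 + ((875649 : ℂ)/5269376) * z ^ 37 + ((-1032137 : ℂ)/5269376) * z ^ 38 + ((-79519 : ℂ)/5269376) * z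 ^ 39) * hf + (((-2714377 : ℂ)/2634688) + ((201 : ℂ)/448) * z + ((-177 : ℂ)/224) * z ^ 2 + ((1902459 : ℂ)/5269376) * z ^ 3 + ((-5081141 : ℂ)/5269376) * z ^ 4 + ((719325 : ℂ)/1317344) * z ^ 5 + ((-1130739 : ℂ)/2634688) * z ^ 6 + ((1421229 : ℂ)/5269376) * z ^ 7 + ((-7015 : ℂ)/11762) * z ^ 8 + ((96491 : ℂ)/329336) * z ^ 9 + ((-2916731 : ℂ)/5269376) * z ^ 10 + ((529189 : ℂ)/2634688) * z ^ 11 + ((-55627 : ℂ)/1317344) * z ^ 12 + ((-425405 : ℂ)/5269376) * z ^ 13 + ((-174363 : ℂ)/752768) * z ^ 14 + ((-398065 : ℂ)/1317344) * z ^ 15 + ((1032137 : ℂ)/2634688) * z ^ 16 + ((79519 : ℂ)/2634688) * z ^ 17) * h1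
  exact one_ne_zero h
lemma cert41 (z : ℂ)
    (hf : 2*z^18 + 2*z^16 + z^15 + 2*z^14 + z^13 + 2*z^12 + z^11 + 3*z^10 + 3*z^8 + z^7 + 2*z^6 + z^5 + 2*z^4 + z^3 + 2*z^2 + 2 = 0)
    (h1 : z ^ 41 = 1) : False := by
  have h : (1 : ℂ) = 0 := by
    linear_combination (((-5351837 : ℂ)/20202532) + ((618995 : ℂ)/20202532) * z + ((-6700373 : ℂ)/20202532) * z ^ 2 + ((-7767397 : ℂ)/20202532) * z ^ 3 + ((15149455 : ℂ)/20202532) * z ^ 4 + ((1031659 : ℂ)/20202532) * z ^ 5 + ((-10218433 : ℂ)/20202532) * z ^ 6 + ((5835731 : ℂ)/20202532) * z ^ 7 + ((-4850945 : ℂ)/20202532) * z ^ 8 + ((2431211 : ℂ)/20202532) * z ^ 9 + ((10951219 : ℂ)/20202532) * z ^ 10 + ((-9285305 : ℂ)/20202532) * z ^ 11 + ((-9285305 : ℂ)/20202532) * z ^ 12 + ((10951219 : ℂ)/20202532) * z ^ 13 + ((2431211 : ℂ)/20202532) * z ^ 14 + ((-4850945 : ℂ)/20202532) * z ^ 15 +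 ((5835731 : ℂ)/20202532) * z ^ 16 + ((-10218433 : ℂ)/20202532) * z ^ 17 + ((1031659 : ℂ)/20202532) * z ^ 18 + ((15149455 : ℂ)/20202532) * z ^ 19 + ((-7767397 : ℂ)/20202532) * z ^ 20 + ((-6700373 : ℂ)/20202532) * z ^ 21 + ((618995 : ℂ)/20202532) * z ^ 22 + ((-5351837 : ℂ)/20202532) * z ^ 23 + ((5955907 : ℂ)/20202532) * z ^ 24 + ((10583775 : ℂ)/20202532) * z ^ 25 + ((-8310877 : ℂ)/20202532) * z ^ 26 + ((-4068849 : ℂ)/20202532) * z ^ 27 + ((4700023 : ℂ)/20202532) * z ^ 28 + ((-4214561 : ℂ)/20202532) * z ^ 29 + ((7742671 : ℂ)/20202532) * z ^ 30 + ((4024131 : ℂ)/20202532) * z ^ 31 + ((-15790881 : ℂ)/20202532) * z ^ 32 + ((4024131 : ℂ)/20202532) * z ^ 33 + ((7742671 : ℂ)/20202532) * z ^ 34 + ((-4214561 : ℂ)/20202532) * z ^ 35 + ((4700023 : ℂ)/20202532) * z ^ 36 + ((-4068849 : ℂ)/20202532) * z ^ 37 + ((-8310877 : ℂ)/20202532)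 * z ^ 38 + ((10583775 : ℂ)/20202532) * z ^ 39 + ((5955907 : ℂ)/20202532) * z ^ 40) * hf + (((-15453103 : ℂ)/10101266) + ((618995 : ℂ)/10101266) * z + ((-6026105 : ℂ)/5050633) * z ^ 2 + ((-19648641 : ℂ)/20202532) * z ^ 3 + ((973355 : ℂ)/2886076) * z ^ 4 + ((-6071424 : ℂ)/5050633) * z ^ 5 + ((-10695389 : ℂ)/10101266) * z ^ 6 + ((2535221 : ℂ)/20202532) * z ^ 7 + ((-2529489 : ℂ)/1443038) * z ^ 8 + ((225003 : ℂ)/1443038) * z ^ 9 + ((-14994045 : ℂ)/20202532) * z ^ 10 + ((-13345187 : ℂ)/10101266) * z ^ 11 + ((-561440 : ℂ)/5050633) * z ^ 12 + ((-2181983 : ℂ)/2886076) * z ^ 13 + ((-18985759 : ℂ)/20202532) * z ^ 14 + ((1177485 : ℂ)/5050633) * z ^ 15 + ((-10583775 : ℂ)/10101266) * z ^ 16 + ((-5955907 : ℂ)/10101266) * z ^ 17) * h1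
  exact one_ne_zero h
lemma cert42 (z : ℂ)
    (hf : 2*z^18 + 2*z^16 + z^15 + 2*z^14 + z^13 + 2*z^12 + z^11 + 3*z^10 + 3*z^8 + z^7 + 2*z^6 + z^5 + 2*z^4 + z^3 + 2*z^2 + 2 = 0)
    (h1 : z ^ 42 = 1) : False := by
  have h : (1 : ℂ) = 0 := by
    linear_combination (((1863087 : ℂ)/17020640) + ((2298137 : ℂ)/17020640) * z + ((-5024913 : ℂ)/17020640) * z ^ 2 + ((-2158343 : ℂ)/17020640) * z ^ 3 + ((-222801 : ℂ)/17020640) * z ^ 4 + ((2660569 : ℂ)/17020640) * z ^ 5 + ((1448687 : ℂ)/17020640) * z ^ 6 + ((63513 : ℂ)/17020640) * z ^ 7 + ((-3618417 : ℂ)/17020640) * z ^ 8 + ((-1051 : ℂ)/3404128) * z ^ 9 + ((1114595 : ℂ)/3404128) * z ^ 10 + ((-1508071 : ℂ)/17020640) * z ^ 11 + ((-3171313 : ℂ)/17020640) * z ^ 12 + ((-1508071 : ℂ)/17020640) * z ^ 13 + ((1114595 : ℂ)/3404128) * z ^ 14 + ((-1051 : ℂ)/3404128) * z ^ 15 + ((-3618417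 : ℂ)/17020640) * z ^ 16 + ((63513 : ℂ)/17020640) * z ^ 17 + ((1448687 : ℂ)/17020640) * z ^ 18 + ((2660569 : ℂ)/17020640) * z ^ 19 + ((-222801 : ℂ)/17020640) * z ^ 20 + ((-2158343 : ℂ)/17020640) * z ^ 21 + ((-5024913 : ℂ)/17020640) * z ^ 22 + ((2298137 : ℂ)/17020640) * z ^ 23 + ((1863087 : ℂ)/17020640) * z ^ 24 + ((-2017671 : ℂ)/17020640) * z ^ 25 + ((2393519 : ℂ)/17020640) * z ^ 26 + ((3119097 : ℂ)/17020640) * z ^ 27 + ((-3762897 : ℂ)/17020640) * z ^ 28 + ((-2512487 : ℂ)/17020640) * z ^ 29 + ((817347 : ℂ)/3404128) * z ^ 30 + ((188005 : ℂ)/3404128) * z ^ 31 + ((-732401 : ℂ)/17020640) * z ^ 32 + ((-1986983 : ℂ)/17020640) * z ^ 33 + ((-732401 : ℂ)/17020640) * z ^ 34 + ((188005 : ℂ)/3404128) * z ^ 35 + ((817347 : ℂ)/3404128) * z ^ 36 + ((-2512487 : ℂ)/17020640) * z ^ 37 + ((-3762897 : ℂ)/17020640) * z ^ 38 + ((3119097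 : ℂ)/17020640) * z ^ 39 + ((2393519 : ℂ)/17020640) * z ^ 40 + ((-2017671 : ℂ)/17020640) * z ^ 41) * hf + (((-6647233 : ℂ)/8510320) + ((2298137 : ℂ)/8510320) * z + ((-1580913 : ℂ)/4255160) * z ^ 2 + ((428535 : ℂ)/3404128) * z ^ 3 + ((-638731 : ℂ)/2431520) * z ^ 4 + ((121945 : ℂ)/851032) * z ^ 5 + ((-1866043 : ℂ)/8510320) * z ^ 6 + ((468625 : ℂ)/3404128) * z ^ 7 + ((-8221 : ℂ)/21710) * z ^ 8 + ((2689 : ℂ)/10855) * z ^ 9 + ((-2558851 : ℂ)/17020640) * z ^ 10 + ((231145 : ℂ)/1702064) * z ^ 11 + ((-25139 : ℂ)/65464) * z ^ 12 + ((8747 : ℂ)/347360) * z ^ 13 + ((365879 : ℂ)/1309280) * z ^ 14 + ((-550713 : ℂ)/4255160) * z ^ 15 + ((-2393519 : ℂ)/8510320) * z ^ 16 + ((2017671 : ℂ)/8510320) * z ^ 17) * h1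
  exact one_ne_zero h
lemma cert43 (z : ℂ)
    (hf : 2*z^18 + 2*z^16 + z^15 + 2*z^14 + z^13 + 2*z^12 + z^11 + 3*z^10 + 3*z^8 + z^7 + 2*z^6 + z^5 + 2*z^4 + z^3 + 2*z^2 + 2 = 0)
    (h1 : z ^ 43 = 1) : False := by
  have h : (1 : ℂ) = 0 := by
    linear_combination (((35773921 : ℂ)/89153764) + ((609365 : ℂ)/89153764) * z + ((-49678243 : ℂ)/89153764) * z ^ 2 + ((20210653 : ℂ)/89153764) * z ^ 3 + ((-18799115 : ℂ)/89153764) * z ^ 4 + ((23172605 : ℂ)/89153764) * z ^ 5 + ((-6345583 : ℂ)/89153764) * z ^ 6 + ((-9667671 : ℂ)/89153764) * z ^ 7 + ((17513301 : ℂ)/89153764) * z ^ 8 + ((-10946403 : ℂ)/89153764) * z ^ 9 + ((18739113 : ℂ)/89153764) * z ^ 10 + ((-35160803 : ℂ)/89153764) * z ^ 11 + ((21198885 : ℂ)/89153764) * z ^ 12 + ((21198885 : ℂ)/89153764) * z ^ 13 + ((-35160803 : ℂ)/89153764) * z ^ 14 + ((18739113 : ℂ)/89153764) * z ^ 15 +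 ((-10946403 : ℂ)/89153764) * z ^ 16 + ((17513301 : ℂ)/89153764) * z ^ 17 + ((-9667671 : ℂ)/89153764) * z ^ 18 + ((-6345583 : ℂ)/89153764) * z ^ 19 + ((23172605 : ℂ)/89153764) * z ^ 20 + ((-18799115 : ℂ)/89153764) * z ^ 21 + ((20210653 : ℂ)/89153764) * z ^ 22 + ((-49678243 : ℂ)/89153764) * z ^ 23 + ((609365 : ℂ)/89153764) * z ^ 24 + ((35773921 : ℂ)/89153764) * z ^ 25 + ((-339135 : ℂ)/89153764) * z ^ 26 + ((12578917 : ℂ)/89153764) * z ^ 27 + ((-46943007 : ℂ)/89153764) * z ^ 28 + ((34398953 : ℂ)/89153764) * z ^ 29 + ((1883169 : ℂ)/89153764) * z ^ 30 + ((-9084347 : ℂ)/89153764) * z ^ 31 + ((9211021 : ℂ)/89153764) * z ^ 32 + ((-22303063 : ℂ)/89153764) * z ^ 33 + ((31138997 : ℂ)/89153764) * z ^ 34 + ((-22303063 : ℂ)/89153764) * z ^ 35 + ((9211021 : ℂ)/89153764) * z ^ 36 + ((-9084347 : ℂ)/89153764) * z ^ 37 + ((1883169 : ℂ)/89153764) *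 z ^ 38 + ((34398953 : ℂ)/89153764) * z ^ 39 + ((-46943007 : ℂ)/89153764) * z ^ 40 + ((12578917 : ℂ)/89153764) * z ^ 41 + ((-339135 : ℂ)/89153764) * z ^ 42) * hf + (((-8802961 : ℂ)/44576882) + ((609365 : ℂ)/44576882) * z + ((-6952161 : ℂ)/22288441) * z ^ 2 + ((77413957 : ℂ)/89153764) * z ^ 3 + ((-9256787 : ℂ)/12736252) * z ^ 4 + ((18520231 : ℂ)/22288441) * z ^ 5 + ((-28639011 : ℂ)/44576882) * z ^ 6 + ((35946467 : ℂ)/89153764) * z ^ 7 + ((2621079 : ℂ)/6368126) * z ^ 8 + ((-1961177 : ℂ)/6368126) * z ^ 9 + ((14218053 : ℂ)/89153764) * z ^ 10 + ((12699017 : ℂ)/44576882) * z ^ 11 + ((-7126226 : ℂ)/22288441) * z ^ 12 + ((11174147 : ℂ)/12736252) * z ^ 13 + ((-93616605 : ℂ)/89153764) * z ^ 14 + ((23641071 : ℂ)/22288441) * z ^ 15 + ((-12578917 : ℂ)/44576882) * z ^ 16 + ((339135 : ℂ)/44576882) * z ^ 17) * h1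
  exact one_ne_zero h
lemma cert44 (z : ℂ)
    (hf : 2*z^18 + 2*z^16 + z^15 + 2*z^14 + z^13 + 2*z^12 + z^11 + 3*z^10 + 3*z^8 + z^7 + 2*z^6 + z^5 + 2*z^4 + z^3 + 2*z^2 + 2 = 0)
    (h1 : z ^ 44 = 1) : False := by
  have h : (1 : ℂ) = 0 := by
    linear_combination (((-1864321 : ℂ)/917056) + ((2131097 : ℂ)/917056) * z + ((-194177 : ℂ)/917056) * z ^ 2 + ((-2191431 : ℂ)/917056) * z ^ 3 + ((2051199 : ℂ)/917056) * z ^ 4 + ((-260775 : ℂ)/917056) * z ^ 5 + ((-1716033 : ℂ)/917056) * z ^ 6 + ((2374137 : ℂ)/917056) * z ^ 7 + ((-753281 : ℂ)/917056) * z ^ 8 + ((-1552359 : ℂ)/917056) * z ^ 9 + ((2391679 : ℂ)/917056) * z ^ 10 + ((-1089799 : ℂ)/917056) * z ^ 11 + ((-1226369 : ℂ)/917056) * z ^ 12 + ((2417817 : ℂ)/917056) * z ^ 13 + ((-1226369 : ℂ)/917056) * z ^ 14 + ((-1089799 : ℂ)/917056) * z ^ 15 + ((2391679 : ℂ)/917056)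 * z ^ 16 + ((-1552359 : ℂ)/917056) * z ^ 17 + ((-753281 : ℂ)/917056) * z ^ 18 + ((2374137 : ℂ)/917056) * z ^ 19 + ((-1716033 : ℂ)/917056) * z ^ 20 + ((-260775 : ℂ)/917056) * z ^ 21 + ((2051199 : ℂ)/917056) * z ^ 22 + ((-2191431 : ℂ)/917056) * z ^ 23 + ((-194177 : ℂ)/917056) * z ^ 24 + ((2131097 : ℂ)/917056) * z ^ 25 + ((-1864321 : ℂ)/917056) * z ^ 26 + ((362617 : ℂ)/917056) * z ^ 27 + ((1653375 : ℂ)/917056) * z ^ 28 + ((-2360551 : ℂ)/917056) * z ^ 29 + ((699583 : ℂ)/917056) * z ^ 30 + ((1636729 : ℂ)/917056) * z ^ 31 + ((-2317249 : ℂ)/917056) * z ^ 32 + ((945241 : ℂ)/917056) * z ^ 33 + ((1298111 : ℂ)/917056) * z ^ 34 + ((-2419911 : ℂ)/917056) * z ^ 35 + ((1298111 : ℂ)/917056) * z ^ 36 + ((945241 : ℂ)/917056) * z ^ 37 + ((-2317249 : ℂ)/917056) * z ^ 38 + ((1636729 : ℂ)/917056) * z ^ 39 + ((699583 : ℂ)/917056)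 * z ^ 40 + ((-2360551 : ℂ)/917056) * z ^ 41 + ((1653375 : ℂ)/917056) * z ^ 42 + ((362617 : ℂ)/917056) * z ^ 43) * hf + (((-2322849 : ℂ)/458528) + ((2131097 : ℂ)/458528) * z + ((-1029249 : ℂ)/229264) * z ^ 2 + ((-1984989 : ℂ)/917056) * z ^ 3 + ((302357 : ℂ)/131008) * z ^ 4 + ((-675179 : ℂ)/229264) * z ^ 5 + ((-1753499 : ℂ)/458528) * z ^ 6 + ((4098757 : ℂ)/917056) * z ^ 7 + ((-31869 : ℂ)/4094) * z ^ 8 + ((29227 : ℂ)/8188) * z ^ 9 + ((-25915 : ℂ)/10304) * z ^ 10 + ((-1760515 : ℂ)/458528) * z ^ 11 + ((481629 : ℂ)/229264) * z ^ 12 + ((-132995 : ℂ)/131008) * z ^ 13 + ((-220371 : ℂ)/39872) * z ^ 14 + ((998967 : ℂ)/229264) * z ^ 15 + ((-1653375 : ℂ)/458528) * z ^ 16 + ((-362617 : ℂ)/458528) * z ^ 17) * h1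
  exact one_ne_zero h
lemma cert45 (z : ℂ)
    (hf : 2*z^18 + 2*z^16 + z^15 + 2*z^14 + z^13 + 2*z^12 + z^11 + 3*z^10 + 3*z^8 + z^7 + 2*z^6 + z^5 + 2*z^4 + z^3 + 2*z^2 + 2 = 0)
    (h1 : z ^ 45 = 1) : False := by
  have h : (1 : ℂ) = 0 := by
    linear_combination (((60078617 : ℂ)/69092492) + ((59090721 : ℂ)/69092492) * z + ((590881 : ℂ)/69092492) * z ^ 2 + ((-45063735 : ℂ)/69092492) * z ^ 3 + ((-57246731 : ℂ)/69092492) * z ^ 4 + ((-14039203 : ℂ)/69092492) * z ^ 5 + ((32456813 : ℂ)/69092492) * z ^ 6 + ((51974353 : ℂ)/69092492) * z ^ 7 + ((11194929 : ℂ)/69092492) * z ^ 8 + ((-18529815 : ℂ)/69092492) * z ^ 9 + ((-30223511 : ℂ)/69092492) * z ^ 10 + ((-26197475 : ℂ)/69092492) * z ^ 11 + ((4895573 : ℂ)/69092492) * z ^ 12 + ((31140169 : ℂ)/69092492) * z ^ 13 + ((31140169 : ℂ)/69092492) * z ^ 14 + ((4895573 : ℂ)/69092492) * z ^ 15 + ((-26197475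 : ℂ)/69092492) * z ^ 16 + ((-30223511 : ℂ)/69092492) * z ^ 17 + ((-18529815 : ℂ)/69092492) * z ^ 18 + ((11194929 : ℂ)/69092492) * z ^ 19 + ((51974353 : ℂ)/69092492) * z ^ 20 + ((32456813 : ℂ)/69092492) * z ^ 21 + ((-14039203 : ℂ)/69092492) * z ^ 22 + ((-57246731 : ℂ)/69092492) * z ^ 23 + ((-45063735 : ℂ)/69092492) * z ^ 24 + ((590881 : ℂ)/69092492) * z ^ 25 + ((59090721 : ℂ)/69092492) * z ^ 26 + ((60078617 : ℂ)/69092492) * z ^ 27 + ((-20575943 : ℂ)/69092492) * z ^ 28 + ((-41715467 : ℂ)/69092492) * z ^ 29 + ((-36307099 : ℂ)/69092492) * z ^ 30 + ((874633 : ℂ)/69092492) * z ^ 31 + ((31868365 : ℂ)/69092492) * z ^ 32 + ((36615681 : ℂ)/69092492) * z ^ 33 + ((7944941 : ℂ)/69092492) * z ^ 34 + ((-26888963 : ℂ)/69092492) * z ^ 35 + ((-21407879 : ℂ)/69092492) * z ^ 36 + ((-26888963 : ℂ)/69092492) * z ^ 37 + ((7944941 : ℂ)/69092492) * z ^ 38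 + ((36615681 : ℂ)/69092492) * z ^ 39 + ((31868365 : ℂ)/69092492) * z ^ 40 + ((874633 : ℂ)/69092492) * z ^ 41 + ((-36307099 : ℂ)/69092492) * z ^ 42 + ((-41715467 : ℂ)/69092492) * z ^ 43 + ((-20575943 : ℂ)/69092492) * z ^ 44) * hf + (((25532371 : ℂ)/34546246) + ((59090721 : ℂ)/34546246) * z + ((30334749 : ℂ)/17273123) * z ^ 2 + ((88132589 : ℂ)/69092492) * z ^ 3 + ((9419465 : ℂ)/9870356) * z ^ 4 + ((15161266 : ℂ)/17273123) * z ^ 5 + ((42893073 : ℂ)/34546246) * z ^ 6 + ((107347039 : ℂ)/69092492) * z ^ 7 + ((11015387 : ℂ)/4935178) * z ^ 8 + ((7268309 : ℂ)/4935178) * z ^ 9 + ((87242909 : ℂ)/69092492) * z ^ 10 + ((37490153 : ℂ)/34546246) * z ^ 11 + ((16333337 : ℂ)/17273123) * z ^ 12 + ((13106403 : ℂ)/9870356) * z ^ 13 + ((102257611 : ℂ)/69092492) * z ^ 14 + ((28441521 : ℂ)/17273123) * z ^ 15 + ((41715467 : ℂ)/34546246) * z ^ 16 + ((20575943 : ℂ)/34546246)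 * z ^ 17) * h1
  exact one_ne_zero h
lemma cert46 (z : ℂ)
    (hf : 2*z^18 + 2*z^16 + z^15 + 2*z^14 + z^13 + 2*z^12 + z^11 + 3*z^10 + 3*z^8 + z^7 + 2*z^6 + z^5 + 2*z^4 + z^3 + 2*z^2 + 2 = 0)
    (h1 : z ^ 46 = 1) : False := by
  have h : (1 : ℂ) = 0 := by
    linear_combination (((142847 : ℂ)/2916256) + ((-1322071 : ℂ)/2916256) * z + ((-676321 : ℂ)/2916256) * z ^ 2 + ((467689 : ℂ)/2916256) * z ^ 3 + ((698367 : ℂ)/2916256) * z ^ 4 + ((418185 : ℂ)/2916256) * z ^ 5 + ((-587393 : ℂ)/2916256) * z ^ 6 + ((-1294743 : ℂ)/2916256) * z ^ 7 + ((-623233 : ℂ)/2916256) * z ^ 8 + ((1812809 : ℂ)/2916256) * z ^ 9 + ((1001439 : ℂ)/2916256) * z ^ 10 + ((-933431 : ℂ)/2916256) * z ^ 11 + ((-436193 : ℂ)/2916256) * z ^ 12 + ((17449 : ℂ)/2916256) * z ^ 13 + ((379839 : ℂ)/2916256) * z ^ 14 + ((17449 : ℂ)/2916256) * z ^ 15 +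 ((-436193 : ℂ)/2916256) * z ^ 16 + ((-933431 : ℂ)/2916256) * z ^ 17 + ((1001439 : ℂ)/2916256) * z ^ 18 + ((1812809 : ℂ)/2916256) * z ^ 19 + ((-623233 : ℂ)/2916256) * z ^ 20 + ((-1294743 : ℂ)/2916256) * z ^ 21 + ((-587393 : ℂ)/2916256) * z ^ 22 + ((418185 : ℂ)/2916256) * z ^ 23 + ((698367 : ℂ)/2916256) * z ^ 24 + ((467689 : ℂ)/2916256) * z ^ 25 + ((-676321 : ℂ)/2916256) * z ^ 26 + ((-1322071 : ℂ)/2916256) * z ^ 27 + ((142847 : ℂ)/2916256) * z ^ 28 + ((1301193 : ℂ)/2916256) * z ^ 29 + ((911839 : ℂ)/2916256) * z ^ 30 + ((-99703 : ℂ)/2916256) * z ^ 31 + ((-882401 : ℂ)/2916256) * z ^ 32 + ((-894903 : ℂ)/2916256) * z ^ 33 + ((32191 : ℂ)/2916256) * z ^ 34 + ((1142153 : ℂ)/2916256) * z ^ 35 + ((300543 : ℂ)/2916256) * z ^ 36 + ((-1268311 : ℂ)/2916256) * z ^ 37 + ((300543 : ℂ)/2916256) * z ^ 38 + ((1142153 :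 ℂ)/2916256) * z ^ 39 + ((32191 : ℂ)/2916256) * z ^ 40 + ((-894903 : ℂ)/2916256) * z ^ 41 + ((-882401 : ℂ)/2916256) * z ^ 42 + ((-99703 : ℂ)/2916256) * z ^ 43 + ((911839 : ℂ)/2916256) * z ^ 44 + ((1301193 : ℂ)/2916256) * z ^ 45) * hf + (((-1315281 : ℂ)/1458128) + ((-1322071 : ℂ)/1458128) * z + ((-266737 : ℂ)/729064) * z ^ 2 + ((-1565917 : ℂ)/2916256) * z ^ 3 + ((-141755 : ℂ)/416608) * z ^ 4 + ((-351467 : ℂ)/729064) * z ^ 5 + ((-849691 : ℂ)/1458128) * z ^ 6 + ((-3296987 : ℂ)/2916256) * z ^ 7 + ((-21293 : ℂ)/26038) * z ^ 8 + ((-7695 : ℂ)/13019) * z ^ 9 + ((-1030931 : ℂ)/2916256) * z ^ 10 + ((-1463459 : ℂ)/1458128) * z ^ 11 + ((-331187 : ℂ)/729064) * z ^ 12 + ((-217859 : ℂ)/416608) * z ^ 13 + ((-1360069 : ℂ)/2916256) * z ^ 14 + ((-600745 : ℂ)/729064) * z ^ 15 + ((-911839 : ℂ)/1458128) * z ^ 16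 + ((-1301193 : ℂ)/1458128) * z ^ 17) * h1
  exact one_ne_zero h
lemma cert47 (z : ℂ)
    (hf : 2*z^18 + 2*z^16 + z^15 + 2*z^14 + z^13 + 2*z^12 + z^11 + 3*z^10 + 3*z^8 + z^7 + 2*z^6 + z^5 + 2*z^4 + z^3 + 2*z^2 + 2 = 0)
    (h1 : z ^ 47 = 1) : False := by
  have h : (1 : ℂ) = 0 := by
    linear_combination (((8694745 : ℂ)/6577396) + ((-4987791 : ℂ)/6577396) * z + ((-2623191 : ℂ)/6577396) * z ^ 2 + ((4036945 : ℂ)/6577396) * z ^ 3 + ((-2066523 : ℂ)/6577396) * z ^ 4 + ((-320611 : ℂ)/6577396) * z ^ 5 + ((-21347 : ℂ)/6577396) * z ^ 6 + ((-5109395 : ℂ)/6577396) * z ^ 7 + ((2108053 : ℂ)/6577396) * z ^ 8 + ((5622389 : ℂ)/6577396) * z ^ 9 + ((-4578347 : ℂ)/6577396) * z ^ 10 + ((1721625 : ℂ)/6577396) * z ^ 11 + ((4194473 : ℂ)/6577396) * z ^ 12 + ((-3584627 : ℂ)/6577396) * z ^ 13 + ((-654455 : ℂ)/6577396) * z ^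 14 + ((-654455 : ℂ)/6577396) * z ^ 15 + ((-3584627 : ℂ)/6577396) * z ^ 16 + ((4194473 : ℂ)/6577396) * z ^ 17 + ((1721625 : ℂ)/6577396) * z ^ 18 + ((-4578347 : ℂ)/6577396) * z ^ 19 + ((5622389 : ℂ)/6577396) * z ^ 20 + ((2108053 : ℂ)/6577396) * z ^ 21 + ((-5109395 : ℂ)/6577396) * z ^ 22 + ((-21347 : ℂ)/6577396) * z ^ 23 + ((-320611 : ℂ)/6577396) * z ^ 24 + ((-2066523 : ℂ)/6577396) * z ^ 25 + ((4036945 : ℂ)/6577396) * z ^ 26 + ((-2623191 : ℂ)/6577396) * z ^ 27 + ((-4987791 : ℂ)/6577396) * z ^ 28 + ((8694745 : ℂ)/6577396) * z ^ 29 + ((1699645 : ℂ)/6577396) * z ^ 30 + ((-3756099 : ℂ)/6577396) * z ^ 31 + ((1426673 : ℂ)/6577396) * z ^ 32 + ((-1745083 : ℂ)/6577396) * z ^ 33 + ((-2274927 : ℂ)/6577396) * z ^ 34 + ((2972721 : ℂ)/6577396) * z ^ 35 + ((-2946003 : ℂ)/6577396) * z ^ 36 + ((-1749871 : ℂ)/6577396)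 * z ^ 37 + ((8116909 : ℂ)/6577396) * z ^ 38 + ((-1749871 : ℂ)/6577396) * z ^ 39 + ((-2946003 : ℂ)/6577396) * z ^ 40 + ((2972721 : ℂ)/6577396) * z ^ 41 + ((-2274927 : ℂ)/6577396) * z ^ 42 + ((-1745083 : ℂ)/6577396) * z ^ 43 + ((1426673 : ℂ)/6577396) * z ^ 44 + ((-3756099 : ℂ)/6577396) * z ^ 45 + ((1699645 : ℂ)/6577396) * z ^ 46) * hf + (((5406047 : ℂ)/3288698) + ((-4987791 : ℂ)/3288698) * z + ((3035777 : ℂ)/1644349) * z ^ 2 + ((6793053 : ℂ)/6577396) * z ^ 3 + ((431753 : ℂ)/939628) * z ^ 4 + ((882160 : ℂ)/1644349) * z ^ 5 + ((3508261 : ℂ)/3288698) * z ^ 6 + ((-8756673 : ℂ)/6577396) * z ^ 7 + ((1400483 : ℂ)/469814) * z ^ 8 + ((-801127 : ℂ)/469814) * z ^ 9 + ((7705273 : ℂ)/6577396) * z ^ 10 + ((4845203 : ℂ)/3288698) * z ^ 11 + ((482651 : ℂ)/1644349) * z ^ 12 + ((293331 : ℂ)/939628) * z ^ 13 + ((9302719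 : ℂ)/6577396) * z ^ 14 + ((-1563159 : ℂ)/1644349) * z ^ 15 + ((3756099 : ℂ)/3288698) * z ^ 16 + ((-1699645 : ℂ)/3288698) * z ^ 17) * h1
  exact one_ne_zero h
lemma cert48 (z : ℂ)
    (hf : 2*z^18 + 2*z^16 + z^15 + 2*z^14 + z^13 + 2*z^12 + z^11 + 3*z^10 + 3*z^8 + z^7 + 2*z^6 + z^5 + 2*z^4 + z^3 + 2*z^2 + 2 = 0)
    (h1 : z ^ 48 = 1) : False := by
  have h : (1 : ℂ) = 0 := by
    linear_combination (((239607 : ℂ)/2836736) + ((-115529 : ℂ)/405248) * z + ((-858185 : ℂ)/2836736) * z ^ 2 + ((-401 : ℂ)/1792) * z ^ 3 + ((1038647 : ℂ)/2836736) * z ^ 4 + ((93367 : ℂ)/405248) * z ^ 5 + ((548727 : ℂ)/2836736) * z ^ 6 + ((379105 : ℂ)/2836736) * z ^ 7 + ((-916873 : ℂ)/2836736) * z ^ 8 + ((149505 : ℂ)/2836736) * z ^ 9 + ((-798409 : ℂ)/2836736) * z ^ 10 + ((-458655 : ℂ)/2836736) * z ^ 11 + ((-153929 : ℂ)/2836736)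 * z ^ 12 + ((70145 : ℂ)/2836736) * z ^ 13 + ((959991 : ℂ)/2836736) * z ^ 14 + ((-3625 : ℂ)/405248) * z ^ 15 + ((959991 : ℂ)/2836736) * z ^ 16 + ((70145 : ℂ)/2836736) * z ^ 17 + ((-153929 : ℂ)/2836736) * z ^ 18 + ((-458655 : ℂ)/2836736) * z ^ 19 + ((-798409 : ℂ)/2836736) * z ^ 20 + ((149505 : ℂ)/2836736) * z ^ 21 + ((-916873 : ℂ)/2836736) * z ^ 22 + ((379105 : ℂ)/2836736) * z ^ 23 + ((548727 : ℂ)/2836736) * z ^ 24 + ((93367 : ℂ)/405248) * z ^ 25 + ((1038647 : ℂ)/2836736) * z ^ 26 + ((-401 : ℂ)/1792) * z ^ 27 + ((-858185 : ℂ)/2836736) * z ^ 28 + ((-115529 : ℂ)/405248) * z ^ 29 + ((239607 : ℂ)/2836736) * z ^ 30 + ((-27679 : ℂ)/2836736) * z ^ 31 + ((-321033 : ℂ)/2836736) * z ^ 32 + ((911105 : ℂ)/2836736) * z ^ 33 + ((168375 : ℂ)/2836736) * z ^ 34 + ((810081 : ℂ)/2836736) * z ^ 35 + ((334391 : ℂ)/2836736)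 * z ^ 36 + ((-630527 : ℂ)/2836736) * z ^ 37 + ((-171657 : ℂ)/2836736) * z ^ 38 + ((-119849 : ℂ)/405248) * z ^ 39 + ((-171657 : ℂ)/2836736) * z ^ 40 + ((-630527 : ℂ)/2836736) * z ^ 41 + ((334391 : ℂ)/2836736) * z ^ 42 + ((810081 : ℂ)/2836736) * z ^ 43 + ((168375 : ℂ)/2836736) * z ^ 44 + ((911105 : ℂ)/2836736) * z ^ 45 + ((-321033 : ℂ)/2836736) * z ^ 46 + ((-27679 : ℂ)/2836736) * z ^ 47) * hf + (((-1178761 : ℂ)/1418368) + ((-115529 : ℂ)/202624) * z + ((-309289 : ℂ)/709184) * z ^ 2 + ((-378195 : ℂ)/405248) * z ^ 3 + ((31435 : ℂ)/2836736) * z ^ 4 + ((-549603 : ℂ)/709184) * z ^ 5 + ((247053 : ℂ)/1418368) * z ^ 6 + ((-57365 : ℂ)/405248) * z ^ 7 + ((-1744 : ℂ)/11081) * z ^ 8 + ((-37633 : ℂ)/177296) * z ^ 9 + ((-1713659 : ℂ)/2836736) * z ^ 10 + ((-986651 : ℂ)/1418368) * z ^ 11 + ((-311723 : ℂ)/709184)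 * z ^ 12 + ((-3065981 : ℂ)/2836736) * z ^ 13 + ((332995 : ℂ)/2836736) * z ^ 14 + ((-441713 : ℂ)/709184) * z ^ 15 + ((321033 : ℂ)/1418368) * z ^ 16 + ((27679 : ℂ)/1418368) * z ^ 17) * h1
  exact one_ne_zero h
lemma cert49 (z : ℂ)
    (hf : 2*z^18 + 2*z^16 + z^15 + 2*z^14 + z^13 + 2*z^12 + z^11 + 3*z^10 + 3*z^8 + z^7 + 2*z^6 + z^5 + 2*z^4 + z^3 + 2*z^2 + 2 = 0)
    (h1 : z ^ 49 = 1) : False := by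
  have h : (1 : ℂ) = 0 := by
    linear_combination (((-15813839 : ℂ)/4303964) + ((14409277 : ℂ)/4303964) * z + ((-14726319 : ℂ)/4303964) * z ^ 2 + ((13531085 : ℂ)/4303964) * z ^ 3 + ((-11784303 : ℂ)/4303964) * z ^ 4 + ((5262265 : ℂ)/4303964) * z ^ 5 + ((4778089 : ℂ)/4303964) * z ^ 6 + ((-9168067 : ℂ)/4303964) * z ^ 7 + ((9706453 : ℂ)/4303964) * z ^ 8 + ((-12047195 : ℂ)/4303964) * z ^ 9 + ((15634557 : ℂ)/4303964) * z ^ 10 + ((-19610779 : ℂ)/4303964) * z ^ 11 + ((18153577 : ℂ)/4303964) * z ^ 12 + ((-11881519 : ℂ)/4303964) * z ^ 13 + ((5114257 : ℂ)/4303964) * z ^ 14 + ((-611967 : ℂ)/4303964) * z ^ 15 + ((-611967 : ℂ)/4303964) * z ^ 16 + ((5114257 : ℂ)/4303964) * z ^ 17 + ((-11881519 : ℂ)/4303964) * z ^ 18 + ((18153577 : ℂ)/4303964) * z ^ 19 + ((-19610779 : ℂ)/4303964) * z ^ 20 + ((15634557 : ℂ)/4303964) * z ^ 21 + ((-12047195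 : ℂ)/4303964) * z ^ 22 + ((9706453 : ℂ)/4303964) * z ^ 23 + ((-9168067 : ℂ)/4303964) * z ^ 24 + ((4778089 : ℂ)/4303964) * z ^ 25 + ((5262265 : ℂ)/4303964) * z ^ 26 + ((-11784303 : ℂ)/4303964) * z ^ 27 + ((13531085 : ℂ)/4303964) * z ^ 28 + ((-14726319 : ℂ)/4303964) * z ^ 29 + ((14409277 : ℂ)/4303964) * z ^ 30 + ((-15813839 : ℂ)/4303964) * z ^ 31 + ((17025345 : ℂ)/4303964) * z ^ 32 + ((-12524343 : ℂ)/4303964) * z ^ 33 + ((4459393 : ℂ)/4303964) * z ^ 34 + ((2895145 : ℂ)/4303964) * z ^ 35 + ((-4903779 : ℂ)/4303964) * z ^ 36 + ((6965785 : ℂ)/4303964) * z ^ 37 + ((-11556327 : ℂ)/4303964) * z ^ 38 + ((17035733 : ℂ)/4303964) * z ^ 39 + ((-20531335 : ℂ)/4303964) * z ^ 40 + ((17035733 : ℂ)/4303964) * z ^ 41 + ((-11556327 : ℂ)/4303964) * z ^ 42 + ((6965785 : ℂ)/4303964) * z ^ 43 + ((-4903779 : ℂ)/4303964) * z ^ 44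 + ((2895145 : ℂ)/4303964) * z ^ 45 + ((4459393 : ℂ)/4303964) * z ^ 46 + ((-12524343 : ℂ)/4303964) * z ^ 47 + ((17025345 : ℂ)/4303964) * z ^ 48) * hf + (((-17965821 : ℂ)/2151982) + ((14409277 : ℂ)/2151982) * z + ((-15270079 : ℂ)/1075991) * z ^ 2 + ((40066885 : ℂ)/4303964) * z ^ 3 + ((-10034235 : ℂ)/614852) * z ^ 4 + ((8966274 : ℂ)/1075991) * z ^ 5 + ((-23576191 : ℂ)/2151982) * z ^ 6 + ((5744659 : ℂ)/4303964) * z ^ 7 + ((-390725 : ℂ)/43918) * z ^ 8 + ((169913 : ℂ)/43918) * z ^ 9 + ((-45325599 : ℂ)/4303964) * z ^ 10 + ((-210033 : ℂ)/2151982) * z ^ 11 + ((-4039478 : ℂ)/1075991) * z ^ 12 + ((-421175 : ℂ)/87836) * z ^ 13 + ((2233051 : ℂ)/4303964) * z ^ 14 + ((-10742369 : ℂ)/1075991) * z ^ 15 + ((12524343 : ℂ)/2151982) * z ^ 16 + ((-17025345 : ℂ)/2151982) * z ^ 17) * h1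
  exact one_ne_zero h
lemma cert50 (z : ℂ)
    (hf : 2*z^18 + 2*z^16 + z^15 + 2*z^14 + z^13 + 2*z^12 + z^11 + 3*z^10 + 3*z^8 + z^7 + 2*z^6 + z^5 + 2*z^4 + z^3 + 2*z^2 + 2 = 0)
    (h1 : z ^ 50 = 1) : False := by
  have h : (1 : ℂ) = 0 := by
    linear_combination (((220372869 : ℂ)/394453024) + ((759923 : ℂ)/394453024) * z + ((-60376187 : ℂ)/394453024) * z ^ 2 + ((27809267 : ℂ)/394453024) * z ^ 3 + ((-237926203 : ℂ)/394453024) * z ^ 4 + ((94357427 : ℂ)/394453024) * z ^ 5 + ((212728869 : ℂ)/394453024) * z ^ 6 + ((-84758349 : ℂ)/394453024) * z ^ 7 + ((-79973499 : ℂ)/394453024) * z ^ 8 + ((3496307 : ℂ)/394453024) * z ^ 9 + ((-65493691 : ℂ)/394453024) * z ^ 10 + ((11379091 : ℂ)/394453024) * z ^ 11 + ((96010757 : ℂ)/394453024) * z ^ 12 + ((-121883437 : ℂ)/394453024) * z ^ 13 + ((27719653 : ℂ)/394453024) * z ^ 14 + ((108432019 : ℂ)/394453024) * z ^ 15 + ((-85716635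 : ℂ)/394453024) * z ^ 16 + ((108432019 : ℂ)/394453024) * z ^ 17 + ((27719653 : ℂ)/394453024) * z ^ 18 + ((-121883437 : ℂ)/394453024) * z ^ 19 + ((96010757 : ℂ)/394453024) * z ^ 20 + ((11379091 : ℂ)/394453024) * z ^ 21 + ((-65493691 : ℂ)/394453024) * z ^ 22 + ((3496307 : ℂ)/394453024) * z ^ 23 + ((-79973499 : ℂ)/394453024) * z ^ 24 + ((-84758349 : ℂ)/394453024) * z ^ 25 + ((212728869 : ℂ)/394453024) * z ^ 26 + ((94357427 : ℂ)/394453024) * z ^ 27 + ((-237926203 : ℂ)/394453024) * z ^ 28 + ((27809267 : ℂ)/394453024) * z ^ 29 + ((-60376187 : ℂ)/394453024) * z ^ 30 + ((759923 : ℂ)/394453024) * z ^ 31 + ((220372869 : ℂ)/394453024) * z ^ 32 + ((-93724845 : ℂ)/394453024) * z ^ 33 + ((-101682907 : ℂ)/394453024) * z ^ 34 + ((113026035 : ℂ)/394453024) * z ^ 35 + ((68738309 : ℂ)/394453024) * z ^ 36 + ((-74332493 : ℂ)/394453024) * z ^ 37 + ((80174629 : ℂ)/394453024) * z ^ 38 +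 ((-53425677 : ℂ)/394453024) * z ^ 39 + ((-107749051 : ℂ)/394453024) * z ^ 40 + ((132446611 : ℂ)/394453024) * z ^ 41 + ((-107749051 : ℂ)/394453024) * z ^ 42 + ((-53425677 : ℂ)/394453024) * z ^ 43 + ((80174629 : ℂ)/394453024) * z ^ 44 + ((-74332493 : ℂ)/394453024) * z ^ 45 + ((68738309 : ℂ)/394453024) * z ^ 46 + ((113026035 : ℂ)/394453024) * z ^ 47 + ((-101682907 : ℂ)/394453024) * z ^ 48 + ((-93724845 : ℂ)/394453024) * z ^ 49) * hf + (((23146357 : ℂ)/197226512) + ((759923 : ℂ)/197226512) * z + ((79998341 : ℂ)/98613256) * z ^ 2 + ((277511249 : ℂ)/394453024) * z ^ 3 + ((-22157017 : ℂ)/56350432) * z ^ 4 + ((101462479 : ℂ)/98613256) * z ^ 5 + ((149083943 : ℂ)/197226512) * z ^ 6 + ((-1592985 : ℂ)/394453024) * z ^ 7 + ((4044207 : ℂ)/3521902) * z ^ 8 + ((-6627 : ℂ)/1760951) * z ^ 9 + ((176069343 : ℂ)/394453024) * z ^ 10 + ((124929279 : ℂ)/197226512) * z ^ 11 + ((-28440313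 : ℂ)/98613256) * z ^ 12 + ((30249359 : ℂ)/56350432) * z ^ 13 + ((159614041 : ℂ)/394453024) * z ^ 14 + ((-9650595 : ℂ)/98613256) * z ^ 15 + ((101682907 : ℂ)/197226512) * z ^ 16 + ((93724845 : ℂ)/197226512) * z ^ 17) * h1
  exact one_ne_zero h
lemma cert51 (z : ℂ)
    (hf : 2*z^18 + 2*z^16 + z^15 + 2*z^14 + z^13 + 2*z^12 + z^11 + 3*z^10 + 3*z^8 + z^7 + 2*z^6 + z^5 + 2*z^4 + z^3 + 2*z^2 + 2 = 0)
    (h1 : z ^ 51 = 1) : False := by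
  have h : (1 : ℂ) = 0 := by
    linear_combination (((-11446915 : ℂ)/6486004) + ((9951581 : ℂ)/6486004) * z + ((12704849 : ℂ)/6486004) * z ^ 2 + ((-7253887 : ℂ)/6486004) * z ^ 3 + ((-15638151 : ℂ)/6486004) * z ^ 4 + ((4822541 : ℂ)/6486004) * z ^ 5 + ((16032313 : ℂ)/6486004) * z ^ 6 + ((-2290831 : ℂ)/6486004) * z ^ 7 + ((-17117699 : ℂ)/6486004) * z ^ 8 + ((215897 : ℂ)/6486004) * z ^ 9 + ((17450205 : ℂ)/6486004) * z ^ 10 + ((513089 : ℂ)/6486004) * z ^ 11 + ((-18275835 : ℂ)/6486004) * z ^ 12 + ((-6356207 : ℂ)/6486004) * z ^ 13 + ((19893485 : ℂ)/6486004) * z ^ 14 + ((11662745 : ℂ)/6486004) * z ^ 15 + ((-15979975 : ℂ)/6486004) * z ^ 16 + ((-15979975 : ℂ)/6486004) * z ^ 17 + ((11662745 : ℂ)/6486004) * z ^ 18 + ((19893485 : ℂ)/6486004) * z ^ 19 + ((-6356207 : ℂ)/6486004) * z ^ 20 + ((-18275835 : ℂ)/6486004) * z ^ 21 + ((513089 :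 ℂ)/6486004) * z ^ 22 + ((17450205 : ℂ)/6486004) * z ^ 23 + ((215897 : ℂ)/6486004) * z ^ 24 + ((-17117699 : ℂ)/6486004) * z ^ 25 + ((-2290831 : ℂ)/6486004) * z ^ 26 + ((16032313 : ℂ)/6486004) * z ^ 27 + ((4822541 : ℂ)/6486004) * z ^ 28 + ((-15638151 : ℂ)/6486004) * z ^ 29 + ((-7253887 : ℂ)/6486004) * z ^ 30 + ((12704849 : ℂ)/6486004) * z ^ 31 + ((9951581 : ℂ)/6486004) * z ^ 32 + ((-11446915 : ℂ)/6486004) * z ^ 33 + ((-10330919 : ℂ)/6486004) * z ^ 34 + ((11973909 : ℂ)/6486004) * z ^ 35 + ((13961909 : ℂ)/6486004) * z ^ 36 + ((-11175707 : ℂ)/6486004) * z ^ 37 + ((-16815831 : ℂ)/6486004) * z ^ 38 + ((8794593 : ℂ)/6486004) * z ^ 39 + ((19563729 : ℂ)/6486004) * z ^ 40 + ((-3252855 : ℂ)/6486004) * z ^ 41 + ((-22980423 : ℂ)/6486004) * z ^ 42 + ((-3252855 : ℂ)/6486004) * z ^ 43 + ((19563729 : ℂ)/6486004) * z ^ 44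 + ((8794593 : ℂ)/6486004) * z ^ 45 + ((-16815831 : ℂ)/6486004) * z ^ 46 + ((-11175707 : ℂ)/6486004) * z ^ 47 + ((13961909 : ℂ)/6486004) * z ^ 48 + ((11973909 : ℂ)/6486004) * z ^ 49 + ((-10330919 : ℂ)/6486004) * z ^ 50) * hf + (((-14689917 : ℂ)/3243002) + ((9951581 : ℂ)/3243002) * z + ((628967 : ℂ)/1621501) * z ^ 2 + ((-6051527 : ℂ)/6486004) * z ^ 3 + ((-2686979 : ℂ)/926572) * z ^ 4 + ((4074601 : ℂ)/1621501) * z ^ 5 + ((3000943 : ℂ)/3243002) * z ^ 6 + ((-3921409 : ℂ)/6486004) * z ^ 7 + ((-2489849 : ℂ)/463286) * z ^ 8 + ((2424371 : ℂ)/463286) * z ^ 9 + ((504961 : ℂ)/6486004) * z ^ 10 + ((-6777989 : ℂ)/3243002) * z ^ 11 + ((-5704145 : ℂ)/1621501) * z ^ 12 + ((2056539 : ℂ)/926572) * z ^ 13 + ((8734515 : ℂ)/6486004) * z ^ 14 + ((-1815495 : ℂ)/1621501) * z ^ 15 + ((-11973909 : ℂ)/3243002) * z ^ 16 + ((10330919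 : ℂ)/3243002) * z ^ 17) * h1
  exact one_ne_zero h
lemma cert52 (z : ℂ)
    (hf : 2*z^18 + 2*z^16 + z^15 + 2*z^14 + z^13 + 2*z^12 + z^11 + 3*z^10 + 3*z^8 + z^7 + 2*z^6 + z^5 + 2*z^4 + z^3 + 2*z^2 + 2 = 0)
    (h1 : z ^ 52 = 1) : False := by
  have h : (1 : ℂ) = 0 := by
    linear_combination (((9637773 : ℂ)/34475840) + ((1411387 : ℂ)/34475840) * z + ((-14626803 : ℂ)/34475840) * z ^ 2 + ((4966939 : ℂ)/34475840) * z ^ 3 + ((311 : ℂ)/448) * z ^ 4 + ((4544699 : ℂ)/34475840) * z ^ 5 + ((-20249203 : ℂ)/34475840) * z ^ 6 + ((-12585253 : ℂ)/34475840) * z ^ 7 + ((-16933107 : ℂ)/34475840) * z ^ 8 + ((-9130949 : ℂ)/34475840) * z ^ 9 + ((10109517 : ℂ)/34475840) * z ^ 10 + ((2179483 : ℂ)/34475840) * z ^ 11 + ((-9918771 : ℂ)/34475840) * z ^ 12 + ((-4970373 : ℂ)/34475840) * z ^ 13 + ((664333 : ℂ)/34475840) * z ^ 14 + ((-2576037 :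 ℂ)/34475840) * z ^ 15 + ((12507661 : ℂ)/34475840) * z ^ 16 + ((5441983 : ℂ)/6895168) * z ^ 17 + ((12507661 : ℂ)/34475840) * z ^ 18 + ((-2576037 : ℂ)/34475840) * z ^ 19 + ((664333 : ℂ)/34475840) * z ^ 20 + ((-4970373 : ℂ)/34475840) * z ^ 21 + ((-9918771 : ℂ)/34475840) * z ^ 22 + ((2179483 : ℂ)/34475840) * z ^ 23 + ((10109517 : ℂ)/34475840) * z ^ 24 + ((-9130949 : ℂ)/34475840) * z ^ 25 + ((-16933107 : ℂ)/34475840) * z ^ 26 + ((-12585253 : ℂ)/34475840) * z ^ 27 + ((-20249203 : ℂ)/34475840) * z ^ 28 + ((4544699 : ℂ)/34475840) * z ^ 29 + ((311 : ℂ)/448) * z ^ 30 + ((4966939 : ℂ)/34475840) * z ^ 31 + ((-14626803 : ℂ)/34475840) * z ^ 32 + ((1411387 : ℂ)/34475840) * z ^ 33 + ((9637773 : ℂ)/34475840) * z ^ 34 + ((4852251 : ℂ)/34475840) * z ^ 35 + ((23966157 : ℂ)/34475840) * z ^ 36 + ((14227323 : ℂ)/34475840) * z ^ 37 + ((-4271731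 : ℂ)/34475840) * z ^ 38 + ((-6203493 : ℂ)/34475840) * z ^ 39 + ((-7959667 : ℂ)/34475840) * z ^ 40 + ((-15492997 : ℂ)/34475840) * z ^ 41 + ((-6012659 : ℂ)/34475840) * z ^ 42 + ((1976479 : ℂ)/6895168) * z ^ 43 + ((-6012659 : ℂ)/34475840) * z ^ 44 + ((-15492997 : ℂ)/34475840) * z ^ 45 + ((-7959667 : ℂ)/34475840) * z ^ 46 + ((-6203493 : ℂ)/34475840) * z ^ 47 + ((-4271731 : ℂ)/34475840) * z ^ 48 + ((14227323 : ℂ)/34475840) * z ^ 49 + ((23966157 : ℂ)/34475840) * z ^ 50 + ((4852251 : ℂ)/34475840) * z ^ 51) * hf + (((-7600147 : ℂ)/17237920) + ((1411387 : ℂ)/17237920) * z + ((-498903 : ℂ)/1723792) * z ^ 2 + ((4478885 : ℂ)/6895168) * z ^ 3 + ((5614191 : ℂ)/4925120) * z ^ 4 + ((842851 : ℂ)/1723792) * z ^ 5 + ((376787 : ℂ)/3447584) * z ^ 6 + ((15619519 : ℂ)/34475840) * z ^ 7 + ((-71053 : ℂ)/153910) * z ^ 8 + ((-277839 : ℂ)/307820)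 * z ^ 9 + ((-24320281 : ℂ)/34475840) * z ^ 10 + ((-7230297 : ℂ)/17237920) * z ^ 11 + ((-10637273 : ℂ)/8618960) * z ^ 12 + ((-7102617 : ℂ)/4925120) * z ^ 13 + ((-44241103 : ℂ)/34475840) * z ^ 14 + ((-9539787 : ℂ)/8618960) * z ^ 15 + ((-23966157 : ℂ)/17237920) * z ^ 16 + ((-4852251 : ℂ)/17237920) * z ^ 17) * h1
  exact one_ne_zero h
lemma cert53 (z : ℂ)
    (hf : 2*z^18 + 2*z^16 + z^15 + 2*z^14 + z^13 + 2*z^12 + z^11 + 3*z^10 + 3*z^8 + z^7 + 2*z^6 + z^5 + 2*z^4 + z^3 + 2*z^2 + 2 = 0)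
    (h1 : z ^ 53 = 1) : False := by
  have h : (1 : ℂ) = 0 := by
    linear_combination (((141881693 : ℂ)/670717516) + ((-257821499 : ℂ)/670717516) * z + ((-211784291 : ℂ)/670717516) * z ^ 2 + ((19687369 : ℂ)/670717516) * z ^ 3 + ((-65941251 : ℂ)/670717516) * z ^ 4 + ((134680933 : ℂ)/670717516) * z ^ 5 + ((185141665 : ℂ)/670717516) * z ^ 6 + ((-121635603 : ℂ)/670717516) * z ^ 7 + ((-54332927 : ℂ)/670717516) * z ^ 8 + ((304621193 : ℂ)/670717516) * z ^ 9 + ((49582465 : ℂ)/670717516) * z ^ 10 + ((58463001 : ℂ)/670717516) * z ^ 11 + ((144641345 : ℂ)/670717516) * z ^ 12 + ((-198180883 : ℂ)/670717516) * z ^ 13 + ((7013785 : ℂ)/670717516) * z ^ 14 + ((-71965423 : ℂ)/670717516) * z ^ 15 + ((-106601087 : ℂ)/670717516) * z ^ 16 + ((2249137 : ℂ)/670717516) * z ^ 17 + ((2249137 : ℂ)/670717516) * z ^ 18 + ((-106601087 : ℂ)/670717516) * z ^ 19 + ((-71965423 : ℂ)/670717516) * z ^ 20 + ((7013785 : ℂ)/670717516)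 * z ^ 21 + ((-198180883 : ℂ)/670717516) * z ^ 22 + ((144641345 : ℂ)/670717516) * z ^ 23 + ((58463001 : ℂ)/670717516) * z ^ 24 + ((49582465 : ℂ)/670717516) * z ^ 25 + ((304621193 : ℂ)/670717516) * z ^ 26 + ((-54332927 : ℂ)/670717516) * z ^ 27 + ((-121635603 : ℂ)/670717516) * z ^ 28 + ((185141665 : ℂ)/670717516) * z ^ 29 + ((134680933 : ℂ)/670717516) * z ^ 30 + ((-65941251 : ℂ)/670717516) * z ^ 31 + ((19687369 : ℂ)/670717516) * z ^ 32 + ((-211784291 : ℂ)/670717516) * z ^ 33 + ((-257821499 : ℂ)/670717516) * z ^ 34 + ((141881693 : ℂ)/670717516) * z ^ 35 + ((-15917879 : ℂ)/670717516) * z ^ 36 + ((-185730823 : ℂ)/670717516) * z ^ 37 + ((139522609 : ℂ)/670717516) * z ^ 38 + ((-63770159 : ℂ)/670717516) * z ^ 39 + ((-102982283 : ℂ)/670717516) * z ^ 40 + ((107450177 : ℂ)/670717516) * z ^ 41 + ((-18174875 : ℂ)/670717516) * z ^ 42 + ((105777177 : ℂ)/670717516) * z ^ 43 + ((172207065 :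 ℂ)/670717516) * z ^ 44 + ((105777177 : ℂ)/670717516) * z ^ 45 + ((-18174875 : ℂ)/670717516) * z ^ 46 + ((107450177 : ℂ)/670717516) * z ^ 47 + ((-102982283 : ℂ)/670717516) * z ^ 48 + ((-63770159 : ℂ)/670717516) * z ^ 49 + ((139522609 : ℂ)/670717516) * z ^ 50 + ((-185730823 : ℂ)/670717516) * z ^ 51 + ((-15917879 : ℂ)/670717516) * z ^ 52) * hf + (((-193477065 : ℂ)/335358758) + ((-257821499 : ℂ)/335358758) * z + ((-34951299 : ℂ)/167679379) * z ^ 2 + ((-334386567 : ℂ)/670717516) * z ^ 3 + ((-75644171 : ℂ)/95816788) * z ^ 4 + ((-69202248 : ℂ)/167679379) * z ^ 5 + ((-69769249 : ℂ)/335358758) * z ^ 6 + ((-586021449 : ℂ)/670717516) * z ^ 7 + ((2025591 : ℂ)/47908394) * z ^ 8 + ((-13667185 : ℂ)/47908394) * z ^ 9 + ((51924809 : ℂ)/670717516) * z ^ 10 + ((122302919 : ℂ)/335358758) * z ^ 11 + ((40124220 : ℂ)/167679379) * z ^ 12 + ((20640847 : ℂ)/95816788) * z ^ 13 + ((514919843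 : ℂ)/670717516) * z ^ 14 + ((-61802365 : ℂ)/167679379) * z ^ 15 + ((185730823 : ℂ)/335358758) * z ^ 16 + ((15917879 : ℂ)/335358758) * z ^ 17) * h1
  exact one_ne_zero h
lemma cert54 (z : ℂ)
    (hf : 2*z^18 + 2*z^16 + z^15 + 2*z^14 + z^13 + 2*z^12 + z^11 + 3*z^10 + 3*z^8 + z^7 + 2*z^6 + z^5 + 2*z^4 + z^3 + 2*z^2 + 2 = 0)
    (h1 : z ^ 54 = 1) : False := by
  have h : (1 : ℂ) = 0 := by
    linear_combination (((16332954941 : ℂ)/76539935584) + ((-1083313733 : ℂ)/76539935584) * z + ((-16377766403 : ℂ)/76539935584) * z ^ 2 + ((-13565966405 : ℂ)/76539935584) * z ^ 3 + ((-4404599267 : ℂ)/76539935584) * z ^ 4 + ((10936545307 : ℂ)/76539935584) * z ^ 5 + ((10541431805 : ℂ)/76539935584) * z ^ 6 + ((2200445179 : ℂ)/76539935584) * z ^ 7 + ((-16809823427 : ℂ)/76539935584) * z ^ 8 + ((10902919547 : ℂ)/76539935584) * z ^ 9 + ((17065059293 : ℂ)/76539935584) * z ^ 10 + ((3931036475 :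 ℂ)/76539935584) * z ^ 11 + ((-22116323 : ℂ)/76539935584) * z ^ 12 + ((-4825006597 : ℂ)/76539935584) * z ^ 13 + ((-4124528483 : ℂ)/76539935584) * z ^ 14 + ((-5350233061 : ℂ)/76539935584) * z ^ 15 + ((-1761630435 : ℂ)/76539935584) * z ^ 16 + ((-1136385829 : ℂ)/76539935584) * z ^ 17 + ((2769989917 : ℂ)/76539935584) * z ^ 18 + ((-1136385829 : ℂ)/76539935584) * z ^ 19 + ((-1761630435 : ℂ)/76539935584) * z ^ 20 + ((-5350233061 : ℂ)/76539935584) * z ^ 21 + ((-4124528483 : ℂ)/76539935584) * z ^ 22 + ((-4825006597 : ℂ)/76539935584) * z ^ 23 + ((-22116323 : ℂ)/76539935584) * z ^ 24 + ((3931036475 : ℂ)/76539935584) * z ^ 25 + ((17065059293 : ℂ)/76539935584) * z ^ 26 + ((10902919547 : ℂ)/76539935584) * z ^ 27 + ((-16809823427 : ℂ)/76539935584) * z ^ 28 + ((2200445179 : ℂ)/76539935584) * z ^ 29 + ((10541431805 : ℂ)/76539935584) * z ^ 30 + ((10936545307 : ℂ)/76539935584) * z ^ 31 + ((-4404599267 :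 ℂ)/76539935584) * z ^ 32 + ((-13565966405 : ℂ)/76539935584) * z ^ 33 + ((-16377766403 : ℂ)/76539935584) * z ^ 34 + ((-1083313733 : ℂ)/76539935584) * z ^ 35 + ((16332954941 : ℂ)/76539935584) * z ^ 36 + ((-9900463557 : ℂ)/76539935584) * z ^ 37 + ((-452893187 : ℂ)/76539935584) * z ^ 38 + ((2293687195 : ℂ)/76539935584) * z ^ 39 + ((-1058463971 : ℂ)/76539935584) * z ^ 40 + ((-4724654373 : ℂ)/76539935584) * z ^ 41 + ((-2097510595 : ℂ)/76539935584) * z ^ 42 + ((4260100987 : ℂ)/76539935584) * z ^ 43 + ((3664219869 : ℂ)/76539935584) * z ^ 44 + ((11097489307 : ℂ)/76539935584) * z ^ 45 + ((3664219869 : ℂ)/76539935584) * z ^ 46 + ((4260100987 : ℂ)/76539935584) * z ^ 47 + ((-2097510595 : ℂ)/76539935584) * z ^ 48 + ((-4724654373 : ℂ)/76539935584) * z ^ 49 + ((-1058463971 : ℂ)/76539935584) * z ^ 50 + ((2293687195 : ℂ)/76539935584) * z ^ 51 + ((-452893187 : ℂ)/76539935584) * z ^ 52 + ((-9900463557 :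 ℂ)/76539935584) * z ^ 53) * hf + (((-21937012851 : ℂ)/38269967792) + ((-1083313733 : ℂ)/38269967792) * z + ((-22405731 : ℂ)/19134983896) * z ^ 2 + ((-12965605335 : ℂ)/76539935584) * z ^ 3 + ((-83883489 : ℂ)/643192736) * z ^ 4 + ((-1867570281 : ℂ)/19134983896) * z ^ 5 + ((-1232618993 : ℂ)/38269967792) * z ^ 6 + ((-7473990033 : ℂ)/76539935584) * z ^ 7 + ((-78708791 : ℂ)/683392282) * z ^ 8 + ((1958249 : ℂ)/20099773) * z ^ 9 + ((12220726503 : ℂ)/76539935584) * z ^ 10 + ((8827008327 : ℂ)/38269967792) * z ^ 11 + ((3706127967 : ℂ)/19134983896) * z ^ 12 + ((3587964951 : ℂ)/10934276512) * z ^ 13 + ((12923177873 : ℂ)/76539935584) * z ^ 14 + ((3803388181 : ℂ)/19134983896) * z ^ 15 + ((452893187 : ℂ)/38269967792) * z ^ 16 + ((9900463557 : ℂ)/38269967792) * z ^ 17) * h1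
  exact one_ne_zero h
lemma cert55 (z : ℂ)
    (hf : 2*z^18 + 2*z^16 + z^15 + 2*z^14 + z^13 + 2*z^12 + z^11 + 3*z^10 + 3*z^8 + z^7 + 2*z^6 + z^5 + 2*z^4 + z^3 + 2*z^2 + 2 = 0)
    (h1 : z ^ 55 = 1) : False := by
  have h : (1 : ℂ) = 0 := by
    linear_combination (((15786767 : ℂ)/179546108) + ((125461871 : ℂ)/179546108) * z + ((-93242545 : ℂ)/179546108) * z ^ 2 + ((32899023 : ℂ)/179546108) * z ^ 3 + ((-149375517 : ℂ)/179546108) * z ^ 4 + ((88698207 : ℂ)/179546108) * z ^ 5 + ((48092019 : ℂ)/179546108) * z ^ 6 + ((-10316093 : ℂ)/179546108) * z ^ 7 + ((656183 : ℂ)/179546108) * z ^ 8 + ((-129901573 : ℂ)/179546108) * z ^ 9 + ((195139003 : ℂ)/179546108) * z ^ 10 + ((-32219121 : ℂ)/179546108) * z ^ 11 + ((-20265305 : ℂ)/179546108) * z ^ 12 + ((3085715 : ℂ)/179546108) * z ^ 13 + ((-58213481 : ℂ)/179546108) * z ^ 14 + ((99124231 : ℂ)/179546108) * z ^ 15 +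 ((-119732673 : ℂ)/179546108) * z ^ 16 + ((61025499 : ℂ)/179546108) * z ^ 17 + ((-7378025 : ℂ)/179546108) * z ^ 18 + ((-7378025 : ℂ)/179546108) * z ^ 19 + ((61025499 : ℂ)/179546108) * z ^ 20 + ((-119732673 : ℂ)/179546108) * z ^ 21 + ((99124231 : ℂ)/179546108) * z ^ 22 + ((-58213481 : ℂ)/179546108) * z ^ 23 + ((3085715 : ℂ)/179546108) * z ^ 24 + ((-20265305 : ℂ)/179546108) * z ^ 25 + ((-32219121 : ℂ)/179546108) * z ^ 26 + ((195139003 : ℂ)/179546108) * z ^ 27 + ((-129901573 : ℂ)/179546108) * z ^ 28 + ((656183 : ℂ)/179546108) * z ^ 29 + ((-10316093 : ℂ)/179546108) * z ^ 30 + ((48092019 : ℂ)/179546108) * z ^ 31 + ((88698207 : ℂ)/179546108) * z ^ 32 + ((-149375517 : ℂ)/179546108) * z ^ 33 + ((32899023 : ℂ)/179546108) * z ^ 34 + ((-93242545 : ℂ)/179546108) * z ^ 35 + ((125461871 : ℂ)/179546108) * z ^ 36 + ((15786767 : ℂ)/179546108) * z ^ 37 + ((-128816013 : ℂ)/179546108)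 * z ^ 38 + ((112769387 : ℂ)/179546108) * z ^ 39 + ((-61556597 : ℂ)/179546108) * z ^ 40 + ((70741191 : ℂ)/179546108) * z ^ 41 + ((-87734441 : ℂ)/179546108) * z ^ 42 + ((-777053 : ℂ)/179546108) * z ^ 43 + ((74969275 : ℂ)/179546108) * z ^ 44 + ((-77648589 : ℂ)/179546108) * z ^ 45 + ((103869671 : ℂ)/179546108) * z ^ 46 + ((-77648589 : ℂ)/179546108) * z ^ 47 + ((74969275 : ℂ)/179546108) * z ^ 48 + ((-777053 : ℂ)/179546108) * z ^ 49 + ((-87734441 : ℂ)/179546108) * z ^ 50 + ((70741191 : ℂ)/179546108) * z ^ 51 + ((-61556597 : ℂ)/179546108) * z ^ 52 + ((112769387 : ℂ)/179546108) * z ^ 53 + ((-128816013 : ℂ)/179546108) * z ^ 54) * hf + (((-73986287 : ℂ)/89773054) + ((125461871 : ℂ)/89773054) * z + ((-38727889 : ℂ)/44886527) * z ^ 2 + ((332508555 : ℂ)/179546108) * z ^ 3 + ((-46885817 : ℂ)/25649444) * z ^ 4 + ((104165606 : ℂ)/44886527) * z ^ 5 + ((-99558829 : ℂ)/89773054) *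 z ^ 6 + ((246654721 : ℂ)/179546108) * z ^ 7 + ((-6665737 : ℂ)/12824722) * z ^ 8 + ((10329907 : ℂ)/12824722) * z ^ 9 + ((67937179 : ℂ)/179546108) * z ^ 10 + ((111382487 : ℂ)/89773054) * z ^ 11 + ((-43773610 : ℂ)/44886527) * z ^ 12 + ((63349245 : ℂ)/25649444) * z ^ 13 + ((-238205143 : ℂ)/179546108) * z ^ 14 + ((95186305 : ℂ)/44886527) * z ^ 15 + ((-112769387 : ℂ)/89773054) * z ^ 16 + ((128816013 : ℂ)/89773054) * z ^ 17) * h1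
  exact one_ne_zero h
lemma cert56 (z : ℂ)
    (hf : 2*z^18 + 2*z^16 + z^15 + 2*z^14 + z^13 + 2*z^12 + z^11 + 3*z^10 + 3*z^8 + z^7 + 2*z^6 + z^5 + 2*z^4 + z^3 + 2*z^2 + 2 = 0)
    (h1 : z ^ 56 = 1) : False := by
  have h : (1 : ℂ) = 0 := by
    linear_combination (((9083825 : ℂ)/18182528) + ((-13737769 : ℂ)/18182528) * z + ((-8253967 : ℂ)/18182528) * z ^ 2 + ((6595319 : ℂ)/18182528) * z ^ 3 + ((6382193 : ℂ)/18182528) * z ^ 4 + ((-363177 : ℂ)/18182528) * z ^ 5 + ((-8646223 : ℂ)/18182528) * z ^ 6 + ((-8618633 : ℂ)/18182528) * z ^ 7 + ((5290161 : ℂ)/18182528) * z ^ 8 + ((17432279 : ℂ)/18182528) * z ^ 9 + ((-1862799 : ℂ)/18182528) * z ^ 10 + ((-9838217 : ℂ)/18182528) * z ^ 11 + ((-10961 : ℂ)/81536) * z ^ 12 + ((4240471 : ℂ)/18182528) * z ^ 13 + ((7721009 : ℂ)/18182528) * z ^ 14 + ((-480265 : ℂ)/18182528) * z ^ 15 + ((-11063631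 : ℂ)/18182528) * z ^ 16 + ((-7397673 : ℂ)/18182528) * z ^ 17 + ((6312305 : ℂ)/18182528) * z ^ 18 + ((9751031 : ℂ)/18182528) * z ^ 19 + ((6312305 : ℂ)/18182528) * z ^ 20 + ((-7397673 : ℂ)/18182528) * z ^ 21 + ((-11063631 : ℂ)/18182528) * z ^ 22 + ((-480265 : ℂ)/18182528) * z ^ 23 + ((7721009 : ℂ)/18182528) * z ^ 24 + ((4240471 : ℂ)/18182528) * z ^ 25 + ((-10961 : ℂ)/81536) * z ^ 26 + ((-9838217 : ℂ)/18182528) * z ^ 27 + ((-1862799 : ℂ)/18182528) * z ^ 28 + ((17432279 : ℂ)/18182528) * z ^ 29 + ((5290161 : ℂ)/18182528) * z ^ 30 + ((-8618633 : ℂ)/18182528) * z ^ 31 + ((-8646223 : ℂ)/18182528) * z ^ 32 + ((-363177 : ℂ)/18182528) * z ^ 33 + ((6382193 : ℂ)/18182528) * z ^ 34 + ((6595319 : ℂ)/18182528) * z ^ 35 + ((-8253967 : ℂ)/18182528) * z ^ 36 + ((-13737769 : ℂ)/18182528) * z ^ 37 + ((9083825 : ℂ)/18182528) * z ^ 38 +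 ((11312887 : ℂ)/18182528) * z ^ 39 + ((14831 : ℂ)/81536) * z ^ 40 + ((-6149545 : ℂ)/18182528) * z ^ 41 + ((-11018127 : ℂ)/18182528) * z ^ 42 + ((-3448841 : ℂ)/18182528) * z ^ 43 + ((9159793 : ℂ)/18182528) * z ^ 44 + ((8187351 : ℂ)/18182528) * z ^ 45 + ((-3521103 : ℂ)/18182528) * z ^ 46 + ((-5462921 : ℂ)/18182528) * z ^ 47 + ((-3521103 : ℂ)/18182528) * z ^ 48 + ((8187351 : ℂ)/18182528) * z ^ 49 + ((9159793 : ℂ)/18182528) * z ^ 50 + ((-3448841 : ℂ)/18182528) * z ^ 51 + ((-11018127 : ℂ)/18182528) * z ^ 52 + ((-6149545 : ℂ)/18182528) * z ^ 53 + ((14831 : ℂ)/81536) * z ^ 54 + ((11312887 : ℂ)/18182528) * z ^ 55) * hf + (((-7439 : ℂ)/9091264) + ((-13737769 : ℂ)/9091264) * z + ((414929 : ℂ)/4545632) * z ^ 2 + ((-5201075 : ℂ)/18182528) * z ^ 3 + ((686333 : ℂ)/18182528) * z ^ 4 + ((-3545349 : ℂ)/4545632) * z ^ 5 + ((-5005397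 : ℂ)/9091264) * z ^ 6 + ((-25036469 : ℂ)/18182528) * z ^ 7 + ((20737 : ℂ)/40586) * z ^ 8 + ((-1352483 : ℂ)/1136408) * z ^ 9 + ((2429747 : ℂ)/18182528) * z ^ 10 + ((-6046445 : ℂ)/9091264) * z ^ 11 + ((-155025 : ℂ)/349664) * z ^ 12 + ((-6736315 : ℂ)/18182528) * z ^ 13 + ((45151 : ℂ)/199808) * z ^ 14 + ((-11577 : ℂ)/20384) * z ^ 15 + ((-14831 : ℂ)/40768) * z ^ 16 + ((-11312887 : ℂ)/9091264) * z ^ 17) * h1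
  exact one_ne_zero h
lemma cert57 (z : ℂ)
    (hf : 2*z^18 + 2*z^16 + z^15 + 2*z^14 + z^13 + 2*z^12 + z^11 + 3*z^10 + 3*z^8 + z^7 + 2*z^6 + z^5 + 2*z^4 + z^3 + 2*z^2 + 2 = 0)
    (h1 : z ^ 57 = 1) : False := by
  have h : (1 : ℂ) = 0 := by
    linear_combination (((4549079229 : ℂ)/1590503404) + ((4067384757 : ℂ)/1590503404) * z + ((1838386461 : ℂ)/1590503404) * z ^ 2 + ((-443616339 : ℂ)/1590503404) * z ^ 3 + ((-2986184507 : ℂ)/1590503404) * z ^ 4 + ((-4053333471 : ℂ)/1590503404) * z ^ 5 + ((-3735258763 : ℂ)/1590503404) * z ^ 6 + ((-1694873983 : ℂ)/1590503404) * z ^ 7 + ((1018357237 : ℂ)/1590503404) * z ^ 8 + ((3546593857 : ℂ)/1590503404) * z ^ 9 + ((4389798989 : ℂ)/1590503404) * z ^ 10 + ((2954113297 : ℂ)/1590503404) * z ^ 11 + ((1102855049 : ℂ)/1590503404) * z ^ 12 + ((-1468367227 : ℂ)/1590503404) * z ^ 13 + ((-3530446603 : ℂ)/1590503404) * z ^ 14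 + ((-4196788755 : ℂ)/1590503404) * z ^ 15 + ((-3191432683 : ℂ)/1590503404) * z ^ 16 + ((-578384903 : ℂ)/1590503404) * z ^ 17 + ((2292200717 : ℂ)/1590503404) * z ^ 18 + ((4277974325 : ℂ)/1590503404) * z ^ 19 + ((4277974325 : ℂ)/1590503404) * z ^ 20 + ((2292200717 : ℂ)/1590503404) * z ^ 21 + ((-578384903 : ℂ)/1590503404) * z ^ 22 + ((-3191432683 : ℂ)/1590503404) * z ^ 23 + ((-4196788755 : ℂ)/1590503404) * z ^ 24 + ((-3530446603 : ℂ)/1590503404) * z ^ 25 + ((-1468367227 : ℂ)/1590503404) * z ^ 26 + ((1102855049 : ℂ)/1590503404) * z ^ 27 + ((2954113297 : ℂ)/1590503404) * z ^ 28 + ((4389798989 : ℂ)/1590503404) * z ^ 29 + ((3546593857 : ℂ)/1590503404) * z ^ 30 + ((1018357237 : ℂ)/1590503404) * z ^ 31 + ((-1694873983 : ℂ)/1590503404) * z ^ 32 + ((-3735258763 : ℂ)/1590503404) * z ^ 33 + ((-4053333471 : ℂ)/1590503404) * z ^ 34 + ((-2986184507 : ℂ)/1590503404) * z ^ 35 +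 ((-443616339 : ℂ)/1590503404) * z ^ 36 + ((1838386461 : ℂ)/1590503404) * z ^ 37 + ((4067384757 : ℂ)/1590503404) * z ^ 38 + ((4549079229 : ℂ)/1590503404) * z ^ 39 + ((2401837517 : ℂ)/1590503404) * z ^ 40 + ((-398091083 : ℂ)/1590503404) * z ^ 41 + ((-3194992155 : ℂ)/1590503404) * z ^ 42 + ((-4303493927 : ℂ)/1590503404) * z ^ 43 + ((-3697407383 : ℂ)/1590503404) * z ^ 44 + ((-1437857923 : ℂ)/1590503404) * z ^ 45 + ((1230205601 : ℂ)/1590503404) * z ^ 46 + ((3212724349 : ℂ)/1590503404) * z ^ 47 + ((4114840333 : ℂ)/1590503404) * z ^ 48 + ((3212724349 : ℂ)/1590503404) * z ^ 49 + ((1230205601 : ℂ)/1590503404) * z ^ 50 + ((-1437857923 : ℂ)/1590503404) * z ^ 51 + ((-3697407383 : ℂ)/1590503404) * z ^ 52 + ((-4303493927 : ℂ)/1590503404) * z ^ 53 + ((-3194992155 : ℂ)/1590503404) * z ^ 54 + ((-398091083 : ℂ)/1590503404) * z ^ 55 + ((2401837517 : ℂ)/1590503404) * z ^ 56) * hf +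 (((3753827527 : ℂ)/795251702) + ((4067384757 : ℂ)/795251702) * z + ((3193732845 : ℂ)/397625851) * z ^ 2 + ((11796616065 : ℂ)/1590503404) * z ^ 3 + ((1552849589 : ℂ)/227214772) * z ^ 4 + ((1382083896 : ℂ)/397625851) * z ^ 5 + ((1477906629 : ℂ)/795251702) * z ^ 6 + ((-847596889 : ℂ)/1590503404) * z ^ 7 + ((392019535 : ℂ)/113607386) * z ^ 8 + ((144902685 : ℂ)/113607386) * z ^ 9 + ((10343999189 : ℂ)/1590503404) * z ^ 10 + ((5611148925 : ℂ)/795251702) * z ^ 11 + ((3268010126 : ℂ)/397625851) * z ^ 12 + ((1339887875 : ℂ)/227214772) * z ^ 13 + ((7001332503 : ℂ)/1590503404) * z ^ 14 + ((396577319 : ℂ)/397625851) * z ^ 15 + ((398091083 : ℂ)/795251702) * z ^ 16 + ((-2401837517 : ℂ)/795251702) * z ^ 17) * h1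
  exact one_ne_zero h
lemma cert58 (z : ℂ)
    (hf : 2*z^18 + 2*z^16 + z^15 + 2*z^14 + z^13 + 2*z^12 + z^11 + 3*z^10 + 3*z^8 + z^7 + 2*z^6 + z^5 + 2*z^4 + z^3 + 2*z^2 + 2 = 0)
    (h1 : z ^ 58 = 1) : False := by
  have h : (1 : ℂ) = 0 := by
    linear_combination (((1395669959 : ℂ)/1068526816) + ((1078575265 : ℂ)/1068526816) * z + ((263055623 : ℂ)/1068526816) * z ^ 2 + ((-1271848447 : ℂ)/1068526816) * z ^ 3 + ((-1090821433 : ℂ)/1068526816) * z ^ 4 + ((-515395743 : ℂ)/1068526816) * z ^ 5 + ((710603143 : ℂ)/1068526816) * z ^ 6 + ((1615516929 : ℂ)/1068526816) * z ^ 7 + ((527860807 : ℂ)/1068526816) * z ^ 8 + ((-166386719 : ℂ)/1068526816) * z ^ 9 + ((-1422250265 : ℂ)/1068526816) * z ^ 10 + ((-1074210111 : ℂ)/1068526816) * z ^ 11 + ((-286314681 : ℂ)/1068526816) * z ^ 12 + ((1393092993 : ℂ)/1068526816) * z ^ 13 + ((1393592583 : ℂ)/1068526816) * z ^ 14 + ((300704801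 : ℂ)/1068526816) * z ^ 15 + ((-828653401 : ℂ)/1068526816) * z ^ 16 + ((-1494015455 : ℂ)/1068526816) * z ^ 17 + ((-439477817 : ℂ)/1068526816) * z ^ 18 + ((541131393 : ℂ)/1068526816) * z ^ 19 + ((1459929511 : ℂ)/1068526816) * z ^ 20 + ((541131393 : ℂ)/1068526816) * z ^ 21 + ((-439477817 : ℂ)/1068526816) * z ^ 22 + ((-1494015455 : ℂ)/1068526816) * z ^ 23 + ((-828653401 : ℂ)/1068526816) * z ^ 24 + ((300704801 : ℂ)/1068526816) * z ^ 25 + ((1393592583 : ℂ)/1068526816) * z ^ 26 + ((1393092993 : ℂ)/1068526816) * z ^ 27 + ((-286314681 : ℂ)/1068526816) * z ^ 28 + ((-1074210111 : ℂ)/1068526816) * z ^ 29 + ((-1422250265 : ℂ)/1068526816) * z ^ 30 + ((-166386719 : ℂ)/1068526816) * z ^ 31 + ((527860807 : ℂ)/1068526816) * z ^ 32 + ((1615516929 : ℂ)/1068526816) * z ^ 33 + ((710603143 : ℂ)/1068526816) * z ^ 34 + ((-515395743 : ℂ)/1068526816) * z ^ 35 + ((-1090821433 : ℂ)/1068526816)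 * z ^ 36 + ((-1271848447 : ℂ)/1068526816) * z ^ 37 + ((263055623 : ℂ)/1068526816) * z ^ 38 + ((1078575265 : ℂ)/1068526816) * z ^ 39 + ((1395669959 : ℂ)/1068526816) * z ^ 40 + ((-374531103 : ℂ)/1068526816) * z ^ 41 + ((-1003887929 : ℂ)/1068526816) * z ^ 42 + ((-1229178463 : ℂ)/1068526816) * z ^ 43 + ((-200956569 : ℂ)/1068526816) * z ^ 44 + ((1202461825 : ℂ)/1068526816) * z ^ 45 + ((1316624167 : ℂ)/1068526816) * z ^ 46 + ((662399169 : ℂ)/1068526816) * z ^ 47 + ((-1038772793 : ℂ)/1068526816) * z ^ 48 + ((-1350943295 : ℂ)/1068526816) * z ^ 49 + ((-1038772793 : ℂ)/1068526816) * z ^ 50 + ((662399169 : ℂ)/1068526816) * z ^ 51 + ((1316624167 : ℂ)/1068526816) * z ^ 52 + ((1202461825 : ℂ)/1068526816) * z ^ 53 + ((-200956569 : ℂ)/1068526816) * z ^ 54 + ((-1229178463 : ℂ)/1068526816) * z ^ 55 + ((-1003887929 : ℂ)/1068526816) * z ^ 56 + ((-374531103 : ℂ)/1068526816) * z ^ 57)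 * hf + (((861406551 : ℂ)/534263408) + ((1078575265 : ℂ)/534263408) * z + ((829362791 : ℂ)/267131704) * z ^ 2 + ((1009123595 : ℂ)/1068526816) * z ^ 3 + ((316340509 : ℂ)/152646688) * z ^ 4 + ((60346933 : ℂ)/267131704) * z ^ 5 + ((1181870701 : ℂ)/534263408) * z ^ 6 + ((2381600157 : ℂ)/1068526816) * z ^ 7 + ((38390511 : ℂ)/9540418) * z ^ 8 + ((10903282 : ℂ)/4770209) * z ^ 9 + ((2255233989 : ℂ)/1068526816) * z ^ 10 + ((341270821 : ℂ)/534263408) * z ^ 11 + ((345037557 : ℂ)/267131704) * z ^ 12 + ((258054773 : ℂ)/152646688) * z ^ 13 + ((2784220099 : ℂ)/1068526816) * z ^ 14 + ((801854783 : ℂ)/267131704) * z ^ 15 + ((1003887929 : ℂ)/534263408) * z ^ 16 + ((374531103 : ℂ)/534263408) * z ^ 17) * h1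
  exact one_ne_zero h
lemma cert59 (z : ℂ)
    (hf : 2*z^18 + 2*z^16 + z^15 + 2*z^14 + z^13 + 2*z^12 + z^11 + 3*z^10 + 3*z^8 + z^7 + 2*z^6 + z^5 + 2*z^4 + z^3 + 2*z^2 + 2 = 0)
    (h1 : z ^ 59 = 1) : False := by
  have h : (1 : ℂ) = 0 := by
    linear_combination (((1384103237 : ℂ)/13336860292) + ((-3785226719 : ℂ)/13336860292) * z + ((-1151022531 : ℂ)/13336860292) * z ^ 2 + ((656070477 : ℂ)/13336860292) * z ^ 3 + ((-3641315959 : ℂ)/13336860292) * z ^ 4 + ((4426678745 : ℂ)/13336860292) * z ^ 5 + ((5653515405 : ℂ)/13336860292) * z ^ 6 + ((-4399972683 : ℂ)/13336860292) * z ^ 7 + ((-5646688223 : ℂ)/13336860292) * z ^ 8 + ((3522447361 : ℂ)/13336860292) * z ^ 9 + ((2184919225 : ℂ)/13336860292) * z ^ 10 + ((-432037579 : ℂ)/13336860292) * z ^ 11 + ((1474626537 : ℂ)/13336860292) * z ^ 12 + ((-3440422791 : ℂ)/13336860292) * z ^ 13 + ((-1188704063 : ℂ)/13336860292) * z ^ 14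 + ((2877937369 : ℂ)/13336860292) * z ^ 15 + ((502692917 : ℂ)/13336860292) * z ^ 16 + ((-377699631 : ℂ)/13336860292) * z ^ 17 + ((2314631185 : ℂ)/13336860292) * z ^ 18 + ((829957253 : ℂ)/13336860292) * z ^ 19 + ((-3636911559 : ℂ)/13336860292) * z ^ 20 + ((-3636911559 : ℂ)/13336860292) * z ^ 21 + ((829957253 : ℂ)/13336860292) * z ^ 22 + ((2314631185 : ℂ)/13336860292) * z ^ 23 + ((-377699631 : ℂ)/13336860292) * z ^ 24 + ((502692917 : ℂ)/13336860292) * z ^ 25 + ((2877937369 : ℂ)/13336860292) * z ^ 26 + ((-1188704063 : ℂ)/13336860292) * z ^ 27 + ((-3440422791 : ℂ)/13336860292) * z ^ 28 + ((1474626537 : ℂ)/13336860292) * z ^ 29 + ((-432037579 : ℂ)/13336860292) * z ^ 30 + ((2184919225 : ℂ)/13336860292) * z ^ 31 + ((3522447361 : ℂ)/13336860292) * z ^ 32 + ((-5646688223 : ℂ)/13336860292) * z ^ 33 + ((-4399972683 : ℂ)/13336860292) * z ^ 34 + ((5653515405 : ℂ)/13336860292) * z ^ 35 + ((4426678745 :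 ℂ)/13336860292) * z ^ 36 + ((-3641315959 : ℂ)/13336860292) * z ^ 37 + ((656070477 : ℂ)/13336860292) * z ^ 38 + ((-1151022531 : ℂ)/13336860292) * z ^ 39 + ((-3785226719 : ℂ)/13336860292) * z ^ 40 + ((1384103237 : ℂ)/13336860292) * z ^ 41 + ((-275021195 : ℂ)/13336860292) * z ^ 42 + ((-49294883 : ℂ)/13336860292) * z ^ 43 + ((3533882841 : ℂ)/13336860292) * z ^ 44 + ((2330631701 : ℂ)/13336860292) * z ^ 45 + ((-3535539183 : ℂ)/13336860292) * z ^ 46 + ((-1654699439 : ℂ)/13336860292) * z ^ 47 + ((1837820417 : ℂ)/13336860292) * z ^ 48 + ((270261613 : ℂ)/13336860292) * z ^ 49 + ((-694923251 : ℂ)/13336860292) * z ^ 50 + ((270261613 : ℂ)/13336860292) * z ^ 51 + ((1837820417 : ℂ)/13336860292) * z ^ 52 + ((-1654699439 : ℂ)/13336860292) * z ^ 53 + ((-3535539183 : ℂ)/13336860292) * z ^ 54 + ((2330631701 : ℂ)/13336860292) * z ^ 55 + ((3533882841 : ℂ)/13336860292) * z ^ 56 + ((-49294883 : ℂ)/13336860292)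 * z ^ 57 + ((-275021195 : ℂ)/13336860292) * z ^ 58) * hf + (((-5284326909 : ℂ)/6668430146) + ((-3785226719 : ℂ)/6668430146) * z + ((116540353 : ℂ)/3334215073) * z ^ 2 + ((-4874209247 : ℂ)/13336860292) * z ^ 3 + ((-1514528175 : ℂ)/1905265756) * z ^ 4 + ((707031428 : ℂ)/3334215073) * z ^ 5 + ((680702031 : ℂ)/6668430146) * z ^ 6 + ((-9613135613 : ℂ)/13336860292) * z ^ 7 + ((-294370743 : ℂ)/952632878) * z ^ 8 + ((-148861103 : ℂ)/952632878) * z ^ 9 + ((-1517120447 : ℂ)/13336860292) * z ^ 10 + ((-2701811289 : ℂ)/6668430146) * z ^ 11 + ((-1128034101 : ℂ)/3334215073) * z ^ 12 + ((86092851 : ℂ)/1905265756) * z ^ 13 + ((-4287652441 : ℂ)/13336860292) * z ^ 14 + ((-1629430823 : ℂ)/3334215073) * z ^ 15 + ((49294883 : ℂ)/6668430146) * z ^ 16 + ((275021195 : ℂ)/6668430146) * z ^ 17) * h1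
  exact one_ne_zero h
lemma cert60 (z : ℂ)
    (hf : 2*z^18 + 2*z^16 + z^15 + 2*z^14 + z^13 + 2*z^12 + z^11 + 3*z^10 + 3*z^8 + z^7 + 2*z^6 + z^5 + 2*z^4 + z^3 + 2*z^2 + 2 = 0)
    (h1 : z ^ 60 = 1) : False := by
  have h : (1 : ℂ) = 0 := by
    linear_combination (((5675475045 : ℂ)/27877571008) + ((397215779 : ℂ)/27877571008) * z + ((-9537624731 : ℂ)/27877571008) * z ^ 2 + ((-3794278717 : ℂ)/27877571008) * z ^ 3 + ((3197997861 : ℂ)/27877571008) * z ^ 4 + ((2653031523 : ℂ)/27877571008) * z ^ 5 + ((157669 : ℂ)/1935808) * z ^ 6 + ((927258691 : ℂ)/27877571008) * z ^ 7 + ((-4547169947 : ℂ)/27877571008) * z ^ 8 + ((664855011 : ℂ)/27877571008) * z ^ 9 + ((-495465563 : ℂ)/27877571008) * z ^ 10 + ((-1365337405 : ℂ)/27877571008) * z ^ 11 + ((9330280549 : ℂ)/27877571008) * z ^ 12 + ((-4397565149 : ℂ)/27877571008) * z ^ 13 + ((-3256984155 : ℂ)/27877571008) * z ^ 14 + ((-7340653885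 : ℂ)/27877571008) * z ^ 15 + ((11088672933 : ℂ)/27877571008) * z ^ 16 + ((5952988323 : ℂ)/27877571008) * z ^ 17 + ((-4545683035 : ℂ)/27877571008) * z ^ 18 + ((-2388967229 : ℂ)/27877571008) * z ^ 19 + ((-7151979931 : ℂ)/27877571008) * z ^ 20 + ((11713139363 : ℂ)/27877571008) * z ^ 21 + ((-7151979931 : ℂ)/27877571008) * z ^ 22 + ((-2388967229 : ℂ)/27877571008) * z ^ 23 + ((-4545683035 : ℂ)/27877571008) * z ^ 24 + ((5952988323 : ℂ)/27877571008) * z ^ 25 + ((11088672933 : ℂ)/27877571008) * z ^ 26 + ((-7340653885 : ℂ)/27877571008) * z ^ 27 + ((-3256984155 : ℂ)/27877571008) * z ^ 28 + ((-4397565149 : ℂ)/27877571008) * z ^ 29 + ((9330280549 : ℂ)/27877571008) * z ^ 30 + ((-1365337405 : ℂ)/27877571008) * z ^ 31 + ((-495465563 : ℂ)/27877571008) * z ^ 32 + ((664855011 : ℂ)/27877571008) * z ^ 33 + ((-4547169947 : ℂ)/27877571008) * z ^ 34 + ((927258691 : ℂ)/27877571008) * z ^ 35 + ((157669 : ℂ)/1935808)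 * z ^ 36 + ((2653031523 : ℂ)/27877571008) * z ^ 37 + ((3197997861 : ℂ)/27877571008) * z ^ 38 + ((-3794278717 : ℂ)/27877571008) * z ^ 39 + ((-9537624731 : ℂ)/27877571008) * z ^ 40 + ((397215779 : ℂ)/27877571008) * z ^ 41 + ((5675475045 : ℂ)/27877571008) * z ^ 42 + ((4752031363 : ℂ)/27877571008) * z ^ 43 + ((-9666444443 : ℂ)/27877571008) * z ^ 44 + ((3901551075 : ℂ)/27877571008) * z ^ 45 + ((3504177189 : ℂ)/27877571008) * z ^ 46 + ((4982180611 : ℂ)/27877571008) * z ^ 47 + ((-3209975515 : ℂ)/27877571008) * z ^ 48 + ((-11637289949 : ℂ)/27877571008) * z ^ 49 + ((8028626405 : ℂ)/27877571008) * z ^ 50 + ((1299460227 : ℂ)/27877571008) * z ^ 51 + ((8028626405 : ℂ)/27877571008) * z ^ 52 + ((-11637289949 : ℂ)/27877571008) * z ^ 53 + ((-3209975515 : ℂ)/27877571008) * z ^ 54 + ((4982180611 : ℂ)/27877571008) * z ^ 55 + ((3504177189 : ℂ)/27877571008) * z ^ 56 + ((3901551075 : ℂ)/27877571008) * z ^ 57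 + ((-9666444443 : ℂ)/27877571008) * z ^ 58 + ((4752031363 : ℂ)/27877571008) * z ^ 59) * hf + (((-8263310459 : ℂ)/13938785504) + ((397215779 : ℂ)/13938785504) * z + ((-1931074843 : ℂ)/6969392752) * z ^ 2 + ((-1118650831 : ℂ)/27877571008) * z ^ 3 + ((-133012553 : ℂ)/3982510144) * z ^ 4 + ((-1337553129 : ℂ)/6969392752) * z ^ 5 + ((-92092025 : ℂ)/13938785504) * z ^ 6 + ((-297697273 : ℂ)/27877571008) * z ^ 7 + ((-4241149 : ℂ)/124453442) * z ^ 8 + ((-17639779 : ℂ)/248906884) * z ^ 9 + ((-10948530321 : ℂ)/27877571008) * z ^ 10 + ((1082660527 : ℂ)/13938785504) * z ^ 11 + ((2522725775 : ℂ)/6969392752) * z ^ 12 + ((-2515011665 : ℂ)/3982510144) * z ^ 13 + ((7572503145 : ℂ)/27877571008) * z ^ 14 + ((-4326791219 : ℂ)/6969392752) * z ^ 15 + ((9666444443 : ℂ)/13938785504) * z ^ 16 + ((-4752031363 : ℂ)/13938785504) * z ^ 17) * h1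
  exact one_ne_zero h

set_option maxRecDepth 100000 in
set_option maxHeartbeats 1000000 in
lemma totChunk61 : ∀ d ∈ Finset.Icc 61 110, 18 < Nat.totient d := by decide
set_option maxRecDepth 100000 in
set_option maxHeartbeats 1000000 in
lemma totChunk111 : ∀ d ∈ Finset.Icc 111 160, 18 < Nat.totient d := by decide
set_option maxRecDepth 100000 in
set_option maxHeartbeats 1000000 in
lemma totChunk161 : ∀ d ∈ Finset.Icc 161 210, 18 < Nat.totient d := by decide
set_option maxRecDepth 100000 in
set_option maxHeartbeats 1000000 in
lemma totChunk211 : ∀ d ∈ Finset.Icc 211 260, 18 < Nat.totient d := by decide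
set_option maxRecDepth 100000 in
set_option maxHeartbeats 1000000 in
lemma totChunk261 : ∀ d ∈ Finset.Icc 261 310, 18 < Nat.totient d := by decide
set_option maxRecDepth 100000 in
set_option maxHeartbeats 1000000 in
lemma totChunk311 : ∀ d ∈ Finset.Icc 311 360, 18 < Nat.totient d := by decide
set_option maxRecDepth 100000 in
set_option maxHeartbeats 1000000 in
lemma totChunk361 : ∀ d ∈ Finset.Icc 361 410, 18 < Nat.totient d := by decide
set_option maxRecDepth 100000 in
set_option maxHeartbeats 1000000 in
lemma totChunk411 : ∀ d ∈ Finset.Icc 411 460, 18 < Nat.totient d := by decide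
set_option maxRecDepth 100000 in
set_option maxHeartbeats 1000000 in
lemma totChunk461 : ∀ d ∈ Finset.Icc 461 510, 18 < Nat.totient d := by decide
set_option maxRecDepth 100000 in
set_option maxHeartbeats 1000000 in
lemma totChunk511 : ∀ d ∈ Finset.Icc 511 560, 18 < Nat.totient d := by decide
set_option maxRecDepth 100000 in
set_option maxHeartbeats 1000000 in
lemma totChunk561 : ∀ d ∈ Finset.Icc 561 610, 18 < Nat.totient d := by decide
set_option maxRecDepth 100000 in
set_option maxHeartbeats 1000000 in
lemma totChunk611 : ∀ d ∈ Finset.Icc 611 648, 18 < Nat.totient d := by decide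

lemma big_totient (d : ℕ) (h1 : 60 < d) (h2 : d ≤ 648) : 18 < Nat.totient d := by
  by_cases h61 : d ≤ 110
  · exact totChunk61 d (Finset.mem_Icc.mpr ⟨by omega, by omega⟩)
  by_cases h111 : d ≤ 160
  · exact totChunk111 d (Finset.mem_Icc.mpr ⟨by omega, by omega⟩)
  by_cases h161 : d ≤ 210
  · exact totChunk161 d (Finset.mem_Icc.mpr ⟨by omega, by omega⟩)
  by_cases h211 : d ≤ 260
  · exact totChunk211 d (Finset.mem_Icc.mpr ⟨by omega, by omega⟩)
  by_cases h261 : d ≤ 310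
  · exact totChunk261 d (Finset.mem_Icc.mpr ⟨by omega, by omega⟩)
  by_cases h311 : d ≤ 360
  · exact totChunk311 d (Finset.mem_Icc.mpr ⟨by omega, by omega⟩)
  by_cases h361 : d ≤ 410
  · exact totChunk361 d (Finset.mem_Icc.mpr ⟨by omega, by omega⟩)
  by_cases h411 : d ≤ 460
  · exact totChunk411 d (Finset.mem_Icc.mpr ⟨by omega, by omega⟩)
  by_cases h461 : d ≤ 510
  · exact totChunk461 d (Finset.mem_Icc.mpr ⟨by omega, by omega⟩)
  by_cases h511 : d ≤ 560
  · exact totChunk511 d (Finset.mem_Icc.mpr ⟨by omega, by omega⟩)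
  by_cases h561 : d ≤ 610
  · exact totChunk561 d (Finset.mem_Icc.mpr ⟨by omega, by omega⟩)
  by_cases h611 : d ≤ 648
  · exact totChunk611 d (Finset.mem_Icc.mpr ⟨by omega, by omega⟩)
  omega



lemma odd_le_totient_sq : ∀ m : ℕ, Odd m → m ≤ m.totient ^ 2 := by
  intro m
  induction m using Nat.recOnPosPrimePosCoprime with
  | prime_pow p n hp hn =>
    intro hodd
    have hp2 : p ≠ 2 := by
      rintro rfl
      exact (Nat.not_odd_iff_even.mpr (Nat.even_pow.mpr ⟨even_two, hn.ne'⟩)) hodd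
    have h3 : 3 ≤ p := by
      have := hp.two_le; omega
    obtain ⟨q, hq⟩ : ∃ q, p = q + 1 := ⟨p - 1, by omega⟩
    obtain ⟨k, rfl⟩ : ∃ k, n = k + 1 := ⟨n - 1, by omega⟩
    rw [Nat.totient_prime_pow hp hn]
    simp only [Nat.add_sub_cancel]
    subst hq
    simp only [Nat.add_sub_cancel]
    have h4 : q + 1 ≤ q ^ 2 := by nlinarith
    calc (q+1) ^ (k+1) = (q+1) ^ k * (q+1) := by ring
    _ ≤ ((q+1) ^ k) ^ 2 * q ^ 2 := Nat.mul_le_mul (Nat.le_self_pow two_ne_zero _) h4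
    _ = ((q+1) ^ k * q) ^ 2 := by ring
  | zero => intro h; simp at h
  | one => intro _; simp
  | coprime a b ha hb hab iha ihb =>
    intro hodd
    obtain ⟨hoa, hob⟩ := Nat.odd_mul.mp hodd
    rw [Nat.totient_mul hab, mul_pow]
    exact Nat.mul_le_mul (iha hoa) (ihb hob)

lemma le_two_mul_totient_sq (n : ℕ) : n ≤ 2 * n.totient ^ 2 := by
  rcases Nat.eq_zero_or_pos n with rfl | hn
  · simp
  obtain ⟨a, m, hsplit, hcop⟩ : ∃ a m, 2 ^ a * m = n ∧ Nat.Coprime 2 m :=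
    ⟨n.factorization 2, n / 2 ^ n.factorization 2, Nat.ordProj_mul_ordCompl_eq_self n 2,
      Nat.coprime_ordCompl Nat.prime_two hn.ne'⟩
  subst hsplit
  have hmodd : Odd m := by
    have hnd : ¬ (2 ∣ m) := (Nat.Prime.coprime_iff_not_dvd Nat.prime_two).mp hcop
    rw [Nat.odd_iff]
    omega
  have hmle := odd_le_totient_sq m hmodd
  rw [Nat.totient_mul (Nat.Coprime.pow_left _ hcop)]
  rcases Nat.eq_zero_or_pos a with rfl | hapos
  · simp only [pow_zero, one_mul, Nat.totient_one]
    omega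
  obtain ⟨b, rfl⟩ : ∃ b, a = b + 1 := ⟨a - 1, by omega⟩
  have h2a : (2 ^ (b + 1)).totient = 2 ^ b := by
    rw [Nat.totient_prime_pow Nat.prime_two (by omega)]
    simp
  rw [h2a]
  have hself : 2 ^ b ≤ (2 ^ b) ^ 2 := Nat.le_self_pow two_ne_zero _
  have h1 : 2 ^ (b + 1) ≤ 2 * (2 ^ b) ^ 2 := by
    rw [pow_succ, mul_comm]
    exact Nat.mul_le_mul_left 2 hself
  calc 2 ^ (b + 1) * m ≤ (2 * (2 ^ b) ^ 2) * m.totient ^ 2 := Nat.mul_le_mul h1 hmle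
  _ = 2 * (2 ^ b * m.totient) ^ 2 := by ring

noncomputable def fPolQ : Polynomial ℚ :=
  2 * X ^ 18 + 2 * X ^ 16 + X ^ 15 + 2 * X ^ 14 + X ^ 13 + 2 * X ^ 12 + X ^ 11 +
    3 * X ^ 10 + 3 * X ^ 8 + X ^ 7 + 2 * X ^ 6 + X ^ 5 + 2 * X ^ 4 + X ^ 3 + 2 * X ^ 2 + 2

lemma fPolQ_map : fPolQ.map (algebraMap ℚ ℂ) = fPolC := by
  simp only [fPolQ, fPolC, Polynomial.map_add, Polynomial.map_mul, Polynomial.map_pow,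
    Polynomial.map_X, Polynomial.map_ofNat]

lemma fPolQ_ne : fPolQ ≠ 0 := by
  intro h
  have h2 : fPolQ.eval 0 = 2 := by simp [fPolQ]
  rw [h] at h2
  simp at h2

lemma fPolQ_deg : fPolQ.natDegree ≤ 18 := by
  unfold fPolQ
  compute_degree

theorem stmt_9 (z : ℂ) (hz : fPolC.eval z = 0) : ∀ n : ℕ, 0 < n → z ^ n ≠ 1 := by
  intro n hn hzn
  have hfin : IsOfFinOrder z := isOfFinOrder_iff_pow_eq_one.mpr ⟨n, hn, hzn⟩
  have hdpos : 0 < orderOf z := hfin.orderOf_pos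
  have hprim : IsPrimitiveRoot z (orderOf z) := IsPrimitiveRoot.orderOf z
  have haev : aeval z fPolQ = 0 := by
    rw [aeval_def, ← Polynomial.eval_map, fPolQ_map]
    exact hz
  have hdvd : minpoly ℚ z ∣ fPolQ := minpoly.dvd ℚ z haev
  have hcyc : cyclotomic (orderOf z) ℚ = minpoly ℚ z :=
    Polynomial.cyclotomic_eq_minpoly_rat hprim hdpos
  have htot : (orderOf z).totient ≤ 18 := by
    have h1 := Polynomial.natDegree_le_of_dvd hdvd fPolQ_ne
    rw [← hcyc, Polynomial.natDegree_cyclotomic] at h1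
    exact le_trans h1 fPolQ_deg
  have hd648 : orderOf z ≤ 648 := by
    have := le_two_mul_totient_sq (orderOf z)
    nlinarith
  have hd60 : orderOf z ≤ 60 := by
    by_contra hlt
    have := big_totient (orderOf z) (by omega) hd648
    omega
  have hf : 2*z^18 + 2*z^16 + z^15 + 2*z^14 + z^13 + 2*z^12 + z^11 + 3*z^10 + 3*z^8 + z^7 + 2*z^6 + z^5 + 2*z^4 + z^3 + 2*z^2 + 2 = 0 := by
    have h := hz
    simp only [fPolC, eval_add, eval_mul, eval_pow, eval_ofNat, eval_X] at h
    linear_combination h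
  obtain ⟨d, hd1, hdle, hpow⟩ : ∃ d, 1 ≤ d ∧ d ≤ 60 ∧ z ^ d = 1 :=
    ⟨orderOf z, hdpos, hd60, pow_orderOf_eq_one z⟩
  interval_cases d
  · exact cert1 z hf hpow
  · exact cert2 z hf hpow
  · exact cert3 z hf hpow
  · exact cert4 z hf hpow
  · exact cert5 z hf hpow
  · exact cert6 z hf hpow
  · exact cert7 z hf hpow
  · exact cert8 z hf hpow
  · exact cert9 z hf hpow
  · exact cert10 z hf hpow
  · exact cert11 z hf hpow
  · exact cert12 z hf hpow
  · exact cert13 z hf hpow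
  · exact cert14 z hf hpow
  · exact cert15 z hf hpow
  · exact cert16 z hf hpow
  · exact cert17 z hf hpow
  · exact cert18 z hf hpow
  · exact cert19 z hf hpow
  · exact cert20 z hf hpow
  · exact cert21 z hf hpow
  · exact cert22 z hf hpow
  · exact cert23 z hf hpow
  · exact cert24 z hf hpow
  · exact cert25 z hf hpow
  · exact cert26 z hf hpow
  · exact cert27 z hf hpow
  · exact cert28 z hf hpow
  · exact cert29 z hf hpow
  · exact cert30 z hf hpow
  · exact cert31 z hf hpow
  · exact cert32 z hf hpow
  · exact cert33 z hf hpow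
  · exact cert34 z hf hpow
  · exact cert35 z hf hpow
  · exact cert36 z hf hpow
  · exact cert37 z hf hpow
  · exact cert38 z hf hpow
  · exact cert39 z hf hpow
  · exact cert40 z hf hpow
  · exact cert41 z hf hpow
  · exact cert42 z hf hpow
  · exact cert43 z hf hpow
  · exact cert44 z hf hpow
  · exact cert45 z hf hpow
  · exact cert46 z hf hpow
  · exact cert47 z hf hpow
  · exact cert48 z hf hpow
  · exact cert49 z hf hpow
  · exact cert50 z hf hpow
  · exact cert51 z hf hpow
  · exact cert52 z hf hpow
  · exact cert53 z hf hpow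
  · exact cert54 z hf hpow
  · exact cert55 z hf hpow
  · exact cert56 z hf hpow
  · exact cert57 z hf hpow
  · exact cert58 z hf hpow
  · exact cert59 z hf hpow
  · exact cert60 z hf hpow
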